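/- arXiv:2102.06597 — 5 statements merged into one kernel-verified Lean document; each statement's English description precedes it below -/
import Mathlib

section
/- Let n ≥ 2 and k ≥ 2, and suppose either that n ≥ 3 or that k is even. Then there exists a closed immersed unit-speed H²-curve γ of some length L > 0 in ℝⁿ having a point of multiplicity k and attaining equality in the Li–Yau type inequality: L·∫₀^L ‖γ''(s)‖² ds = ϖ*·k², where ϖ* = 32(2m*−1)E(m*)². -/
open Real MeasureTheory RealInnerProductSpace intervalIntegral Filter

/-- Complete elliptic integral of the first kind. -/
noncomputable def ellK (m : ℝ) : ℝ :=
  ∫ θ in (0:ℝ)..(Real.pi / 2), (Real.sqrt (1 - m * Real.sin θ ^ 2))⁻¹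

/-- Complete elliptic integral of the second kind. -/
noncomputable def ellE (m : ℝ) : ℝ :=
  ∫ θ in (0:ℝ)..(Real.pi / 2), Real.sqrt (1 - m * Real.sin θ ^ 2)

/-- A unit-speed `H²`-curve of length `L` in `ℝⁿ`: `f` is `C¹` on `[0,L]` with unit-speed
derivative `d1`, and `d1` is absolutely continuous with a.e. derivative `d2 ∈ L²(0,L)`. -/
structure H2Curve (n : ℕ) (L : ℝ) where
  f : ℝ → EuclideanSpace ℝ (Fin n)
  d1 : ℝ → EuclideanSpace ℝ (Fin n)
  d2 : ℝ → EuclideanSpace ℝ (Fin n)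
  posL : 0 < L
  hderiv : ∀ s ∈ Set.Icc (0:ℝ) L, HasDerivWithinAt f (d1 s) (Set.Icc (0:ℝ) L) s
  hcont : ContinuousOn d1 (Set.Icc (0:ℝ) L)
  hunit : ∀ s ∈ Set.Icc (0:ℝ) L, ‖d1 s‖ = 1
  hAC : ∀ s ∈ Set.Icc (0:ℝ) L, d1 s = d1 0 + ∫ t in (0:ℝ)..s, d2 t
  hint : IntegrableOn d2 (Set.Icc (0:ℝ) L)
  hL2 : IntegrableOn (fun s => ‖d2 s‖ ^ 2) (Set.Icc (0:ℝ) L)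

/-- Bending energy `∫₀^L ‖γ''‖² ds`. -/
noncomputable def H2Curve.bend {n : ℕ} {L : ℝ} (c : H2Curve n L) : ℝ :=
  ∫ s in (0:ℝ)..L, ‖c.d2 s‖ ^ 2

/-- The curve is closed, i.e. `L`-periodic. -/
def H2Curve.IsClosedCurve {n : ℕ} {L : ℝ} (c : H2Curve n L) : Prop :=
  Function.Periodic c.f L

/-- The closed curve has a point of multiplicity `k`: `k` distinct parameters in `[0,L)`
mapped to one point. -/
def H2Curve.HasMultPt {n : ℕ} {L : ℝ} (c : H2Curve n L) (k : ℕ) : Prop :=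
  ∃ (p : EuclideanSpace ℝ (Fin n)) (t : Fin k → ℝ),
    StrictMono t ∧ (∀ i, t i ∈ Set.Ico (0:ℝ) L) ∧ ∀ i, c.f (t i) = p

namespace LiYau

lemma u_lb {m θ : ℝ} (hm1 : m < 1) (hm0 : 0 ≤ m) : 1 - m ≤ 1 - m * sin θ ^ 2 := by
  nlinarith [sin_sq_le_one θ, sq_nonneg (sin θ)]

lemma u_pos {m θ : ℝ} (hm1 : m < 1) (hm0 : 0 ≤ m) : 0 < 1 - m * sin θ ^ 2 :=
  lt_of_lt_of_le (by linarith) (u_lb hm1 hm0)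

lemma q_pos {m θ : ℝ} (hm1 : m < 1) (hm0 : 0 ≤ m) :
    0 < Real.sqrt (1 - m * sin θ ^ 2) := Real.sqrt_pos.2 (u_pos hm1 hm0)

lemma q_cont {m : ℝ} : Continuous (fun θ => Real.sqrt (1 - m * sin θ ^ 2)) := by
  fun_prop

lemma q_inv_cont {m : ℝ} (hm1 : m < 1) (hm0 : 0 ≤ m) :
    Continuous (fun θ => (Real.sqrt (1 - m * sin θ ^ 2))⁻¹) :=
  Continuous.inv₀ q_cont (fun θ => ne_of_gt (q_pos hm1 hm0))

lemma u_le_one {m θ : ℝ} (hm0 : 0 ≤ m) : 1 - m * sin θ ^ 2 ≤ 1 := by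
  nlinarith [sq_nonneg (sin θ)]

lemma remainder_bound {u c : ℝ} (hu1 : u ≤ 1) (hc : -(1/2) ≤ c) (hc0 : c ≤ 0)
    (hu : 1/2 + c/2 ≤ u) :
    c ≤ 2 * Real.sqrt u - (Real.sqrt u)⁻¹ - (2*u - 1) := by
  have hu4 : 1/4 ≤ u := by linarith
  set s := Real.sqrt u with hs
  have hs0 : 0 < s := Real.sqrt_pos.2 (by linarith)
  have hs1 : s ≤ 1 := Real.sqrt_le_one.2 hu1
  have hssq : s ^ 2 = u := Real.sq_sqrt (by linarith)
  have hsl : 1/2 ≤ s := by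
    have h2 : Real.sqrt (1/4) ≤ s := Real.sqrt_le_sqrt (by linarith)
    rwa [show (1:ℝ)/4 = (1/2)^2 by norm_num, Real.sqrt_sq (by norm_num)] at h2
  have key : 0 ≤ (2 * s - s⁻¹ - (2*u - 1) - c) * s := by
    have hinv : s⁻¹ * s = 1 := inv_mul_cancel₀ (ne_of_gt hs0)
    have expand : (2 * s - s⁻¹ - (2*u - 1) - c) * s
        = (2*u - 1 - c) * (1 - s) + c * (1 - 2*s) + (2*s^2 - 2*u) := by
      field_simp; ring_nf
    rw [expand, hssq]
    have h1 : 0 ≤ (2*u - 1 - c) * (1 - s) :=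
      mul_nonneg (by linarith) (by linarith)
    have h2 : 0 ≤ c * (1 - 2*s) := by
      have e : c * (1 - 2*s) = (-c) * (2*s - 1) := by ring
      rw [e]; exact mul_nonneg (by linarith) (by linarith)
    linarith
  nlinarith [key, hs0]

lemma sin_sq_le_of_le {θ b : ℝ} (h0 : 0 ≤ θ) (hb : θ ≤ b) (hb2 : b ≤ π/2) :
    sin θ ^ 2 ≤ sin b ^ 2 := by
  have h1 : sin θ ≤ sin b := sin_le_sin_of_le_of_le_pi_div_two (by linarith [pi_pos]) hb2 hb
  have h2 : 0 ≤ sin θ := sin_nonneg_of_nonneg_of_le_pi h0 (by linarith [pi_pos])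
  nlinarith

lemma ellK_le_two_ellE_sub : ellK (3/4) ≤ 2 * ellE (3/4) - π/32 := by
  have hpi := pi_pos
  set q : ℝ → ℝ := fun θ => Real.sqrt (1 - (3/4) * sin θ ^ 2) with hq
  have hqc : Continuous q := q_cont
  have hqic : Continuous (fun θ => (q θ)⁻¹) := q_inv_cont (by norm_num) (by norm_num)
  set g : ℝ → ℝ := fun θ => 2 * q θ - (q θ)⁻¹ with hg
  have hgc : Continuous g := (continuous_const.mul hqc).sub hqic
  have base : 2 * ellE (3/4) - ellK (3/4) = ∫ θ in (0:ℝ)..(π/2), g θ := by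
    rw [ellE, ellK, ← intervalIntegral.integral_const_mul,
      ← intervalIntegral.integral_sub ((hqc.intervalIntegrable _ _).const_mul _)
        (hqic.intervalIntegrable _ _)]
  set lin : ℝ → ℝ := fun θ => 2 * (1 - (3/4) * sin θ ^ 2) - 1 with hlin
  have hlinc : Continuous lin := by fun_prop
  have hlinint : ∫ θ in (0:ℝ)..(π/2), lin θ = π/8 := by
    have e1 : ∫ θ in (0:ℝ)..(π/2), lin θ
        = ∫ θ in (0:ℝ)..(π/2), ((1:ℝ) - (3/2) * sin θ ^ 2) := by
      apply intervalIntegral.integral_congr; intro x _; simp only [hlin]; ring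
    rw [e1, intervalIntegral.integral_sub (continuous_const.intervalIntegrable _ _)
      ((((by fun_prop : Continuous fun θ:ℝ => sin θ ^ 2)).intervalIntegrable _ _).const_mul _),
      intervalIntegral.integral_const_mul, integral_sin_sq]
    simp
    ring
  set R : ℝ → ℝ := fun θ => g θ - lin θ with hR
  have hRc : Continuous R := hgc.sub hlinc
  -- bounds on the three pieces
  have pieceBound : ∀ (α β c : ℝ), 0 ≤ α → α ≤ β → β ≤ π/2 → -(1/2) ≤ c → c ≤ 0 →
      (∀ θ, α ≤ θ → θ ≤ β → 1/2 + c/2 ≤ 1 - (3/4) * sin θ ^ 2) →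
      c * (β - α) ≤ ∫ θ in α..β, R θ := by
    intro α β c hα hαβ hβ hc hc0 hub
    have : ∫ θ in α..β, (c:ℝ) ≤ ∫ θ in α..β, R θ := by
      apply intervalIntegral.integral_mono_on hαβ
        (continuous_const.intervalIntegrable _ _) (hRc.intervalIntegrable _ _)
      intro x hx
      have h1 : 1 - (3/4) * sin x ^ 2 ≤ 1 := u_le_one (by norm_num)
      have := remainder_bound h1 hc hc0 (hub x hx.1 hx.2)
      simpa [hR, hg, hlin] using this
    simpa [mul_comm] using this
  have h1 : (0:ℝ) * (π/4 - 0) ≤ ∫ θ in (0:ℝ)..(π/4), R θ := by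
    apply pieceBound _ _ _ le_rfl (by linarith) (by linarith) (by norm_num) le_rfl
    intro θ h0 hb
    have := sin_sq_le_of_le h0 hb (by linarith)
    rw [sin_pi_div_four] at this
    have h4 : (Real.sqrt 2 / 2)^2 = 1/2 := by
      rw [div_pow, Real.sq_sqrt (by norm_num)]; norm_num
    nlinarith [this]
  have h2 : (-(1/8) : ℝ) * (π/3 - π/4) ≤ ∫ θ in (π/4)..(π/3), R θ := by
    apply pieceBound _ _ _ (by linarith) (by linarith) (by linarith) (by norm_num) (by norm_num)
    intro θ h0 hb
    have := sin_sq_le_of_le (by linarith) hb (by linarith)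
    rw [sin_pi_div_three] at this
    have h3 : (Real.sqrt 3 / 2)^2 = 3/4 := by
      rw [div_pow, Real.sq_sqrt (by norm_num)]; norm_num
    nlinarith [this]
  have h3 : (-(1/2) : ℝ) * (π/2 - π/3) ≤ ∫ θ in (π/3)..(π/2), R θ := by
    apply pieceBound _ _ _ (by linarith) (by linarith) le_rfl le_rfl (by norm_num)
    intro θ h0 hb
    nlinarith [sin_sq_le_one θ]
  have hsplit : ∫ θ in (0:ℝ)..(π/2), R θ
      = (∫ θ in (0:ℝ)..(π/4), R θ) + (∫ θ in (π/4)..(π/3), R θ) + (∫ θ in (π/3)..(π/2), R θ) := by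
    rw [intervalIntegral.integral_add_adjacent_intervals (hRc.intervalIntegrable _ _)
      (hRc.intervalIntegrable _ _),
      intervalIntegral.integral_add_adjacent_intervals (hRc.intervalIntegrable _ _)
      (hRc.intervalIntegrable _ _)]
  have hgsplit : ∫ θ in (0:ℝ)..(π/2), g θ
      = (∫ θ in (0:ℝ)..(π/2), lin θ) + ∫ θ in (0:ℝ)..(π/2), R θ := by
    rw [← intervalIntegral.integral_add (hlinc.intervalIntegrable _ _) (hRc.intervalIntegrable _ _)]
    apply intervalIntegral.integral_congr; intro x _; simp [hR]
  have final : π/32 ≤ 2 * ellE (3/4) - ellK (3/4) := by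
    rw [base, hgsplit, hlinint, hsplit]
    have : π/8 + (0 * (π/4 - 0) + (-(1/8)) * (π/3 - π/4) + (-(1/2)) * (π/2 - π/3)) = π/32 := by
      ring
    linarith [h1, h2, h3]
  linarith

/-- monotonicity: for `0 ≤ m ≤ m' < 1`, `ellK m ≤ ellK m'` and `ellE m' ≤ ellE m`. -/
lemma ellK_mono {m m' : ℝ} (h0 : 0 ≤ m) (h : m ≤ m') (h1 : m' < 1) : ellK m ≤ ellK m' := by
  apply intervalIntegral.integral_mono_on (by positivity)
    ((q_inv_cont (by linarith) h0).intervalIntegrable _ _)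
    ((q_inv_cont h1 (by linarith)).intervalIntegrable _ _)
  intro x hx
  apply inv_anti₀ (Real.sqrt_pos.2 (u_pos h1 (by linarith)))
  apply Real.sqrt_le_sqrt
  nlinarith [sq_nonneg (sin x)]

lemma ellE_anti {m m' : ℝ} (h0 : 0 ≤ m) (h : m ≤ m') : ellE m' ≤ ellE m := by
  apply intervalIntegral.integral_mono_on (by positivity)
    (q_cont.intervalIntegrable _ _) (q_cont.intervalIntegrable _ _)
  intro x hx
  apply Real.sqrt_le_sqrt
  nlinarith [sq_nonneg (sin x)]

/-- From `K(m) = 2E(m)` and `m ∈ (0,1)`, conclude `3/4 < m`. -/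
lemma m_gt_34 {m : ℝ} (hm : m ∈ Set.Ioo (0:ℝ) 1) (hKE : ellK m = 2 * ellE m) : 3/4 < m := by
  by_contra h
  push_neg at h
  have h1 : ellK m ≤ ellK (3/4) := ellK_mono hm.1.le h (by norm_num)
  have h2 : ellE (3/4) ≤ ellE m := ellE_anti hm.1.le h
  have := ellK_le_two_ellE_sub
  have hpi := pi_pos
  linarith


lemma q_per {m : ℝ} : Function.Periodic (fun θ => Real.sqrt (1 - m * sin θ ^ 2)) π := by
  intro θ; simp [sin_add_pi, neg_sq]

lemma q_inv_per {m : ℝ} : Function.Periodic (fun θ => (Real.sqrt (1 - m * sin θ ^ 2))⁻¹) π := by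
  intro θ; simp [sin_add_pi, neg_sq]

lemma q_even {m : ℝ} (θ : ℝ) :
    Real.sqrt (1 - m * sin (-θ) ^ 2) = Real.sqrt (1 - m * sin θ ^ 2) := by
  simp [neg_sq]

/-- symmetric-function integral over a full period `[π/2, 3π/2]` equals twice `[0,π/2]`. -/
lemma integral_period_eq {g : ℝ → ℝ} (hc : Continuous g) (hper : Function.Periodic g π)
    (heven : ∀ θ, g (-θ) = g θ) :
    ∫ θ in (π/2)..(3*π/2), g θ = 2 * ∫ θ in (0:ℝ)..(π/2), g θ := by
  have h1 : ∫ θ in (π/2)..(3*π/2), g θ = ∫ θ in (-(π/2))..(-(π/2)+π), g θ := by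
    have := hper.intervalIntegral_add_eq (π/2) (-(π/2))
    rw [show π/2 + π = 3*π/2 by ring] at this
    exact this
  have h2 : ∫ θ in (-(π/2))..(0:ℝ), g θ = ∫ θ in (0:ℝ)..(π/2), g θ := by
    have := intervalIntegral.integral_comp_neg g (a := 0) (b := π/2)
    rw [neg_zero] at this
    rw [← this]
    apply intervalIntegral.integral_congr
    intro x _; exact heven x
  have h3 : ∫ θ in (-(π/2))..(-(π/2)+π), g θ
      = (∫ θ in (-(π/2))..(0:ℝ), g θ) + ∫ θ in (0:ℝ)..(π/2), g θ := by
    rw [intervalIntegral.integral_add_adjacent_intervals (hc.intervalIntegrable _ _)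
      (hc.intervalIntegrable _ _), show -(π/2)+π = π/2 by ring]
  rw [h1, h3, h2]; ring

/-- the incomplete elliptic integral of the first kind, as function of the amplitude. -/
noncomputable def Fm (m : ℝ) : ℝ → ℝ :=
  fun θ => ∫ t in (0:ℝ)..θ, (Real.sqrt (1 - m * Real.sin t ^ 2))⁻¹

lemma Fm_hasDeriv {m : ℝ} (hm1 : m < 1) (hm0 : 0 ≤ m) (θ : ℝ) :
    HasDerivAt (Fm m) ((Real.sqrt (1 - m * Real.sin θ ^ 2))⁻¹) θ :=
  intervalIntegral.integral_hasDerivAt_right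
    (((q_inv_cont hm1 hm0)).intervalIntegrable _ _)
    ((q_inv_cont hm1 hm0).stronglyMeasurableAtFilter _ _)
    (q_inv_cont hm1 hm0).continuousAt

lemma Fm_continuous {m : ℝ} (hm1 : m < 1) (hm0 : 0 ≤ m) : Continuous (Fm m) :=
  continuous_iff_continuousAt.2 fun θ => (Fm_hasDeriv hm1 hm0 θ).continuousAt

lemma Fm_strictMono {m : ℝ} (hm1 : m < 1) (hm0 : 0 ≤ m) : StrictMono (Fm m) := by
  apply strictMono_of_deriv_pos
  intro θ
  rw [(Fm_hasDeriv hm1 hm0 θ).deriv]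
  exact inv_pos.2 (q_pos hm1 hm0)

lemma Fm_zero {m : ℝ} : Fm m 0 = 0 := by simp [Fm]

lemma Fm_pi_div_two {m : ℝ} : Fm m (π/2) = ellK m := rfl

lemma Fm_add_pi {m : ℝ} (hm1 : m < 1) (hm0 : 0 ≤ m) (θ : ℝ) :
    Fm m (θ + π) = Fm m θ + 2 * ellK m := by
  have hsplit : Fm m (θ + π) = Fm m θ + ∫ t in θ..(θ+π), (Real.sqrt (1 - m * sin t ^ 2))⁻¹ := by
    rw [Fm, Fm, ← intervalIntegral.integral_add_adjacent_intervals
      ((q_inv_cont hm1 hm0).intervalIntegrable 0 θ)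
      ((q_inv_cont hm1 hm0).intervalIntegrable θ (θ+π))]
  have hper : ∫ t in θ..(θ+π), (Real.sqrt (1 - m * sin t ^ 2))⁻¹
      = ∫ t in (π/2)..(π/2+π), (Real.sqrt (1 - m * sin t ^ 2))⁻¹ :=
    q_inv_per.intervalIntegral_add_eq θ (π/2)
  have h2 : ∫ t in (π/2)..(3*π/2), (Real.sqrt (1 - m * sin t ^ 2))⁻¹ = 2 * ellK m :=
    integral_period_eq (q_inv_cont hm1 hm0) q_inv_per (fun θ => by simp [neg_sq])
  rw [hsplit, hper, show π/2 + π = 3*π/2 by ring, h2]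

lemma ellK_pos {m : ℝ} (hm1 : m < 1) (hm0 : 0 ≤ m) : 0 < ellK m := by
  apply intervalIntegral.intervalIntegral_pos_of_pos_on
    ((q_inv_cont hm1 hm0).intervalIntegrable _ _)
    (fun x _ => inv_pos.2 (q_pos hm1 hm0)) (by positivity)

lemma Fm_nat_mul {m : ℝ} (hm1 : m < 1) (hm0 : 0 ≤ m) (n : ℕ) :
    Fm m (n * π) = n * (2 * ellK m) := by
  induction n with
  | zero => simp [Fm_zero]
  | succ n ih =>
    have : ((n:ℝ)+1) * π = n * π + π := by ring
    rw [Nat.cast_succ, this, Fm_add_pi hm1 hm0, ih]; ring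

lemma Fm_neg_nat_mul {m : ℝ} (hm1 : m < 1) (hm0 : 0 ≤ m) (n : ℕ) :
    Fm m (-(n * π)) = -(n * (2 * ellK m)) := by
  induction n with
  | zero => norm_num [Fm_zero]
  | succ n ih =>
    have h := Fm_add_pi hm1 hm0 (-(((n:ℝ)+1) * π))
    rw [show -(((n:ℝ)+1) * π) + π = -((n:ℝ) * π) by ring, ih] at h
    rw [Nat.cast_succ]
    linarith

lemma Fm_surjective {m : ℝ} (hm1 : m < 1) (hm0 : 0 ≤ m) : Function.Surjective (Fm m) := by
  have hK := ellK_pos hm1 hm0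
  have hpi := pi_pos
  apply Continuous.surjective (Fm_continuous hm1 hm0)
  · apply tendsto_atTop_atTop_of_monotone (Fm_strictMono hm1 hm0).monotone
    intro b
    obtain ⟨n, hn⟩ := exists_nat_ge (b / (2 * ellK m))
    refine ⟨n * π, ?_⟩
    rw [Fm_nat_mul hm1 hm0]
    rw [div_le_iff₀ (by linarith)] at hn
    linarith
  · apply tendsto_atBot_atBot_of_monotone (Fm_strictMono hm1 hm0).monotone
    intro b
    obtain ⟨n, hn⟩ := exists_nat_ge (-b / (2 * ellK m))
    refine ⟨-(n * π), ?_⟩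
    rw [Fm_neg_nat_mul hm1 hm0]
    rw [div_le_iff₀ (by linarith)] at hn
    linarith

/-- the Jacobi amplitude: inverse of `Fm`. -/
noncomputable def am (m : ℝ) : ℝ → ℝ := Function.invFun (Fm m)

lemma Fm_am {m : ℝ} (hm1 : m < 1) (hm0 : 0 ≤ m) (s : ℝ) : Fm m (am m s) = s :=
  Function.invFun_eq (Fm_surjective hm1 hm0 s)

lemma am_Fm {m : ℝ} (hm1 : m < 1) (hm0 : 0 ≤ m) (θ : ℝ) : am m (Fm m θ) = θ :=
  Function.leftInverse_invFun (Fm_strictMono hm1 hm0).injective θ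

lemma am_continuous {m : ℝ} (hm1 : m < 1) (hm0 : 0 ≤ m) : Continuous (am m) := by
  have hsm := Fm_strictMono hm1 hm0
  have heq : am m = ⇑(hsm.orderIsoOfSurjective (Fm m) (Fm_surjective hm1 hm0)).symm := by
    funext s
    apply hsm.injective
    rw [Fm_am hm1 hm0]
    exact ((hsm.orderIsoOfSurjective (Fm m) (Fm_surjective hm1 hm0)).apply_symm_apply s).symm
  rw [heq]
  exact OrderIso.continuous _

lemma am_hasDeriv {m : ℝ} (hm1 : m < 1) (hm0 : 0 ≤ m) (s : ℝ) :
    HasDerivAt (am m) (Real.sqrt (1 - m * Real.sin (am m s) ^ 2)) s := by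
  have h := HasDerivAt.of_local_left_inverse ((am_continuous hm1 hm0).continuousAt)
    (Fm_hasDeriv hm1 hm0 (am m s)) (ne_of_gt (inv_pos.2 (q_pos hm1 hm0)))
    (Eventually.of_forall (fun y => Fm_am hm1 hm0 y))
  rwa [inv_inv] at h

lemma am_zero {m : ℝ} (hm1 : m < 1) (hm0 : 0 ≤ m) : am m 0 = 0 := by
  have := am_Fm hm1 hm0 0
  rwa [Fm_zero] at this

lemma am_K {m : ℝ} (hm1 : m < 1) (hm0 : 0 ≤ m) : am m (ellK m) = π/2 := by
  have := am_Fm hm1 hm0 (π/2)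
  rwa [Fm_pi_div_two] at this

lemma am_add_2K {m : ℝ} (hm1 : m < 1) (hm0 : 0 ≤ m) (s : ℝ) :
    am m (s + 2 * ellK m) = am m s + π := by
  apply (Fm_strictMono hm1 hm0).injective
  rw [Fm_am hm1 hm0, Fm_add_pi hm1 hm0, Fm_am hm1 hm0]

section Psi

/-- shifted amplitude: `psi m s = am m (s + K)`. -/
noncomputable def psi (m : ℝ) (s : ℝ) : ℝ := am m (s + ellK m)

variable {m : ℝ}

lemma psi_hasDeriv (hm1 : m < 1) (hm0 : 0 ≤ m) (s : ℝ) :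
    HasDerivAt (psi m) (Real.sqrt (1 - m * Real.sin (psi m s) ^ 2)) s := by
  have h1 : HasDerivAt (fun s : ℝ => s + ellK m) 1 s := (hasDerivAt_id s).add_const _
  have h2 := (am_hasDeriv hm1 hm0 (s + ellK m)).comp s h1
  exact h2.congr_deriv (mul_one _)

lemma psi_continuous (hm1 : m < 1) (hm0 : 0 ≤ m) : Continuous (psi m) :=
  (am_continuous hm1 hm0).comp (continuous_id.add continuous_const)

lemma psi_zero (hm1 : m < 1) (hm0 : 0 ≤ m) : psi m 0 = π/2 := by
  simp [psi, am_K hm1 hm0]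

lemma psi_add_2K (hm1 : m < 1) (hm0 : 0 ≤ m) (s : ℝ) :
    psi m (s + 2 * ellK m) = psi m s + π := by
  rw [psi, psi, show s + 2 * ellK m + ellK m = (s + ellK m) + 2 * ellK m by ring,
    am_add_2K hm1 hm0]

lemma psi_2K (hm1 : m < 1) (hm0 : 0 ≤ m) : psi m (2 * ellK m) = 3*π/2 := by
  have := psi_add_2K hm1 hm0 0
  rw [zero_add, psi_zero hm1 hm0] at this
  rw [this]; ring

lemma sin_psi_zero (hm1 : m < 1) (hm0 : 0 ≤ m) : Real.sin (psi m 0) = 1 := by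
  rw [psi_zero hm1 hm0, sin_pi_div_two]

lemma cos_psi_zero (hm1 : m < 1) (hm0 : 0 ≤ m) : Real.cos (psi m 0) = 0 := by
  rw [psi_zero hm1 hm0, cos_pi_div_two]

lemma sin_psi_2K (hm1 : m < 1) (hm0 : 0 ≤ m) : Real.sin (psi m (2 * ellK m)) = -1 := by
  rw [psi_2K hm1 hm0, show 3*π/2 = π/2 + π by ring, sin_add_pi, sin_pi_div_two]

lemma cos_psi_2K (hm1 : m < 1) (hm0 : 0 ≤ m) : Real.cos (psi m (2 * ellK m)) = 0 := by
  rw [psi_2K hm1 hm0, show 3*π/2 = π/2 + π by ring, cos_add_pi, cos_pi_div_two]; norm_num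

end Psi

section Scalar

variable {m : ℝ}

/-- tangent-vector components of the elastica loop. -/
noncomputable def Xf (m : ℝ) (s : ℝ) : ℝ := 1 - 2*m*Real.sin (psi m s)^2
noncomputable def Yf (m : ℝ) (s : ℝ) : ℝ :=
  2*Real.sqrt m * Real.sin (psi m s) * Real.sqrt (1 - m*Real.sin (psi m s)^2)
/-- curvature-vector components. -/
noncomputable def Xd (m : ℝ) (s : ℝ) : ℝ :=
  -(4*m*Real.sin (psi m s)*Real.cos (psi m s)*Real.sqrt (1 - m*Real.sin (psi m s)^2))
noncomputable def Yd (m : ℝ) (s : ℝ) : ℝ :=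
  2*Real.sqrt m * Real.cos (psi m s) * (1 - 2*m*Real.sin (psi m s)^2)
noncomputable def ksq (m : ℝ) (s : ℝ) : ℝ := 4*m*Real.cos (psi m s)^2

lemma Xf_continuous (hm1 : m < 1) (hm0 : 0 ≤ m) : Continuous (Xf m) := by
  have h := psi_continuous hm1 hm0
  unfold Xf; fun_prop

lemma Yf_continuous (hm1 : m < 1) (hm0 : 0 ≤ m) : Continuous (Yf m) := by
  have h := psi_continuous hm1 hm0
  unfold Yf; fun_prop

lemma Xd_continuous (hm1 : m < 1) (hm0 : 0 ≤ m) : Continuous (Xd m) := by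
  have h := psi_continuous hm1 hm0
  unfold Xd; fun_prop

lemma Yd_continuous (hm1 : m < 1) (hm0 : 0 ≤ m) : Continuous (Yd m) := by
  have h := psi_continuous hm1 hm0
  unfold Yd; fun_prop

lemma ksq_continuous (hm1 : m < 1) (hm0 : 0 ≤ m) : Continuous (ksq m) := by
  have h := psi_continuous hm1 hm0
  unfold ksq; fun_prop

lemma sin_psi_hasDeriv (hm1 : m < 1) (hm0 : 0 ≤ m) (s : ℝ) :
    HasDerivAt (fun t => Real.sin (psi m t))
      (Real.cos (psi m s) * Real.sqrt (1 - m * Real.sin (psi m s) ^ 2)) s :=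
  (Real.hasDerivAt_sin (psi m s)).comp s (psi_hasDeriv hm1 hm0 s)

lemma cos_psi_hasDeriv (hm1 : m < 1) (hm0 : 0 ≤ m) (s : ℝ) :
    HasDerivAt (fun t => Real.cos (psi m t))
      (-(Real.sin (psi m s) * Real.sqrt (1 - m * Real.sin (psi m s) ^ 2))) s := by
  have h := (Real.hasDerivAt_cos (psi m s)).comp s (psi_hasDeriv hm1 hm0 s)
  simpa [mul_comm, mul_assoc, Function.comp_def] using h

lemma qpsi_hasDeriv (hm1 : m < 1) (hm0 : 0 ≤ m) (s : ℝ) :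
    HasDerivAt (fun t => Real.sqrt (1 - m * Real.sin (psi m t) ^ 2))
      (-(m * Real.sin (psi m s) * Real.cos (psi m s))) s := by
  have hin : HasDerivAt (fun t => 1 - m * Real.sin (psi m t) ^ 2)
      (-(2 * m * Real.sin (psi m s) * Real.cos (psi m s)
        * Real.sqrt (1 - m * Real.sin (psi m s) ^ 2))) s := by
    have h1 := ((sin_psi_hasDeriv hm1 hm0 s).pow 2).const_mul m
    have h2 := (hasDerivAt_const s (1:ℝ)).sub h1
    refine h2.congr_deriv ?_
    ring
  have h := hin.sqrt (ne_of_gt (u_pos hm1 hm0))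
  convert h using 1
  have hq := q_pos (θ := psi m s) hm1 hm0
  rw [eq_div_iff (by positivity)]
  ring

lemma Xf_hasDeriv (hm1 : m < 1) (hm0 : 0 ≤ m) (s : ℝ) :
    HasDerivAt (Xf m) (Xd m s) s := by
  have h1 := ((sin_psi_hasDeriv hm1 hm0 s).pow 2).const_mul (2*m)
  have h2 := (hasDerivAt_const s (1:ℝ)).sub h1
  refine h2.congr_deriv ?_
  unfold Xd
  ring

lemma Yf_hasDeriv (hm1 : m < 1) (hm0 : 0 ≤ m) (s : ℝ) :
    HasDerivAt (Yf m) (Yd m s) s := by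
  have h1 := ((sin_psi_hasDeriv hm1 hm0 s).mul (qpsi_hasDeriv hm1 hm0 s)).const_mul
    (2*Real.sqrt m)
  have heq : Yf m = fun t => 2*Real.sqrt m * (Real.sin (psi m t)
      * Real.sqrt (1 - m*Real.sin (psi m t) ^ 2)) := by
    funext t; unfold Yf; ring
  rw [heq]
  refine h1.congr_deriv ?_
  unfold Yd
  have hq : (Real.sqrt (1 - m * Real.sin (psi m s) ^ 2))^2
      = 1 - m * Real.sin (psi m s) ^ 2 := Real.sq_sqrt (u_pos hm1 hm0).le
  linear_combination (2 * Real.sqrt m * Real.cos (psi m s)) * hq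

lemma XYf_sq (hm1 : m < 1) (hm0 : 0 ≤ m) (s : ℝ) : Xf m s ^ 2 + Yf m s ^ 2 = 1 := by
  have hq : (Real.sqrt (1 - m * Real.sin (psi m s) ^ 2))^2
      = 1 - m * Real.sin (psi m s) ^ 2 := Real.sq_sqrt (u_pos hm1 hm0).le
  have hmq : (Real.sqrt m)^2 = m := Real.sq_sqrt hm0
  unfold Xf Yf
  linear_combination (4 * Real.sin (psi m s)^2 * (Real.sqrt (1 - m * Real.sin (psi m s) ^ 2))^2) * hmq
    + (4 * m * Real.sin (psi m s)^2) * hq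

lemma XYd_sq (hm1 : m < 1) (hm0 : 0 ≤ m) (s : ℝ) : Xd m s ^ 2 + Yd m s ^ 2 = ksq m s := by
  have hq : (Real.sqrt (1 - m * Real.sin (psi m s) ^ 2))^2
      = 1 - m * Real.sin (psi m s) ^ 2 := Real.sq_sqrt (u_pos hm1 hm0).le
  have hmq : (Real.sqrt m)^2 = m := Real.sq_sqrt hm0
  unfold Xd Yd ksq
  linear_combination (16 * m^2 * Real.sin (psi m s)^2 * Real.cos (psi m s)^2) * hq
    + (4 * Real.cos (psi m s)^2 * (1 - 2*m*Real.sin (psi m s)^2)^2) * hmq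

lemma Xf_zero (hm1 : m < 1) (hm0 : 0 ≤ m) : Xf m 0 = 1 - 2*m := by
  unfold Xf; rw [sin_psi_zero hm1 hm0]; ring

lemma Yf_zero (hm1 : m < 1) (hm0 : 0 ≤ m) :
    Yf m 0 = 2 * Real.sqrt m * Real.sqrt (1-m) := by
  unfold Yf; rw [sin_psi_zero hm1 hm0]; norm_num

lemma Xf_2K (hm1 : m < 1) (hm0 : 0 ≤ m) : Xf m (2 * ellK m) = 1 - 2*m := by
  unfold Xf; rw [sin_psi_2K hm1 hm0]; ring

lemma Yf_2K (hm1 : m < 1) (hm0 : 0 ≤ m) :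
    Yf m (2 * ellK m) = -(2 * Real.sqrt m * Real.sqrt (1-m)) := by
  unfold Yf; rw [sin_psi_2K hm1 hm0]; ring

lemma Xd_zero (hm1 : m < 1) (hm0 : 0 ≤ m) : Xd m 0 = 0 := by
  unfold Xd; rw [cos_psi_zero hm1 hm0]; ring

lemma Yd_zero (hm1 : m < 1) (hm0 : 0 ≤ m) : Yd m 0 = 0 := by
  unfold Yd; rw [cos_psi_zero hm1 hm0]; ring

lemma Xd_2K (hm1 : m < 1) (hm0 : 0 ≤ m) : Xd m (2 * ellK m) = 0 := by
  unfold Xd; rw [cos_psi_2K hm1 hm0]; ring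

lemma Yd_2K (hm1 : m < 1) (hm0 : 0 ≤ m) : Yd m (2 * ellK m) = 0 := by
  unfold Yd; rw [cos_psi_2K hm1 hm0]; ring

lemma ksq_zero (hm1 : m < 1) (hm0 : 0 ≤ m) : ksq m 0 = 0 := by
  unfold ksq; rw [cos_psi_zero hm1 hm0]; ring

lemma ksq_2K (hm1 : m < 1) (hm0 : 0 ≤ m) : ksq m (2 * ellK m) = 0 := by
  unfold ksq; rw [cos_psi_2K hm1 hm0]; ring

/-- substitution: for continuous `g`,
`∫₀^{2K} √(1-m sin²ψ) * g(ψ) = ∫_{π/2}^{3π/2} g`. -/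
lemma integral_subst (hm1 : m < 1) (hm0 : 0 ≤ m) {g : ℝ → ℝ} (hg : Continuous g) :
    ∫ s in (0:ℝ)..(2 * ellK m), Real.sqrt (1 - m * Real.sin (psi m s)^2) * g (psi m s)
      = ∫ θ in (π/2)..(3*π/2), g θ := by
  have h := intervalIntegral.integral_comp_smul_deriv
    (a := (0:ℝ)) (b := 2 * ellK m)
    (f := psi m) (f' := fun s => Real.sqrt (1 - m * Real.sin (psi m s)^2)) (g := g)
    (fun x _ => psi_hasDeriv hm1 hm0 x)
    (Continuous.continuousOn (by have := psi_continuous hm1 hm0; fun_prop)) hg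
  rw [psi_zero hm1 hm0, psi_2K hm1 hm0] at h
  simpa [smul_eq_mul] using h

lemma integral_Xf (hm1 : m < 1) (hm0 : 0 ≤ m) :
    ∫ s in (0:ℝ)..(2 * ellK m), Xf m s = 4 * ellE m - 2 * ellK m := by
  have h1 : ∀ s, Xf m s = 2 * (Real.sqrt (1 - m * Real.sin (psi m s)^2)
      * Real.sqrt (1 - m * Real.sin (psi m s)^2)) - 1 := by
    intro s
    have hq : Real.sqrt (1 - m * Real.sin (psi m s) ^ 2)
        * Real.sqrt (1 - m * Real.sin (psi m s) ^ 2) = 1 - m * Real.sin (psi m s) ^ 2 := by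
      exact Real.mul_self_sqrt (u_pos hm1 hm0).le
    rw [hq]; unfold Xf; ring
  have hqc : Continuous (fun s => Real.sqrt (1 - m * Real.sin (psi m s)^2)) := by
    have := psi_continuous hm1 hm0; fun_prop
  calc ∫ s in (0:ℝ)..(2 * ellK m), Xf m s
      = ∫ s in (0:ℝ)..(2 * ellK m), (2 * (Real.sqrt (1 - m * Real.sin (psi m s)^2)
        * Real.sqrt (1 - m * Real.sin (psi m s)^2)) - 1) := by
        apply intervalIntegral.integral_congr; intro x _; exact h1 x
    _ = 2 * (∫ s in (0:ℝ)..(2 * ellK m), Real.sqrt (1 - m * Real.sin (psi m s)^2)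
        * Real.sqrt (1 - m * Real.sin (psi m s)^2)) - (2 * ellK m - 0) := by
        rw [intervalIntegral.integral_sub
          (((show Continuous fun s => Real.sqrt (1 - m * Real.sin (psi m s)^2)
            * Real.sqrt (1 - m * Real.sin (psi m s)^2) from hqc.mul hqc).intervalIntegrable _ _).const_mul _)
          ((continuous_const (y := (1:ℝ))).intervalIntegrable _ _),
          intervalIntegral.integral_const_mul, intervalIntegral.integral_const]
        simp
    _ = 4 * ellE m - 2 * ellK m := by
        rw [integral_subst hm1 hm0 q_cont,
          integral_period_eq q_cont q_per (fun θ => q_even θ)]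
        show 2 * (2 * ellE m) - (2 * ellK m - 0) = _
        ring

lemma integral_Yf (hm1 : m < 1) (hm0 : 0 ≤ m) :
    ∫ s in (0:ℝ)..(2 * ellK m), Yf m s = 0 := by
  have hd : ∀ s ∈ Set.uIcc (0:ℝ) (2 * ellK m),
      HasDerivAt (fun t => -(2 * Real.sqrt m * Real.cos (psi m t))) (Yf m s) s := by
    intro s _
    have h := ((cos_psi_hasDeriv hm1 hm0 s).const_mul (2 * Real.sqrt m)).neg
    refine h.congr_deriv ?_
    unfold Yf; ring
  rw [intervalIntegral.integral_eq_sub_of_hasDerivAt hd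
    ((Yf_continuous hm1 hm0).intervalIntegrable _ _),
    cos_psi_2K hm1 hm0, cos_psi_zero hm1 hm0]
  ring

lemma integral_ksq (hm1 : m < 1) (hm0 : 0 ≤ m) :
    ∫ s in (0:ℝ)..(2 * ellK m), ksq m s = 8 * (ellE m - (1-m) * ellK m) := by
  set g : ℝ → ℝ := fun θ => 4*m*Real.cos θ^2 * (Real.sqrt (1 - m * Real.sin θ^2))⁻¹ with hgdef
  have hgc : Continuous g := by
    apply Continuous.mul (by fun_prop) (q_inv_cont hm1 hm0)
  have h1 : ∫ s in (0:ℝ)..(2 * ellK m), ksq m s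
      = ∫ s in (0:ℝ)..(2 * ellK m), Real.sqrt (1 - m * Real.sin (psi m s)^2) * g (psi m s) := by
    apply intervalIntegral.integral_congr
    intro s _
    have hq := q_pos (θ := psi m s) hm1 hm0
    unfold ksq
    rw [hgdef]
    field_simp
  have hper : Function.Periodic g π := by
    intro θ; simp only [hgdef, sin_add_pi, cos_add_pi, neg_sq]
  have heven : ∀ θ, g (-θ) = g θ := by
    intro θ; simp only [hgdef, Real.sin_neg, Real.cos_neg, neg_sq]
  have h2 : ∫ θ in (0:ℝ)..(π/2), g θ = 4 * ellE m - 4*(1-m) * ellK m := by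
    have hpt : ∀ θ, g θ = 4 * Real.sqrt (1 - m * Real.sin θ^2)
        - 4*(1-m) * (Real.sqrt (1 - m * Real.sin θ^2))⁻¹ := by
      intro θ
      have hq := q_pos (θ := θ) hm1 hm0
      have hsq := Real.sq_sqrt (u_pos (θ := θ) hm1 hm0).le
      rw [hgdef]
      field_simp
      linear_combination (-1:ℝ)*hsq + m*(Real.sin_sq_add_cos_sq θ)
    rw [show ∫ θ in (0:ℝ)..(π/2), g θ = ∫ θ in (0:ℝ)..(π/2),
        (4 * Real.sqrt (1 - m * Real.sin θ^2)
          - 4*(1-m) * (Real.sqrt (1 - m * Real.sin θ^2))⁻¹) from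
      intervalIntegral.integral_congr (fun θ _ => hpt θ),
      intervalIntegral.integral_sub ((q_cont.intervalIntegrable _ _).const_mul _)
        (((q_inv_cont hm1 hm0).intervalIntegrable _ _).const_mul _),
      intervalIntegral.integral_const_mul, intervalIntegral.integral_const_mul]
    rfl
  rw [h1, integral_subst hm1 hm0 hgc, integral_period_eq hgc hper heven, h2]
  ring

end Scalar

section Vectors

open RealInnerProductSpace

/-! ### angle data -/

noncomputable def av (m : ℝ) : ℝ := 1 - 2*m
noncomputable def bv (m : ℝ) : ℝ := 2 * Real.sqrt m * Real.sqrt (1-m)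
noncomputable def cv (m : ℝ) : ℝ := 8*m^2 - 8*m + 1

variable {m : ℝ}

lemma bv_sq (hm1 : m < 1) (hm0 : 0 ≤ m) : bv m ^ 2 = 4 * m * (1 - m) := by
  unfold bv
  have h1 : Real.sqrt m ^ 2 = m := Real.sq_sqrt hm0
  have h2 : Real.sqrt (1-m) ^ 2 = 1 - m := Real.sq_sqrt (by linarith)
  nlinarith [h1, h2]

lemma av_bv_sq (hm1 : m < 1) (hm0 : 0 ≤ m) : av m ^ 2 + bv m ^ 2 = 1 := by
  rw [bv_sq hm1 hm0]; unfold av; ring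

lemma one_add_cv : 1 + cv m = 2 * av m ^ 2 := by unfold cv av; ring

lemma one_sub_cv (hm1 : m < 1) (hm0 : 0 ≤ m) : 1 - cv m = 2 * bv m ^ 2 := by
  rw [bv_sq hm1 hm0]; unfold cv; ring

lemma av_neg (hm34 : 3/4 < m) : av m < 0 := by unfold av; linarith

lemma bv_pos (hm34 : 3/4 < m) (hm1 : m < 1) : 0 < bv m := by
  unfold bv
  have h1 : 0 < Real.sqrt m := Real.sqrt_pos.2 (by linarith)
  have h2 : 0 < Real.sqrt (1-m) := Real.sqrt_pos.2 (by linarith)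
  positivity

lemma cv_gt (hm34 : 3/4 < m) : -(1/2) < cv m := by unfold cv; nlinarith

lemma cv_lt_one (hm34 : 3/4 < m) (hm1 : m < 1) : cv m < 1 := by unfold cv; nlinarith

/-! ### the winding angle -/

noncomputable def lv (k : ℕ) : ℕ := if Even k then k/2 else (k+2)/3
noncomputable def thetav (k : ℕ) : ℝ := 2*π*(lv k)/k

lemma k_thetav {k : ℕ} (hk : 2 ≤ k) : (k:ℝ) * thetav k = (lv k) * (2*π) := by
  unfold thetav
  have hk0 : (k:ℝ) ≠ 0 := Nat.cast_ne_zero.2 (by omega)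
  field_simp

lemma thetav_even {k : ℕ} (hk : 2 ≤ k) (h : Even k) : thetav k = π := by
  unfold thetav lv
  rw [if_pos h]
  obtain ⟨t, ht⟩ := h
  have ht2 : k = 2*t := by omega
  have htpos : 0 < t := by omega
  rw [ht2]
  have : (2*t)/2 = t := by omega
  rw [this]
  have h1 : ((2*t : ℕ):ℝ) = 2*(t:ℝ) := by push_cast; ring
  rw [h1]
  have h2 : (t:ℝ) ≠ 0 := Nat.cast_ne_zero.2 (by omega)
  field_simp

lemma cos_thetav_odd {k : ℕ} (hk : 2 ≤ k) (h : ¬ Even k) : Real.cos (thetav k) ≤ -(1/2) := by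
  have hpi := pi_pos
  have hk3 : 3 ≤ k := by
    rcases Nat.even_or_odd k with he | ho
    · exact absurd he h
    · obtain ⟨t, ht⟩ := ho; omega
  have hlv : lv k = (k+2)/3 := by unfold lv; rw [if_neg h]
  have hb : k ≤ 3 * lv k ∧ 3 * lv k ≤ 2 * k := by omega
  have hkr : (0:ℝ) < k := by positivity
  have hθ1 : 2*π/3 ≤ thetav k := by
    unfold thetav
    rw [div_le_div_iff₀ (by norm_num) hkr]
    have : (k:ℝ) ≤ 3 * (lv k) := by exact_mod_cast hb.1
    nlinarith
  have hθ2 : thetav k ≤ 4*π/3 := by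
    unfold thetav
    rw [div_le_div_iff₀ hkr (by norm_num)]
    have : (3:ℝ) * (lv k) ≤ 2 * k := by exact_mod_cast hb.2
    nlinarith
  -- cos θ ≤ -1/2 on [2π/3, 4π/3]
  rcases le_total (thetav k) π with hle | hge
  · have h1 : Real.cos (thetav k) ≤ Real.cos (2*π/3) :=
      Real.cos_le_cos_of_nonneg_of_le_pi (by linarith) hle hθ1
    have h2 : Real.cos (2*π/3) = -(1/2) := by
      rw [show 2*π/3 = π - π/3 by ring, Real.cos_pi_sub, Real.cos_pi_div_three]
    linarith
  · have h0 : Real.cos (thetav k) = Real.cos (2*π - thetav k) := by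
      rw [Real.cos_sub, Real.cos_two_pi, Real.sin_two_pi]
      ring
    have h1 : Real.cos (2*π - thetav k) ≤ Real.cos (2*π/3) :=
      Real.cos_le_cos_of_nonneg_of_le_pi (by linarith) (by linarith) (by linarith)
    have h2 : Real.cos (2*π/3) = -(1/2) := by
      rw [show 2*π/3 = π - π/3 by ring, Real.cos_pi_sub, Real.cos_pi_div_three]
    linarith [h0, h1]

lemma cos_thetav_le_cv {k : ℕ} (hm34 : 3/4 < m) (hm1 : m < 1) (hk : 2 ≤ k) :
    Real.cos (thetav k) ≤ cv m := by
  by_cases h : Even k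
  · rw [thetav_even hk h, Real.cos_pi]
    have := cv_gt hm34; linarith
  · have := cos_thetav_odd hk h
    have := cv_gt hm34; linarith

lemma cos_thetav_lt_one {k : ℕ} (hk : 2 ≤ k) : Real.cos (thetav k) < 1 := by
  by_cases h : Even k
  · rw [thetav_even hk h, Real.cos_pi]; norm_num
  · have := cos_thetav_odd hk h; linarith

lemma sin_int_thetav {k : ℕ} (hk : 2 ≤ k) (h : Even k) (j : ℤ) :
    Real.sin (j * thetav k) = 0 := by
  rw [thetav_even hk h]
  exact Real.sin_int_mul_pi j

/-! ### the spherical polygon parameters -/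

noncomputable def srho (m : ℝ) (k : ℕ) : ℝ :=
  Real.sqrt ((1 - cv m)/(1 - Real.cos (thetav k)))
noncomputable def crho (m : ℝ) (k : ℕ) : ℝ := Real.sqrt (1 - srho m k^2)

lemma srho_sq {k : ℕ} (hm34 : 3/4 < m) (hm1 : m < 1) (hk : 2 ≤ k) :
    srho m k ^ 2 = (1 - cv m)/(1 - Real.cos (thetav k)) := by
  apply Real.sq_sqrt
  have h1 := cos_thetav_lt_one (k := k) hk
  have h2 := cv_lt_one hm34 hm1
  apply div_nonneg <;> linarith

lemma srho_sq_le_one {k : ℕ} (hm34 : 3/4 < m) (hm1 : m < 1) (hk : 2 ≤ k) :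
    srho m k ^ 2 ≤ 1 := by
  rw [srho_sq hm34 hm1 hk]
  have h1 := cos_thetav_lt_one (k := k) hk
  have h2 := cos_thetav_le_cv (k := k) hm34 hm1 hk
  rw [div_le_one (by linarith)]
  linarith

lemma crho_sq {k : ℕ} (hm34 : 3/4 < m) (hm1 : m < 1) (hk : 2 ≤ k) :
    crho m k ^ 2 = 1 - srho m k ^ 2 := by
  apply Real.sq_sqrt
  linarith [srho_sq_le_one (k := k) hm34 hm1 hk]

lemma srho_key {k : ℕ} (hm34 : 3/4 < m) (hm1 : m < 1) (hk : 2 ≤ k) :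
    srho m k ^ 2 * (1 - Real.cos (thetav k)) = 1 - cv m := by
  rw [srho_sq hm34 hm1 hk]
  have h1 := cos_thetav_lt_one (k := k) hk
  rw [div_mul_cancel₀ _ (by intro hc; rw [sub_eq_zero] at hc; exact absurd hc.symm (ne_of_lt h1))]

/-! ### basis vectors -/

noncomputable def E0 (n : ℕ) (hn : 2 ≤ n) : EuclideanSpace ℝ (Fin n) :=
  EuclideanSpace.single ⟨0, by omega⟩ (1:ℝ)
noncomputable def E1 (n : ℕ) (hn : 2 ≤ n) : EuclideanSpace ℝ (Fin n) :=
  EuclideanSpace.single ⟨1, by omega⟩ (1:ℝ)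
noncomputable def E2 (n : ℕ) : EuclideanSpace ℝ (Fin n) :=
  if h : 2 < n then EuclideanSpace.single (⟨2, h⟩ : Fin n) (1:ℝ) else 0

variable {n : ℕ} (hn : 2 ≤ n)

lemma inner_E00 : ⟪E0 n hn, E0 n hn⟫ = (1:ℝ) := by
  simp [E0, EuclideanSpace.inner_single_left, EuclideanSpace.single_apply]
lemma inner_E11 : ⟪E1 n hn, E1 n hn⟫ = (1:ℝ) := by
  simp [E1, EuclideanSpace.inner_single_left, EuclideanSpace.single_apply]
lemma inner_E01 : ⟪E0 n hn, E1 n hn⟫ = (0:ℝ) := by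
  simp [E0, E1, EuclideanSpace.inner_single_left, EuclideanSpace.single_apply]
lemma inner_E02 : ⟪E0 n hn, E2 n⟫ = (0:ℝ) := by
  unfold E0 E2
  split
  · simp [EuclideanSpace.inner_single_left, EuclideanSpace.single_apply]
  · simp
lemma inner_E12 : ⟪E1 n hn, E2 n⟫ = (0:ℝ) := by
  unfold E1 E2
  split
  · simp [EuclideanSpace.inner_single_left, EuclideanSpace.single_apply]
  · simp

lemma inner_E22 : ⟪E2 n, E2 n⟫ = (if 2 < n then (1:ℝ) else 0) := by
  unfold E2
  split
  · simp [EuclideanSpace.inner_single_left, EuclideanSpace.single_apply]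
  · simp

lemma inner_E10 : ⟪E1 n hn, E0 n hn⟫ = (0:ℝ) := by
  rw [real_inner_comm]; exact inner_E01 hn
lemma inner_E20 : ⟪E2 n, E0 n hn⟫ = (0:ℝ) := by
  rw [real_inner_comm]; exact inner_E02 hn
lemma inner_E21 : ⟪E2 n, E1 n hn⟫ = (0:ℝ) := by
  rw [real_inner_comm]; exact inner_E12 hn

lemma inner_combo3 (x0 x1 x2 y0 y1 y2 : ℝ) :
    ⟪x0 • E0 n hn + x1 • E1 n hn + x2 • E2 n, y0 • E0 n hn + y1 • E1 n hn + y2 • E2 n⟫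
      = x0*y0 + x1*y1 + x2*y2*(if 2 < n then (1:ℝ) else 0) := by
  simp only [inner_add_left, inner_add_right, real_inner_smul_left, real_inner_smul_right,
    inner_E00 hn, inner_E11 hn, inner_E01 hn, inner_E02 hn, inner_E12 hn,
    inner_E10 hn, inner_E20 hn, inner_E21 hn, inner_E22 (n := n)]
  ring

/-! ### the polygon vertex directions -/

noncomputable def tauv (m : ℝ) (n k : ℕ) (hn : 2 ≤ n) (j : ℤ) : EuclideanSpace ℝ (Fin n) :=
  crho m k • E0 n hn + (srho m k * Real.cos (j * thetav k)) • E1 n hn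
    + (srho m k * Real.sin (j * thetav k)) • E2 n

section TauSection

variable {k : ℕ}

lemma inner_tau (hE2 : 2 < n ∨ ∀ j : ℤ, Real.sin (j * thetav k) = 0) (i j : ℤ) :
    ⟪tauv m n k hn i, tauv m n k hn j⟫
      = crho m k^2 + srho m k^2 * Real.cos ((i - j) * thetav k) := by
  unfold tauv
  rw [inner_combo3 hn]
  have hcs : Real.cos ((i - j) * thetav k)
      = Real.cos (i * thetav k) * Real.cos (j * thetav k)
        + Real.sin (i * thetav k) * Real.sin (j * thetav k) := by
    rw [show ((i:ℝ) - (j:ℝ)) * thetav k = i * thetav k - j * thetav k by ring, Real.cos_sub]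
  rcases hE2 with hgt | hsin
  · rw [if_pos hgt]
    push_cast
    rw [hcs]
    ring
  · rw [hsin i, hsin j]
    push_cast
    rw [hcs, hsin i, hsin j]
    ring

lemma inner_tau_self (hm34 : 3/4 < m) (hm1 : m < 1) (hk : 2 ≤ k) (hE2 : 2 < n ∨ ∀ j : ℤ, Real.sin (j * thetav k) = 0) (j : ℤ) : ⟪tauv m n k hn j, tauv m n k hn j⟫ = 1 := by
  rw [inner_tau hn hE2, sub_self]
  push_cast
  rw [zero_mul, Real.cos_zero, crho_sq hm34 hm1 hk]
  ring

lemma inner_tau_adj (hm34 : 3/4 < m) (hm1 : m < 1) (hk : 2 ≤ k) (hE2 : 2 < n ∨ ∀ j : ℤ, Real.sin (j * thetav k) = 0) (j : ℤ) : ⟪tauv m n k hn j, tauv m n k hn (j+1)⟫ = cv m := by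
  rw [inner_tau hn hE2]
  push_cast
  rw [show ((j:ℝ) - ((j:ℝ)+1)) = -1 by ring, neg_one_mul, Real.cos_neg, crho_sq hm34 hm1 hk]
  have := srho_key (k := k) hm34 hm1 hk
  nlinarith [this]

lemma inner_tau_adj' (hm34 : 3/4 < m) (hm1 : m < 1) (hk : 2 ≤ k) (hE2 : 2 < n ∨ ∀ j : ℤ, Real.sin (j * thetav k) = 0) (j : ℤ) : ⟪tauv m n k hn (j+1), tauv m n k hn j⟫ = cv m := by
  rw [real_inner_comm]; exact inner_tau_adj hn hm34 hm1 hk hE2 j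

lemma tau_per (hk : 2 ≤ k) (j : ℤ) : tauv m n k hn (j + k) = tauv m n k hn j := by
  unfold tauv
  have harg : ((j + (k:ℤ) : ℤ) : ℝ) * thetav k = j * thetav k + ((lv k : ℤ) : ℝ) * (2*π) := by
    push_cast
    have := k_thetav (k := k) hk
    nlinarith [this]
  rw [harg, Real.cos_add_int_mul_two_pi, Real.sin_add_int_mul_two_pi]

/-! ### the orthonormal frames -/

noncomputable def uv (m : ℝ) (n k : ℕ) (hn : 2 ≤ n) (j : ℤ) : EuclideanSpace ℝ (Fin n) :=
  (2 * av m)⁻¹ • (tauv m n k hn j + tauv m n k hn (j+1))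
noncomputable def wv (m : ℝ) (n k : ℕ) (hn : 2 ≤ n) (j : ℤ) : EuclideanSpace ℝ (Fin n) :=
  (2 * bv m)⁻¹ • (tauv m n k hn j - tauv m n k hn (j+1))

lemma uv_per (hk : 2 ≤ k) (j : ℤ) : uv m n k hn (j + k) = uv m n k hn j := by
  unfold uv
  rw [tau_per hn hk, show (j + (k:ℤ) + 1) = (j + 1) + (k:ℤ) by ring, tau_per hn hk]

lemma wv_per (hk : 2 ≤ k) (j : ℤ) : wv m n k hn (j + k) = wv m n k hn j := by
  unfold wv
  rw [tau_per hn hk, show (j + (k:ℤ) + 1) = (j + 1) + (k:ℤ) by ring, tau_per hn hk]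

lemma inner_uu (hm34 : 3/4 < m) (hm1 : m < 1) (hk : 2 ≤ k) (hE2 : 2 < n ∨ ∀ j : ℤ, Real.sin (j * thetav k) = 0) (j : ℤ) : ⟪uv m n k hn j, uv m n k hn j⟫ = 1 := by
  unfold uv
  rw [real_inner_smul_left, real_inner_smul_right, inner_add_left, inner_add_right,
    inner_add_right, inner_tau_self hn hm34 hm1 hk hE2, inner_tau_self hn hm34 hm1 hk hE2,
    inner_tau_adj hn hm34 hm1 hk hE2, inner_tau_adj' hn hm34 hm1 hk hE2]
  have h1 := one_add_cv (m := m)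
  have ha := av_neg hm34
  have ha0 : av m ≠ 0 := ne_of_lt ha
  field_simp
  nlinarith [h1]

lemma inner_ww (hm34 : 3/4 < m) (hm1 : m < 1) (hk : 2 ≤ k) (hE2 : 2 < n ∨ ∀ j : ℤ, Real.sin (j * thetav k) = 0) (j : ℤ) : ⟪wv m n k hn j, wv m n k hn j⟫ = 1 := by
  unfold wv
  rw [real_inner_smul_left, real_inner_smul_right, inner_sub_left, inner_sub_right,
    inner_sub_right, inner_tau_self hn hm34 hm1 hk hE2, inner_tau_self hn hm34 hm1 hk hE2,
    inner_tau_adj hn hm34 hm1 hk hE2, inner_tau_adj' hn hm34 hm1 hk hE2]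
  have h1 := one_sub_cv hm1 (by linarith)
  have hb := bv_pos hm34 hm1
  have hb0 : bv m ≠ 0 := ne_of_gt hb
  field_simp
  nlinarith [h1]

lemma inner_uw (hm34 : 3/4 < m) (hm1 : m < 1) (hk : 2 ≤ k) (hE2 : 2 < n ∨ ∀ j : ℤ, Real.sin (j * thetav k) = 0) (j : ℤ) : ⟪uv m n k hn j, wv m n k hn j⟫ = 0 := by
  unfold uv wv
  rw [real_inner_smul_left, real_inner_smul_right, inner_add_left, inner_sub_right,
    inner_sub_right, inner_tau_self hn hm34 hm1 hk hE2, inner_tau_self hn hm34 hm1 hk hE2,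
    inner_tau_adj hn hm34 hm1 hk hE2, inner_tau_adj' hn hm34 hm1 hk hE2]
  ring

lemma inner_wu (hm34 : 3/4 < m) (hm1 : m < 1) (hk : 2 ≤ k) (hE2 : 2 < n ∨ ∀ j : ℤ, Real.sin (j * thetav k) = 0) (j : ℤ) : ⟪wv m n k hn j, uv m n k hn j⟫ = 0 := by
  rw [real_inner_comm]; exact inner_uw hn hm34 hm1 hk hE2 j

lemma combo_tau (hm34 : 3/4 < m) (hm1 : m < 1) (j : ℤ) :
    av m • uv m n k hn j + bv m • wv m n k hn j = tauv m n k hn j := by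
  unfold uv wv
  have ha0 : av m ≠ 0 := ne_of_lt (av_neg hm34)
  have hb0 : bv m ≠ 0 := ne_of_gt (bv_pos hm34 hm1)
  rw [smul_smul, smul_smul]
  rw [show av m * (2 * av m)⁻¹ = 1/2 by field_simp,
    show bv m * (2 * bv m)⁻¹ = 1/2 by field_simp]
  module

lemma combo_tau' (hm34 : 3/4 < m) (hm1 : m < 1) (j : ℤ) :
    av m • uv m n k hn j - bv m • wv m n k hn j = tauv m n k hn (j+1) := by
  unfold uv wv
  have ha0 : av m ≠ 0 := ne_of_lt (av_neg hm34)
  have hb0 : bv m ≠ 0 := ne_of_gt (bv_pos hm34 hm1)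
  rw [smul_smul, smul_smul]
  rw [show av m * (2 * av m)⁻¹ = 1/2 by field_simp,
    show bv m * (2 * bv m)⁻¹ = 1/2 by field_simp]
  module

lemma inner_combo_uw (hm34 : 3/4 < m) (hm1 : m < 1) (hk : 2 ≤ k) (hE2 : 2 < n ∨ ∀ j : ℤ, Real.sin (j * thetav k) = 0) (x y x' y' : ℝ) (j : ℤ) :
    ⟪x • uv m n k hn j + y • wv m n k hn j, x' • uv m n k hn j + y' • wv m n k hn j⟫
      = x*x' + y*y' := by
  rw [inner_add_left, inner_add_right, inner_add_right,
    real_inner_smul_left, real_inner_smul_left, real_inner_smul_left, real_inner_smul_left,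
    real_inner_smul_right, real_inner_smul_right, real_inner_smul_right, real_inner_smul_right,
    inner_uu hn hm34 hm1 hk hE2, inner_ww hn hm34 hm1 hk hE2,
    inner_uw hn hm34 hm1 hk hE2, inner_wu hn hm34 hm1 hk hE2]
  ring

lemma norm_sq_combo_uw (hm34 : 3/4 < m) (hm1 : m < 1) (hk : 2 ≤ k) (hE2 : 2 < n ∨ ∀ j : ℤ, Real.sin (j * thetav k) = 0) (x y : ℝ) (j : ℤ) :
    ‖x • uv m n k hn j + y • wv m n k hn j‖^2 = x^2 + y^2 := by
  rw [← real_inner_self_eq_norm_sq, inner_combo_uw hn hm34 hm1 hk hE2]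
  ring

lemma norm_combo_uw_one (hm34 : 3/4 < m) (hm1 : m < 1) (hk : 2 ≤ k) (hE2 : 2 < n ∨ ∀ j : ℤ, Real.sin (j * thetav k) = 0) {x y : ℝ} (j : ℤ) (hxy : x^2 + y^2 = 1) :
    ‖x • uv m n k hn j + y • wv m n k hn j‖ = 1 := by
  have h := norm_sq_combo_uw hn hm34 hm1 hk hE2 x y j
  rw [hxy] at h
  rw [← Real.sqrt_sq (norm_nonneg _), h, Real.sqrt_one]

end TauSection

end Vectors

section Curve

open RealInnerProductSpace Set Filter

variable {m : ℝ} {n k : ℕ}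

/-! ### the glued curve -/

noncomputable def jidx (m : ℝ) (s : ℝ) : ℤ := ⌊s / (2 * ellK m)⌋
noncomputable def rres (m : ℝ) (s : ℝ) : ℝ := s - 2 * ellK m * (jidx m s)

noncomputable def d1v (m : ℝ) (n k : ℕ) (hn : 2 ≤ n) (s : ℝ) : EuclideanSpace ℝ (Fin n) :=
  Xf m (rres m s) • uv m n k hn (jidx m s) + Yf m (rres m s) • wv m n k hn (jidx m s)

noncomputable def d2v (m : ℝ) (n k : ℕ) (hn : 2 ≤ n) (s : ℝ) : EuclideanSpace ℝ (Fin n) :=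
  Xd m (rres m s) • uv m n k hn (jidx m s) + Yd m (rres m s) • wv m n k hn (jidx m s)

noncomputable def curveF (m : ℝ) (n k : ℕ) (hn : 2 ≤ n) (s : ℝ) : EuclideanSpace ℝ (Fin n) :=
  ∫ t in (0:ℝ)..s, d1v m n k hn t

lemma jidx_eq (hK : 0 < ellK m) {j : ℤ} {s : ℝ} (h1 : 2 * ellK m * j ≤ s)
    (h2 : s < 2 * ellK m * ((j:ℝ) + 1)) : jidx m s = j := by
  unfold jidx
  rw [Int.floor_eq_iff]
  constructor
  · rw [le_div_iff₀ (by linarith)]; linarith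
  · rw [div_lt_iff₀ (by linarith)]; linarith

lemma jidx_bounds (hK : 0 < ellK m) (s : ℝ) :
    2 * ellK m * (jidx m s) ≤ s ∧ s < 2 * ellK m * ((jidx m s : ℝ) + 1) := by
  constructor
  · have h := Int.floor_le (s / (2 * ellK m))
    rw [le_div_iff₀ (by linarith)] at h
    unfold jidx; linarith
  · have h := Int.lt_floor_add_one (s / (2 * ellK m))
    rw [div_lt_iff₀ (by linarith)] at h
    unfold jidx; linarith

lemma rres_nonneg (hK : 0 < ellK m) (s : ℝ) : 0 ≤ rres m s := by
  have := (jidx_bounds hK s).1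
  unfold rres; linarith

lemma rres_lt (hK : 0 < ellK m) (s : ℝ) : rres m s < 2 * ellK m := by
  have := (jidx_bounds hK s).2
  unfold rres; linarith

section PieceLemmas

variable (hn : 2 ≤ n)

lemma Xf0_av (hm1 : m < 1) (hm0 : 0 ≤ m) : Xf m 0 = av m := by
  rw [Xf_zero hm1 hm0]; unfold av; ring
lemma Yf0_bv (hm1 : m < 1) (hm0 : 0 ≤ m) : Yf m 0 = bv m := by
  rw [Yf_zero hm1 hm0]; unfold bv; ring
lemma Xf2K_av (hm1 : m < 1) (hm0 : 0 ≤ m) : Xf m (2 * ellK m) = av m := by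
  rw [Xf_2K hm1 hm0]; unfold av; ring
lemma Yf2K_bv (hm1 : m < 1) (hm0 : 0 ≤ m) : Yf m (2 * ellK m) = -bv m := by
  rw [Yf_2K hm1 hm0]; unfold bv; ring

lemma d1v_piece (hm34 : 3/4 < m) (hm1 : m < 1) (hK : 0 < ellK m) (j : ℤ) {s : ℝ}
    (hs : s ∈ Set.Icc (2 * ellK m * j) (2 * ellK m * ((j:ℝ)+1))) :
    d1v m n k hn s = Xf m (s - 2 * ellK m * j) • uv m n k hn j
      + Yf m (s - 2 * ellK m * j) • wv m n k hn j := by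
  have hm0 : (0:ℝ) ≤ m := by linarith
  rcases lt_or_eq_of_le hs.2 with h2 | h2
  · have hj : jidx m s = j := jidx_eq hK hs.1 h2
    unfold d1v rres
    rw [hj]
  · -- right endpoint
    have hj : jidx m s = j + 1 := by
      apply jidx_eq hK
      · push_cast; linarith [h2]
      · push_cast; nlinarith [h2, hK]
    have hr : rres m s = 0 := by
      unfold rres; rw [hj]; push_cast; linarith [h2]
    have hs2 : s - 2 * ellK m * j = 2 * ellK m := by linarith [h2]
    unfold d1v
    rw [hj, hr, hs2, Xf0_av hm1 hm0, Yf0_bv hm1 hm0, Xf2K_av hm1 hm0, Yf2K_bv hm1 hm0,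
      combo_tau hn hm34 hm1, neg_smul, ← sub_eq_add_neg, combo_tau' hn hm34 hm1]

lemma d2v_piece (hm34 : 3/4 < m) (hm1 : m < 1) (hK : 0 < ellK m) (j : ℤ) {s : ℝ}
    (hs : s ∈ Set.Icc (2 * ellK m * j) (2 * ellK m * ((j:ℝ)+1))) :
    d2v m n k hn s = Xd m (s - 2 * ellK m * j) • uv m n k hn j
      + Yd m (s - 2 * ellK m * j) • wv m n k hn j := by
  have hm0 : (0:ℝ) ≤ m := by linarith
  rcases lt_or_eq_of_le hs.2 with h2 | h2
  · have hj : jidx m s = j := jidx_eq hK hs.1 h2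
    unfold d2v rres
    rw [hj]
  · have hj : jidx m s = j + 1 := by
      apply jidx_eq hK
      · push_cast; linarith [h2]
      · push_cast; nlinarith [h2, hK]
    have hr : rres m s = 0 := by
      unfold rres; rw [hj]; push_cast; linarith [h2]
    have hs2 : s - 2 * ellK m * j = 2 * ellK m := by linarith [h2]
    unfold d2v
    rw [hj, hr, hs2, Xd_zero hm1 hm0, Yd_zero hm1 hm0, Xd_2K hm1 hm0, Yd_2K hm1 hm0]
    simp

lemma Gd1_hasDeriv (hm1 : m < 1) (hm0 : 0 ≤ m) (c : ℝ) (U W : EuclideanSpace ℝ (Fin n))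
    (s : ℝ) :
    HasDerivAt (fun t => Xf m (t - c) • U + Yf m (t - c) • W)
      (Xd m (s - c) • U + Yd m (s - c) • W) s := by
  have h1 : HasDerivAt (fun t : ℝ => t - c) 1 s := (hasDerivAt_id s).sub_const c
  have hX := ((Xf_hasDeriv hm1 hm0 (s - c)).comp s h1).smul_const U
  have hY := ((Yf_hasDeriv hm1 hm0 (s - c)).comp s h1).smul_const W
  have h := hX.add hY
  simpa [Pi.add_def] using h

lemma Gd2_cont (hm1 : m < 1) (hm0 : 0 ≤ m) (c : ℝ) (U W : EuclideanSpace ℝ (Fin n)) :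
    Continuous (fun t => Xd m (t - c) • U + Yd m (t - c) • W) := by
  apply Continuous.add
  · exact (((Xd_continuous hm1 hm0).comp (continuous_id.sub continuous_const)).smul
      continuous_const)
  · exact (((Yd_continuous hm1 hm0).comp (continuous_id.sub continuous_const)).smul
      continuous_const)

lemma d1v_hasDeriv (hm34 : 3/4 < m) (hm1 : m < 1) (hK : 0 < ellK m) (s : ℝ) :
    HasDerivAt (d1v m n k hn) (d2v m n k hn s) s := by
  have hm0 : (0:ℝ) ≤ m := by linarith
  obtain ⟨hb1, hb2⟩ := jidx_bounds hK s
  set j := jidx m s with hjdef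
  rcases eq_or_lt_of_le hb1 with heq | hlt
  · -- joint point : s = 2K*j
    have hrres : rres m s = 0 := by unfold rres; rw [← hjdef]; linarith
    have hd2 : d2v m n k hn s = 0 := by
      unfold d2v
      rw [← hjdef, hrres, Xd_zero hm1 hm0, Yd_zero hm1 hm0]
      simp
    rw [hd2]
    rw [← hasDerivWithinAt_univ, ← Iic_union_Ici (a := s)]
    apply HasDerivWithinAt.union
    · -- left piece j-1
      have hder : HasDerivAt (fun t => Xf m (t - 2 * ellK m * (j-1)) • uv m n k hn (j-1)
          + Yf m (t - 2 * ellK m * (j-1)) • wv m n k hn (j-1)) 0 s := by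
        have h := Gd1_hasDeriv hm1 hm0 (2 * ellK m * ((j:ℝ)-1)) (uv m n k hn (j-1))
          (wv m n k hn (j-1)) s
        have harg : s - 2 * ellK m * ((j:ℝ)-1) = 2 * ellK m := by linarith
        rw [harg, Xd_2K hm1 hm0, Yd_2K hm1 hm0] at h
        have hc : ((j-1 : ℤ):ℝ) = (j:ℝ) - 1 := by push_cast; ring
        simp only [hc]
        simpa using h
      have hIcc : Set.Icc (2 * ellK m * ((j:ℝ)-1)) (2 * ellK m * j) ∈ nhdsWithin s (Iic s) := by
        apply Icc_mem_nhdsLE_of_mem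
        constructor
        · linarith
        · linarith
      apply HasDerivWithinAt.mono_of_mem_nhdsWithin _ hIcc
      apply (hder.hasDerivWithinAt).congr
      · intro y hy
        have hy' : y ∈ Set.Icc (2 * ellK m * ((j-1:ℤ):ℝ)) (2 * ellK m * (((j-1:ℤ):ℝ)+1)) := by
          constructor
          · have := hy.1; push_cast; linarith
          · have := hy.2; push_cast; linarith
        have := d1v_piece (k := k) hn hm34 hm1 hK (j-1) hy'
        rw [this]
        push_cast
        ring_nf
      · have hs' : s ∈ Set.Icc (2 * ellK m * ((j-1:ℤ):ℝ)) (2 * ellK m * (((j-1:ℤ):ℝ)+1)) := by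
          constructor
          · push_cast; linarith
          · push_cast; linarith
        have := d1v_piece (k := k) hn hm34 hm1 hK (j-1) hs'
        rw [this]
        push_cast
        ring_nf
    · -- right piece j
      have hder : HasDerivAt (fun t => Xf m (t - 2 * ellK m * j) • uv m n k hn j
          + Yf m (t - 2 * ellK m * j) • wv m n k hn j) 0 s := by
        have h := Gd1_hasDeriv hm1 hm0 (2 * ellK m * (j:ℝ)) (uv m n k hn j)
          (wv m n k hn j) s
        have harg : s - 2 * ellK m * (j:ℝ) = 0 := by linarith
        rw [harg, Xd_zero hm1 hm0, Yd_zero hm1 hm0] at h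
        simpa using h
      have hIcc : Set.Icc (2 * ellK m * (j:ℝ)) (2 * ellK m * ((j:ℝ)+1)) ∈ nhdsWithin s (Ici s) := by
        apply Icc_mem_nhdsGE_of_mem
        constructor
        · linarith
        · linarith
      apply HasDerivWithinAt.mono_of_mem_nhdsWithin _ hIcc
      apply (hder.hasDerivWithinAt).congr
      · intro y hy
        exact d1v_piece hn hm34 hm1 hK j hy
      · exact d1v_piece hn hm34 hm1 hK j ⟨hb1, hb2.le⟩
  · -- interior point
    have hder := Gd1_hasDeriv hm1 hm0 (2 * ellK m * (j:ℝ)) (uv m n k hn j)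
      (wv m n k hn j) s
    have hd2 : d2v m n k hn s = Xd m (s - 2 * ellK m * (j:ℝ)) • uv m n k hn j
        + Yd m (s - 2 * ellK m * (j:ℝ)) • wv m n k hn j := by
      unfold d2v rres
      rw [← hjdef]
    rw [hd2]
    apply hder.congr_of_eventuallyEq
    have hmem : Set.Ioo (2 * ellK m * (j:ℝ)) (2 * ellK m * ((j:ℝ)+1)) ∈ nhds s :=
      Ioo_mem_nhds hlt hb2
    filter_upwards [hmem] with y hy
    exact d1v_piece hn hm34 hm1 hK j ⟨hy.1.le, hy.2.le⟩

lemma d2v_continuous (hm34 : 3/4 < m) (hm1 : m < 1) (hK : 0 < ellK m) :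
    Continuous (d2v m n k hn) := by
  have hm0 : (0:ℝ) ≤ m := by linarith
  rw [continuous_iff_continuousAt]
  intro s
  obtain ⟨hb1, hb2⟩ := jidx_bounds hK s
  set j := jidx m s with hjdef
  rcases eq_or_lt_of_le hb1 with heq | hlt
  · rw [← continuousWithinAt_univ, ← Iic_union_Ici (a := s)]
    apply ContinuousWithinAt.union
    · have hcont := (Gd2_cont hm1 hm0 (2 * ellK m * ((j:ℝ)-1)) (uv m n k hn (j-1))
        (wv m n k hn (j-1))).continuousAt (x := s)
      have hIcc : Set.Icc (2 * ellK m * ((j:ℝ)-1)) (2 * ellK m * j) ∈ nhdsWithin s (Iic s) := by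
        apply Icc_mem_nhdsLE_of_mem
        exact ⟨by linarith, by linarith⟩
      apply ContinuousWithinAt.mono_of_mem_nhdsWithin _ hIcc
      apply (hcont.continuousWithinAt).congr
      · intro y hy
        have hy' : y ∈ Set.Icc (2 * ellK m * ((j-1:ℤ):ℝ)) (2 * ellK m * (((j-1:ℤ):ℝ)+1)) := by
          refine ⟨?_, ?_⟩
          · have := hy.1; push_cast; linarith
          · have := hy.2; push_cast; linarith
        have := d2v_piece (k := k) hn hm34 hm1 hK (j-1) hy'
        rw [this]
        push_cast
        ring_nf
      · have hs' : s ∈ Set.Icc (2 * ellK m * ((j-1:ℤ):ℝ)) (2 * ellK m * (((j-1:ℤ):ℝ)+1)) := by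
          refine ⟨by push_cast; linarith, by push_cast; linarith⟩
        have := d2v_piece (k := k) hn hm34 hm1 hK (j-1) hs'
        rw [this]
        push_cast
        ring_nf
    · have hcont := (Gd2_cont hm1 hm0 (2 * ellK m * (j:ℝ)) (uv m n k hn j)
        (wv m n k hn j)).continuousAt (x := s)
      have hIcc : Set.Icc (2 * ellK m * (j:ℝ)) (2 * ellK m * ((j:ℝ)+1)) ∈ nhdsWithin s (Ici s) := by
        apply Icc_mem_nhdsGE_of_mem
        exact ⟨by linarith, by linarith⟩
      apply ContinuousWithinAt.mono_of_mem_nhdsWithin _ hIcc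
      apply (hcont.continuousWithinAt).congr
      · intro y hy
        exact d2v_piece hn hm34 hm1 hK j hy
      · exact d2v_piece hn hm34 hm1 hK j ⟨hb1, hb2.le⟩
  · have hcont := (Gd2_cont hm1 hm0 (2 * ellK m * (j:ℝ)) (uv m n k hn j)
      (wv m n k hn j)).continuousAt (x := s)
    apply ContinuousAt.congr hcont
    have hmem : Set.Ioo (2 * ellK m * (j:ℝ)) (2 * ellK m * ((j:ℝ)+1)) ∈ nhds s :=
      Ioo_mem_nhds hlt hb2
    filter_upwards [hmem] with y hy
    exact (d2v_piece hn hm34 hm1 hK j ⟨hy.1.le, hy.2.le⟩).symm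

lemma d1v_continuous (hm34 : 3/4 < m) (hm1 : m < 1) (hK : 0 < ellK m) :
    Continuous (d1v m n k hn) := by
  rw [continuous_iff_continuousAt]
  intro s
  exact (d1v_hasDeriv hn hm34 hm1 hK s).continuousAt

lemma curveF_hasDeriv (hm34 : 3/4 < m) (hm1 : m < 1) (hK : 0 < ellK m) (s : ℝ) :
    HasDerivAt (curveF m n k hn) (d1v m n k hn s) s := by
  have hc := d1v_continuous (k := k) hn hm34 hm1 hK
  exact intervalIntegral.integral_hasDerivAt_right (hc.intervalIntegrable _ _)
    (hc.stronglyMeasurableAtFilter _ _) hc.continuousAt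

lemma d1v_eq_integral (hm34 : 3/4 < m) (hm1 : m < 1) (hK : 0 < ellK m) (s : ℝ) :
    d1v m n k hn s = d1v m n k hn 0 + ∫ t in (0:ℝ)..s, d2v m n k hn t := by
  have hc2 := d2v_continuous (k := k) hn hm34 hm1 hK
  set h : ℝ → EuclideanSpace ℝ (Fin n) :=
    fun t => d1v m n k hn t - ∫ u in (0:ℝ)..t, d2v m n k hn u with hh
  have hL : ∀ t, HasDerivAt h 0 t := by
    intro t
    have h1 := d1v_hasDeriv (k := k) hn hm34 hm1 hK t
    have h2 : HasDerivAt (fun x => ∫ u in (0:ℝ)..x, d2v m n k hn u) (d2v m n k hn t) t :=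
      intervalIntegral.integral_hasDerivAt_right (hc2.intervalIntegrable _ _)
        (hc2.stronglyMeasurableAtFilter _ _) hc2.continuousAt
    simpa [hh, Pi.sub_def] using h1.sub h2
  have hf0 : ∀ x, fderiv ℝ h x = 0 := by
    intro x
    have := (hasDerivAt_iff_hasFDerivAt.1 (hL x)).fderiv
    rw [this]
    ext v
    simp
  have hconst := is_const_of_fderiv_eq_zero (𝕜 := ℝ)
    (fun x => (hL x).differentiableAt) hf0 s 0
  simp only [hh] at hconst
  rw [intervalIntegral.integral_same] at hconst
  have : d1v m n k hn s - ∫ u in (0:ℝ)..s, d2v m n k hn u = d1v m n k hn 0 := by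
    simpa using hconst
  linear_combination (norm := module) this

lemma jidx_add (hK : 0 < ellK m) (hkk : 2 ≤ k) (s : ℝ) :
    jidx m (s + 2 * ellK m * k) = jidx m s + k := by
  unfold jidx
  have h2K : (2 * ellK m) ≠ 0 := by linarith
  have : (s + 2 * ellK m * k) / (2 * ellK m) = s / (2 * ellK m) + (k:ℤ) := by
    push_cast
    field_simp
  rw [this, Int.floor_add_intCast]

lemma rres_add (hK : 0 < ellK m) (hkk : 2 ≤ k) (s : ℝ) :
    rres m (s + 2 * ellK m * k) = rres m s := by
  unfold rres
  rw [jidx_add hK hkk]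
  push_cast
  ring

lemma d1v_periodic (hm34 : 3/4 < m) (hm1 : m < 1) (hK : 0 < ellK m) (hkk : 2 ≤ k) :
    Function.Periodic (d1v m n k hn) (2 * ellK m * k) := by
  intro s
  unfold d1v
  rw [jidx_add hK hkk, rres_add hK hkk, uv_per hn hkk, wv_per hn hkk]

/-- integral of `d1v` over one piece. -/
lemma piece_int_d1v (hm34 : 3/4 < m) (hm1 : m < 1) (hK : 0 < ellK m) (j : ℤ) :
    ∫ s in (2 * ellK m * j)..(2 * ellK m * ((j:ℝ)+1)), d1v m n k hn s
      = (4 * ellE m - 2 * ellK m) • uv m n k hn j := by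
  have hm0 : (0:ℝ) ≤ m := by linarith
  have hle : 2 * ellK m * (j:ℝ) ≤ 2 * ellK m * ((j:ℝ)+1) := by nlinarith [hK]
  have hcongr : ∀ y ∈ Set.uIcc (2 * ellK m * (j:ℝ)) (2 * ellK m * ((j:ℝ)+1)),
      d1v m n k hn y = Xf m (y - 2 * ellK m * j) • uv m n k hn j
        + Yf m (y - 2 * ellK m * j) • wv m n k hn j := by
    intro y hy
    rw [Set.uIcc_of_le hle] at hy
    exact d1v_piece hn hm34 hm1 hK j hy
  rw [intervalIntegral.integral_congr hcongr]
  have hcX : Continuous (fun y => Xf m (y - 2 * ellK m * (j:ℝ))) :=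
    (Xf_continuous hm1 hm0).comp (continuous_id.sub continuous_const)
  have hcY : Continuous (fun y => Yf m (y - 2 * ellK m * (j:ℝ))) :=
    (Yf_continuous hm1 hm0).comp (continuous_id.sub continuous_const)
  rw [intervalIntegral.integral_add
    ((show Continuous fun y => Xf m (y - 2 * ellK m * (j:ℝ)) • uv m n k hn j from hcX.smul continuous_const).intervalIntegrable _ _)
    ((show Continuous fun y => Yf m (y - 2 * ellK m * (j:ℝ)) • wv m n k hn j from hcY.smul continuous_const).intervalIntegrable _ _),
    intervalIntegral.integral_smul_const, intervalIntegral.integral_smul_const,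
    intervalIntegral.integral_comp_sub_right (fun y => Xf m y) (2 * ellK m * (j:ℝ)),
    intervalIntegral.integral_comp_sub_right (fun y => Yf m y) (2 * ellK m * (j:ℝ)),
    show 2 * ellK m * (j:ℝ) - 2 * ellK m * (j:ℝ) = 0 by ring,
    show 2 * ellK m * ((j:ℝ)+1) - 2 * ellK m * (j:ℝ) = 2 * ellK m by ring,
    integral_Xf hm1 hm0, integral_Yf hm1 hm0]
  simp

/-- integral of `‖d2v‖²` over one piece. -/
lemma piece_int_d2sq (hm34 : 3/4 < m) (hm1 : m < 1) (hkk : 2 ≤ k)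
    (hE2 : 2 < n ∨ ∀ j : ℤ, Real.sin (j * thetav k) = 0) (hK : 0 < ellK m) (j : ℤ) :
    ∫ s in (2 * ellK m * j)..(2 * ellK m * ((j:ℝ)+1)), ‖d2v m n k hn s‖^2
      = 8 * (ellE m - (1-m) * ellK m) := by
  have hm0 : (0:ℝ) ≤ m := by linarith
  have hle : 2 * ellK m * (j:ℝ) ≤ 2 * ellK m * ((j:ℝ)+1) := by nlinarith [hK]
  have hcongr : ∀ y ∈ Set.uIcc (2 * ellK m * (j:ℝ)) (2 * ellK m * ((j:ℝ)+1)),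
      ‖d2v m n k hn y‖^2 = ksq m (y - 2 * ellK m * j) := by
    intro y hy
    rw [Set.uIcc_of_le hle] at hy
    rw [d2v_piece hn hm34 hm1 hK j hy,
      norm_sq_combo_uw hn hm34 hm1 hkk hE2,
      XYd_sq hm1 hm0]
  rw [intervalIntegral.integral_congr hcongr,
    intervalIntegral.integral_comp_sub_right (fun y => ksq m y) (2 * ellK m * (j:ℝ)),
    show 2 * ellK m * (j:ℝ) - 2 * ellK m * (j:ℝ) = 0 by ring,
    show 2 * ellK m * ((j:ℝ)+1) - 2 * ellK m * (j:ℝ) = 2 * ellK m by ring,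
    integral_ksq hm1 hm0]

lemma curveF_nat (hm34 : 3/4 < m) (hm1 : m < 1) (hK : 0 < ellK m)
    (hKE : ellK m = 2 * ellE m) (N : ℕ) :
    curveF m n k hn (2 * ellK m * N) = 0 := by
  have hc := d1v_continuous (k := k) hn hm34 hm1 hK
  unfold curveF
  have hsum := intervalIntegral.sum_integral_adjacent_intervals
    (f := d1v m n k hn) (μ := MeasureTheory.volume) (a := fun i : ℕ => 2 * ellK m * i)
    (n := N) (fun i _ => hc.intervalIntegrable _ _)
  simp only [Nat.cast_zero, mul_zero] at hsum
  rw [← hsum]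
  apply Finset.sum_eq_zero
  intro i _
  have h := piece_int_d1v (k := k) hn hm34 hm1 hK (i : ℤ)
  rw [show (((i:ℤ)):ℝ) = (i:ℝ) by push_cast; ring] at h
  rw [show ((i:ℝ)+1) = ((i+1:ℕ):ℝ) by push_cast; ring] at h
  rw [h, show (4:ℝ) * ellE m - 2 * ellK m = 0 by rw [hKE]; ring, zero_smul]

lemma curveF_periodic (hm34 : 3/4 < m) (hm1 : m < 1) (hK : 0 < ellK m) (hkk : 2 ≤ k)
    (hKE : ellK m = 2 * ellE m) :
    Function.Periodic (curveF m n k hn) (2 * ellK m * k) := by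
  intro x
  have hc := d1v_continuous (k := k) hn hm34 hm1 hK
  have hadd : curveF m n k hn (x + 2 * ellK m * k)
      = curveF m n k hn x + ∫ t in x..(x + 2 * ellK m * k), d1v m n k hn t := by
    unfold curveF
    rw [← intervalIntegral.integral_add_adjacent_intervals
      (hc.intervalIntegrable 0 x) (hc.intervalIntegrable x _)]
  rw [hadd, (d1v_periodic hn hm34 hm1 hK hkk).intervalIntegral_add_eq x 0]
  have h0 := curveF_nat (k := k) hn hm34 hm1 hK hKE k
  unfold curveF at h0
  rw [zero_add, h0, add_zero]

lemma bend_total (hm34 : 3/4 < m) (hm1 : m < 1) (hkk : 2 ≤ k)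
    (hE2 : 2 < n ∨ ∀ j : ℤ, Real.sin (j * thetav k) = 0) (hK : 0 < ellK m) :
    ∫ s in (0:ℝ)..(2 * ellK m * k), ‖d2v m n k hn s‖^2
      = k * (8 * (ellE m - (1-m) * ellK m)) := by
  have hm0 : (0:ℝ) ≤ m := by linarith
  have hc : Continuous (fun s => ‖d2v m n k hn s‖^2) :=
    ((d2v_continuous hn hm34 hm1 hK).norm.pow 2)
  have hsum := intervalIntegral.sum_integral_adjacent_intervals
    (f := fun s => ‖d2v m n k hn s‖^2) (μ := MeasureTheory.volume)
    (a := fun i : ℕ => 2 * ellK m * i) (n := k) (fun i _ => hc.intervalIntegrable _ _)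
  simp only [Nat.cast_zero, mul_zero] at hsum
  rw [← hsum]
  have : ∀ i ∈ Finset.range k, (∫ s in (2 * ellK m * (i:ℕ))..(2 * ellK m * ((i+1:ℕ):ℝ)),
      ‖d2v m n k hn s‖^2) = 8 * (ellE m - (1-m) * ellK m) := by
    intro i _
    have h := piece_int_d2sq hn hm34 hm1 hkk hE2 hK (i : ℤ)
    rw [show (((i:ℤ)):ℝ) = (i:ℝ) by push_cast; ring] at h
    rw [show ((i:ℝ)+1) = ((i+1:ℕ):ℝ) by push_cast; ring] at h
    exact h
  rw [Finset.sum_congr rfl this, Finset.sum_const, Finset.card_range, nsmul_eq_mul]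

end PieceLemmas

end Curve

end LiYau

/-- Optimality: existence of a closed curve with multiplicity `k` attaining equality,
provided `n ≥ 3` or `k` is even. -/
theorem optimality_closed (n k : ℕ) (hn : 2 ≤ n) (hk : 2 ≤ k)
    (hcase : 3 ≤ n ∨ Even k)
    (m : ℝ) (hm : m ∈ Set.Ioo (0:ℝ) 1) (hKE : ellK m = 2 * ellE m) :
    ∃ (L : ℝ), 0 < L ∧ ∃ c : H2Curve n L, c.IsClosedCurve ∧ c.HasMultPt k ∧
      L * c.bend = (32 * (2 * m - 1) * ellE m ^ 2) * (k : ℝ) ^ 2 := by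
  classical
  have hm34 : 3/4 < m := LiYau.m_gt_34 hm hKE
  obtain ⟨hm0', hm1⟩ := hm
  have hm0 : (0:ℝ) ≤ m := hm0'.le
  have hK : 0 < ellK m := LiYau.ellK_pos hm1 hm0
  have hE2 : 2 < n ∨ ∀ j : ℤ, Real.sin (j * LiYau.thetav k) = 0 := by
    rcases hcase with h3 | hev
    · left; omega
    · right; exact fun j => LiYau.sin_int_thetav hk hev j
  have hkpos : (0:ℝ) < (k:ℝ) := by
    have : 0 < k := by omega
    exact_mod_cast this
  have hLpos : 0 < 2 * ellK m * (k:ℝ) := by positivity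
  refine ⟨2 * ellK m * (k:ℝ), hLpos, ?_⟩
  refine ⟨{ f := LiYau.curveF m n k hn
            d1 := LiYau.d1v m n k hn
            d2 := LiYau.d2v m n k hn
            posL := hLpos
            hderiv := fun s _ => (LiYau.curveF_hasDeriv (k := k) hn hm34 hm1 hK s).hasDerivWithinAt
            hcont := (LiYau.d1v_continuous (k := k) hn hm34 hm1 hK).continuousOn
            hunit := fun s _ => by
              have h := LiYau.norm_combo_uw_one hn hm34 hm1 hk hE2 (LiYau.jidx m s)
                (LiYau.XYf_sq hm1 hm0 (LiYau.rres m s))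
              simpa [LiYau.d1v] using h
            hAC := fun s _ => LiYau.d1v_eq_integral (k := k) hn hm34 hm1 hK s
            hint := (LiYau.d2v_continuous (k := k) hn hm34 hm1 hK).integrableOn_Icc
            hL2 := ((LiYau.d2v_continuous (k := k) hn hm34 hm1 hK).norm.pow 2).integrableOn_Icc },
    ?_, ?_, ?_⟩
  · exact LiYau.curveF_periodic hn hm34 hm1 hK hk hKE
  · refine ⟨0, fun i => 2 * ellK m * ((i : ℕ) : ℝ), ?_, ?_, ?_⟩
    · intro i j hij
      have hij' : ((i : ℕ) : ℝ) < ((j : ℕ) : ℝ) := by exact_mod_cast hij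
      have h2K : (0:ℝ) < 2 * ellK m := by linarith
      exact (mul_lt_mul_iff_right₀ h2K).2 hij'
    · intro i
      constructor
      · positivity
      · have h2K : (0:ℝ) < 2 * ellK m := by linarith
        have : ((i : ℕ) : ℝ) < (k : ℝ) := by exact_mod_cast i.isLt
        exact (mul_lt_mul_iff_right₀ h2K).2 this
    · intro i
      exact LiYau.curveF_nat (k := k) hn hm34 hm1 hK hKE (i : ℕ)
  · show 2 * ellK m * (k:ℝ) * (∫ s in (0:ℝ)..(2 * ellK m * (k:ℝ)), ‖LiYau.d2v m n k hn s‖ ^ 2)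
      = 32 * (2 * m - 1) * ellE m ^ 2 * (k:ℝ) ^ 2
    rw [LiYau.bend_total hn hm34 hm1 hk hE2 hK, hKE]
    ring
end

section
/- Let n ≥ 2 and k ≥ 2. Then there exists an (open) immersed unit-speed H²-curve γ : [0,L] → ℝⁿ having a point of multiplicity k and attaining equality: L·∫₀^L ‖γ''(s)‖² ds = ϖ*·(k−1)², where ϖ* = 32(2m*−1)E(m*)². -/
open Real MeasureTheory RealInnerProductSpace

/-- The open curve has a point of multiplicity `k`: `k` distinct parameters in `[0,L]`
mapped to one point. -/
def H2Curve.HasMultPtIcc {n : ℕ} {L : ℝ} (c : H2Curve n L) (k : ℕ) : Prop :=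
  ∃ (p : EuclideanSpace ℝ (Fin n)) (t : Fin k → ℝ),
    StrictMono t ∧ (∀ i, t i ∈ Set.Icc (0:ℝ) L) ∧ ∀ i, c.f (t i) = p

namespace OptAux

noncomputable def del (m φ : ℝ) : ℝ := Real.sqrt (1 - m * Real.sin φ ^ 2)
noncomputable def Fm (m φ : ℝ) : ℝ := ∫ t in (0:ℝ)..φ, (del m t)⁻¹
noncomputable def amf (m : ℝ) : ℝ → ℝ := Function.invFun (Fm m)

variable {m : ℝ}

lemma rad_pos (hm : m ∈ Set.Ioo (0:ℝ) 1) (φ : ℝ) : 0 < 1 - m * Real.sin φ ^ 2 := by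
  nlinarith [Real.sin_sq_le_one φ, sq_nonneg (Real.sin φ), hm.1, hm.2]

lemma del_pos (hm : m ∈ Set.Ioo (0:ℝ) 1) (φ : ℝ) : 0 < del m φ :=
  Real.sqrt_pos.2 (rad_pos hm φ)

lemma del_sq (hm : m ∈ Set.Ioo (0:ℝ) 1) (φ : ℝ) : del m φ ^ 2 = 1 - m * Real.sin φ ^ 2 :=
  Real.sq_sqrt (rad_pos hm φ).le

lemma del_le_one (hm : m ∈ Set.Ioo (0:ℝ) 1) (φ : ℝ) : del m φ ≤ 1 := by
  rw [del]
  calc Real.sqrt (1 - m * Real.sin φ ^ 2) ≤ Real.sqrt 1 :=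
        Real.sqrt_le_sqrt (by nlinarith [sq_nonneg (Real.sin φ), hm.1])
    _ = 1 := Real.sqrt_one

lemma continuous_del : Continuous (del m) :=
  (continuous_const.sub (continuous_const.mul ((Real.continuous_sin).pow 2))).sqrt

lemma continuous_delInv (hm : m ∈ Set.Ioo (0:ℝ) 1) : Continuous (fun φ => (del m φ)⁻¹) :=
  continuous_del.inv₀ (fun φ => (del_pos hm φ).ne')

lemma delInv_ge_one (hm : m ∈ Set.Ioo (0:ℝ) 1) (φ : ℝ) : 1 ≤ (del m φ)⁻¹ :=
  (one_le_inv_iff₀.mpr ⟨del_pos hm φ, del_le_one hm φ⟩)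

lemma hasDerivAt_Fm (hm : m ∈ Set.Ioo (0:ℝ) 1) (φ : ℝ) :
    HasDerivAt (Fm m) (del m φ)⁻¹ φ :=
  ((continuous_delInv hm).integral_hasStrictDerivAt 0 φ).hasDerivAt

lemma strictMono_Fm (hm : m ∈ Set.Ioo (0:ℝ) 1) : StrictMono (Fm m) :=
  strictMono_of_deriv_pos fun φ => by
    rw [(hasDerivAt_Fm hm φ).deriv]
    exact inv_pos.2 (del_pos hm φ)

lemma continuous_Fm (hm : m ∈ Set.Ioo (0:ℝ) 1) : Continuous (Fm m) :=
  continuous_iff_continuousAt.2 fun φ => (hasDerivAt_Fm hm φ).continuousAt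

lemma le_Fm (hm : m ∈ Set.Ioo (0:ℝ) 1) {φ : ℝ} (hφ : 0 ≤ φ) : φ ≤ Fm m φ := by
  have h1 : φ = ∫ t in (0:ℝ)..φ, (1:ℝ) := by simp
  nth_rewrite 1 [h1]
  rw [Fm]
  apply intervalIntegral.integral_mono_on hφ (intervalIntegrable_const)
    (((continuous_delInv hm).intervalIntegrable 0 φ))
  exact fun x _ => delInv_ge_one hm x

lemma Fm_le (hm : m ∈ Set.Ioo (0:ℝ) 1) {φ : ℝ} (hφ : φ ≤ 0) : Fm m φ ≤ φ := by
  have h1 : φ = ∫ t in (0:ℝ)..φ, (1:ℝ) := by simp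
  nth_rewrite 2 [h1]
  rw [Fm, intervalIntegral.integral_symm, intervalIntegral.integral_symm φ 0]
  apply neg_le_neg
  apply intervalIntegral.integral_mono_on (by linarith)
    (intervalIntegrable_const) (((continuous_delInv hm).intervalIntegrable φ 0))
  exact fun x _ => delInv_ge_one hm x

lemma surjective_Fm (hm : m ∈ Set.Ioo (0:ℝ) 1) : Function.Surjective (Fm m) := by
  intro y
  have hab : (-(|y|+1) : ℝ) ≤ |y| + 1 := by have := abs_nonneg y; linarith
  have h1 : Fm m (-(|y|+1)) ≤ y := by
    have := Fm_le hm (show (-(|y|+1):ℝ) ≤ 0 by have := abs_nonneg y; linarith)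
    have := neg_abs_le y; linarith
  have h2 : y ≤ Fm m (|y|+1) := by
    have := le_Fm hm (show (0:ℝ) ≤ |y|+1 by have := abs_nonneg y; linarith)
    have := le_abs_self y; linarith
  have := intermediate_value_Icc hab ((continuous_Fm hm).continuousOn)
  obtain ⟨x, _, hx⟩ := this ⟨h1, h2⟩
  exact ⟨x, hx⟩

lemma amf_Fm (hm : m ∈ Set.Ioo (0:ℝ) 1) (φ : ℝ) : amf m (Fm m φ) = φ :=
  Function.leftInverse_invFun (strictMono_Fm hm).injective φ

lemma Fm_amf (hm : m ∈ Set.Ioo (0:ℝ) 1) (s : ℝ) : Fm m (amf m s) = s :=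
  Function.rightInverse_invFun (surjective_Fm hm) s

lemma strictMono_amf (hm : m ∈ Set.Ioo (0:ℝ) 1) : StrictMono (amf m) := by
  intro a b hab
  rw [← (strictMono_Fm hm).lt_iff_lt, Fm_amf hm, Fm_amf hm]
  exact hab

lemma continuous_amf (hm : m ∈ Set.Ioo (0:ℝ) 1) : Continuous (amf m) :=
  (strictMono_amf hm).monotone.continuous_of_surjective
    (Function.RightInverse.surjective (amf_Fm hm))

lemma hasDerivAt_amf (hm : m ∈ Set.Ioo (0:ℝ) 1) (s : ℝ) :
    HasDerivAt (amf m) (del m (amf m s)) s := by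
  have h := HasDerivAt.of_local_left_inverse ((continuous_amf hm).continuousAt)
    (hasDerivAt_Fm hm (amf m s)) (inv_ne_zero (del_pos hm _).ne')
    (Filter.Eventually.of_forall (Fm_amf hm))
  · simpa [inv_inv] using h

end OptAux
namespace OptAux
variable {m : ℝ}

lemma del_pi_periodic : Function.Periodic (del m) Real.pi := by
  intro φ; simp [del, Real.sin_add_pi]

lemma delInv_pi_periodic : Function.Periodic (fun φ => (del m φ)⁻¹) Real.pi :=
  fun φ => by simp [del_pi_periodic φ]

lemma del_even (φ : ℝ) : del m (-φ) = del m φ := by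
  simp [del]

lemma ellK_eq : ellK m = Fm m (Real.pi/2) := rfl
lemma ellE_eq : ellE m = ∫ t in (0:ℝ)..(Real.pi/2), del m t := rfl

lemma int_delInv_pi (hm : m ∈ Set.Ioo (0:ℝ) 1) :
    ∫ t in (0:ℝ)..Real.pi, (del m t)⁻¹ = 2 * ellK m := by
  have hsplit : ∫ t in (0:ℝ)..Real.pi, (del m t)⁻¹ =
      (∫ t in (0:ℝ)..(Real.pi/2), (del m t)⁻¹) +
      ∫ t in (Real.pi/2)..Real.pi, (del m t)⁻¹ := by
    rw [intervalIntegral.integral_add_adjacent_intervals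
      ((continuous_delInv hm).intervalIntegrable _ _)
      ((continuous_delInv hm).intervalIntegrable _ _)]
  have hrefl : ∫ t in (Real.pi/2)..Real.pi, (del m t)⁻¹ =
      ∫ t in (0:ℝ)..(Real.pi/2), (del m t)⁻¹ := by
    have h1 : ∀ t : ℝ, (del m t)⁻¹ = (del m (Real.pi - t))⁻¹ := by
      intro t
      have : del m (Real.pi - t) = del m t := by
        rw [show Real.pi - t = -t + Real.pi by ring, del_pi_periodic, del_even]
      rw [this]
    rw [intervalIntegral.integral_congr (g := fun t => (del m (Real.pi - t))⁻¹)
      (fun t _ => h1 t)]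
    rw [intervalIntegral.integral_comp_sub_left (fun t => (del m t)⁻¹) Real.pi]
    norm_num
    rw [show Real.pi - Real.pi/2 = Real.pi/2 by ring]
  rw [hsplit, hrefl, ellK_eq, Fm]; ring

lemma Fm_add_pi (hm : m ∈ Set.Ioo (0:ℝ) 1) (φ : ℝ) :
    Fm m (φ + Real.pi) = Fm m φ + 2 * ellK m := by
  have : Fm m (φ + Real.pi) - Fm m φ = ∫ t in φ..(φ + Real.pi), (del m t)⁻¹ := by
    rw [Fm, Fm]
    rw [← intervalIntegral.integral_add_adjacent_intervals
      ((continuous_delInv hm).intervalIntegrable 0 φ)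
      ((continuous_delInv hm).intervalIntegrable φ (φ + Real.pi))]
    ring
  have h2 := Function.Periodic.intervalIntegral_add_eq (delInv_pi_periodic (m := m)) φ 0
  rw [zero_add] at h2
  rw [h2, int_delInv_pi hm] at this
  linarith

lemma amf_zero (hm : m ∈ Set.Ioo (0:ℝ) 1) : amf m 0 = 0 := by
  have : Fm m 0 = 0 := intervalIntegral.integral_same
  have h2 := amf_Fm hm 0
  rwa [this] at h2

lemma amf_K (hm : m ∈ Set.Ioo (0:ℝ) 1) : amf m (ellK m) = Real.pi/2 := by
  rw [ellK_eq, amf_Fm hm]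

lemma amf_add_2K (hm : m ∈ Set.Ioo (0:ℝ) 1) (s : ℝ) :
    amf m (s + 2 * ellK m) = amf m s + Real.pi := by
  apply (strictMono_Fm hm).injective
  rw [Fm_amf hm, Fm_add_pi hm, Fm_amf hm]

lemma K_pos (hm : m ∈ Set.Ioo (0:ℝ) 1) : 0 < ellK m := by
  have := le_Fm hm (le_of_lt (by positivity : (0:ℝ) < Real.pi/2))
  rw [ellK_eq]; linarith [Real.pi_pos]

end OptAux
namespace OptAux

noncomputable def Af (m s : ℝ) : ℝ := amf m (s + ellK m)
noncomputable def Sf (m s : ℝ) : ℝ := Real.sin (Af m s)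
noncomputable def Cf (m s : ℝ) : ℝ := Real.cos (Af m s)
noncomputable def Df (m s : ℝ) : ℝ := del m (Af m s)

variable {m : ℝ}

lemma hasDerivAt_Af (hm : m ∈ Set.Ioo (0:ℝ) 1) (s : ℝ) :
    HasDerivAt (Af m) (Df m s) s := by
  have h := (hasDerivAt_amf hm (s + ellK m)).comp s ((hasDerivAt_id s).add_const (ellK m))
  exact h.congr_deriv (mul_one _)

lemma Df_pos (hm : m ∈ Set.Ioo (0:ℝ) 1) (s : ℝ) : 0 < Df m s := del_pos hm _

lemma Dsq (hm : m ∈ Set.Ioo (0:ℝ) 1) (s : ℝ) : Df m s ^ 2 = 1 - m * Sf m s ^ 2 :=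
  del_sq hm _

lemma hasDerivAt_Sf (hm : m ∈ Set.Ioo (0:ℝ) 1) (s : ℝ) :
    HasDerivAt (Sf m) (Cf m s * Df m s) s := by
  have h := (Real.hasDerivAt_sin (Af m s)).comp s (hasDerivAt_Af hm s)
  exact h

lemma hasDerivAt_Cf (hm : m ∈ Set.Ioo (0:ℝ) 1) (s : ℝ) :
    HasDerivAt (Cf m) (-(Sf m s * Df m s)) s := by
  have h := (Real.hasDerivAt_cos (Af m s)).comp s (hasDerivAt_Af hm s)
  exact h.congr_deriv (neg_mul _ _)

lemma hasDerivAt_Df (hm : m ∈ Set.Ioo (0:ℝ) 1) (s : ℝ) :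
    HasDerivAt (Df m) (-(m * Sf m s * Cf m s)) s := by
  have hw : HasDerivAt (fun s => 1 - m * Sf m s ^ 2)
      (-(m * (2 * Sf m s * (Cf m s * Df m s)))) s := by
    have := (((hasDerivAt_Sf hm s).pow 2).const_mul m).const_sub 1
    simpa [mul_comm, mul_assoc, mul_left_comm] using this
  have hpos : (1 - m * Sf m s ^ 2) ≠ 0 := by
    have := rad_pos hm (Af m s); simp only [Sf]; positivity
  have h := (Real.hasDerivAt_sqrt hpos).comp s hw
  have heq : (fun s => Real.sqrt (1 - m * Sf m s ^ 2)) = Df m := by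
    funext t; rw [Df, del, Sf]
  rw [← heq]
  refine h.congr_deriv (Eq.symm ?_)
  have hD : Real.sqrt (1 - m * Sf m s ^ 2) = Df m s := by rw [Df, del, Sf]
  rw [hD]
  have := Df_pos hm s
  field_simp

lemma continuous_Af (hm : m ∈ Set.Ioo (0:ℝ) 1) : Continuous (Af m) :=
  (continuous_amf hm).comp (continuous_id.add continuous_const)
lemma continuous_Sf (hm : m ∈ Set.Ioo (0:ℝ) 1) : Continuous (Sf m) :=
  Real.continuous_sin.comp (continuous_Af hm)
lemma continuous_Cf (hm : m ∈ Set.Ioo (0:ℝ) 1) : Continuous (Cf m) :=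
  Real.continuous_cos.comp (continuous_Af hm)
lemma continuous_Df (hm : m ∈ Set.Ioo (0:ℝ) 1) : Continuous (Df m) :=
  continuous_del.comp (continuous_Af hm)

lemma Af_add (hm : m ∈ Set.Ioo (0:ℝ) 1) (s : ℝ) :
    Af m (s + 2 * ellK m) = Af m s + Real.pi := by
  rw [Af, Af, show s + 2 * ellK m + ellK m = (s + ellK m) + 2 * ellK m by ring,
    amf_add_2K hm]

lemma Cf_add (hm : m ∈ Set.Ioo (0:ℝ) 1) (s : ℝ) :
    Cf m (s + 2 * ellK m) = -Cf m s := by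
  rw [Cf, Cf, Af_add hm, Real.cos_add_pi]

lemma Df_add (hm : m ∈ Set.Ioo (0:ℝ) 1) (s : ℝ) :
    Df m (s + 2 * ellK m) = Df m s := by
  rw [Df, Df, Af_add hm, del_pi_periodic]

lemma Csq_periodic (hm : m ∈ Set.Ioo (0:ℝ) 1) :
    Function.Periodic (fun s => 4 * m * Cf m s ^ 2) (2 * ellK m) :=
  fun s => by simp only [Cf_add hm s]; ring

lemma Dsq_periodic (hm : m ∈ Set.Ioo (0:ℝ) 1) :
    Function.Periodic (fun s => Df m s ^ 2) (2 * ellK m) :=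
  fun s => by simp [Df_add hm s]

lemma Af_nat (hm : m ∈ Set.Ioo (0:ℝ) 1) (j : ℕ) :
    Af m (2 * ellK m * j) = Real.pi/2 + j * Real.pi := by
  induction j with
  | zero => simpa [Af] using amf_K hm
  | succ j ih =>
    have : (2 : ℝ) * ellK m * (j+1 : ℕ) = 2 * ellK m * j + 2 * ellK m := by
      push_cast; ring
    rw [this, Af_add hm, ih]
    push_cast; ring

lemma Cf_nat (hm : m ∈ Set.Ioo (0:ℝ) 1) (j : ℕ) : Cf m (2 * ellK m * j) = 0 := by
  rw [Cf, Af_nat hm, Real.cos_add, Real.cos_pi_div_two, Real.sin_pi_div_two]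
  simp [Real.sin_nat_mul_pi]

lemma Cf_zero (hm : m ∈ Set.Ioo (0:ℝ) 1) : Cf m 0 = 0 := by
  have := Cf_nat hm 0; simpa using this

/-- generic: integral over `[0, T*j]` of a `T`-periodic continuous function -/
lemma integral_nat_mul {g : ℝ → ℝ} (hg : Continuous g) {T : ℝ}
    (hp : Function.Periodic g T) (j : ℕ) :
    ∫ t in (0:ℝ)..(T * j), g t = j * ∫ t in (0:ℝ)..T, g t := by
  induction j with
  | zero => simp
  | succ j ih =>
    have hsplit : ∫ t in (0:ℝ)..(T * (j+1:ℕ)), g t =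
        (∫ t in (0:ℝ)..(T*j), g t) + ∫ t in (T*j)..(T*j + T), g t := by
      rw [intervalIntegral.integral_add_adjacent_intervals
        (hg.intervalIntegrable _ _) (hg.intervalIntegrable _ _)]
      congr 1; push_cast; ring
    rw [hsplit, ih, hp.intervalIntegral_add_eq (T*j) 0]
    push_cast; simp; ring

end OptAux
namespace OptAux
variable {m : ℝ}

lemma Fm_3pi2 (hm : m ∈ Set.Ioo (0:ℝ) 1) :
    Fm m (3 * Real.pi / 2) = 3 * ellK m := by
  have h := Fm_add_pi hm (Real.pi / 2)
  rw [show Real.pi/2 + Real.pi = 3 * Real.pi/2 by ring, ← ellK_eq] at h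
  rw [h]; ring

/-- Change of variables `t = Fm φ - K` in integrals over one period. -/
lemma subst_int (hm : m ∈ Set.Ioo (0:ℝ) 1) {g : ℝ → ℝ} (hg : Continuous g) :
    ∫ t in (0:ℝ)..(2 * ellK m), g t
      = ∫ φ in (Real.pi/2)..(3 * Real.pi/2), (del m φ)⁻¹ * g (Fm m φ - ellK m) := by
  have key := intervalIntegral.integral_comp_smul_deriv
    (f := fun φ => Fm m φ - ellK m) (f' := fun φ => (del m φ)⁻¹) (g := g)
    (a := Real.pi/2) (b := 3 * Real.pi/2)
    (fun x _ => (hasDerivAt_Fm hm x).sub_const (ellK m))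
    ((continuous_delInv hm).continuousOn) hg
  have h1 : Fm m (Real.pi/2) - ellK m = 0 := by rw [← ellK_eq]; ring
  have h2 : Fm m (3 * Real.pi/2) - ellK m = 2 * ellK m := by rw [Fm_3pi2 hm]; ring
  simp only [Function.comp, smul_eq_mul] at key
  rw [h1, h2] at key
  rw [← key]

lemma Cf_subst (hm : m ∈ Set.Ioo (0:ℝ) 1) (φ : ℝ) :
    Cf m (Fm m φ - ellK m) = Real.cos φ := by
  rw [Cf, Af, show Fm m φ - ellK m + ellK m = Fm m φ by ring, amf_Fm hm]

lemma Df_subst (hm : m ∈ Set.Ioo (0:ℝ) 1) (φ : ℝ) :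
    Df m (Fm m φ - ellK m) = del m φ := by
  rw [Df, Af, show Fm m φ - ellK m + ellK m = Fm m φ by ring, amf_Fm hm]

lemma int_del_halfperiod (hm : m ∈ Set.Ioo (0:ℝ) 1) :
    ∫ φ in (Real.pi/2)..(3 * Real.pi/2), del m φ = 2 * ellE m := by
  have hshift := (del_pi_periodic (m := m)).intervalIntegral_add_eq
    (Real.pi/2) (-(Real.pi/2))
  rw [show Real.pi/2 + Real.pi = 3*Real.pi/2 by ring,
    show -(Real.pi/2) + Real.pi = Real.pi/2 by ring] at hshift
  rw [hshift]
  have hsplit : ∫ φ in (-(Real.pi/2))..(Real.pi/2), del m φ =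
      (∫ φ in (-(Real.pi/2))..(0:ℝ), del m φ) + ∫ φ in (0:ℝ)..(Real.pi/2), del m φ := by
    rw [intervalIntegral.integral_add_adjacent_intervals
      (continuous_del.intervalIntegrable _ _) (continuous_del.intervalIntegrable _ _)]
  have heven : ∫ φ in (-(Real.pi/2))..(0:ℝ), del m φ = ∫ φ in (0:ℝ)..(Real.pi/2), del m φ := by
    have h := intervalIntegral.integral_comp_neg (a := (0:ℝ)) (b := Real.pi/2)
      (fun x => del m x)
    rw [neg_zero] at h
    have h2 : ∫ x in (0:ℝ)..(Real.pi/2), del m (-x) = ∫ x in (0:ℝ)..(Real.pi/2), del m x := by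
      apply intervalIntegral.integral_congr
      intro x _
      exact del_even x
    rw [h2] at h
    exact h.symm
  rw [hsplit, heven, ← ellE_eq]; ring

lemma int_delInv_halfperiod (hm : m ∈ Set.Ioo (0:ℝ) 1) :
    ∫ φ in (Real.pi/2)..(3 * Real.pi/2), (del m φ)⁻¹ = 2 * ellK m := by
  have h := intervalIntegral.integral_interval_sub_left
    (f := fun φ => (del m φ)⁻¹) (μ := MeasureTheory.volume)
    ((continuous_delInv hm).intervalIntegrable 0 (3*Real.pi/2))
    ((continuous_delInv hm).intervalIntegrable 0 (Real.pi/2))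
  rw [← h]
  rw [show (∫ φ in (0:ℝ)..(3*Real.pi/2), (del m φ)⁻¹) = Fm m (3*Real.pi/2) from rfl,
    show (∫ φ in (0:ℝ)..(Real.pi/2), (del m φ)⁻¹) = Fm m (Real.pi/2) from rfl]
  rw [Fm_3pi2 hm, ← ellK_eq]; ring

lemma int_Dsq (hm : m ∈ Set.Ioo (0:ℝ) 1) :
    ∫ t in (0:ℝ)..(2 * ellK m), Df m t ^ 2 = 2 * ellE m := by
  rw [subst_int hm (by exact (continuous_Df hm).pow 2)]
  rw [← int_del_halfperiod hm]
  apply intervalIntegral.integral_congr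
  intro φ _
  simp only
  rw [Df_subst hm, pow_two, ← mul_assoc, inv_mul_cancel₀ (del_pos hm φ).ne', one_mul]

lemma int_Csq (hm : m ∈ Set.Ioo (0:ℝ) 1) :
    ∫ t in (0:ℝ)..(2 * ellK m), 4 * m * Cf m t ^ 2
      = 8 * ellE m - 8 * (1-m) * ellK m := by
  rw [subst_int hm (by exact (continuous_const.mul ((continuous_Cf hm).pow 2)))]
  have hcongr : ∫ φ in (Real.pi/2)..(3 * Real.pi/2),
      (del m φ)⁻¹ * (4 * m * Cf m (Fm m φ - ellK m) ^ 2)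
      = ∫ φ in (Real.pi/2)..(3 * Real.pi/2),
        (4 * del m φ - 4 * (1-m) * (del m φ)⁻¹) := by
    apply intervalIntegral.integral_congr
    intro φ _
    simp only
    rw [Cf_subst hm]
    have h := del_pos hm φ
    have h2 := del_sq hm φ
    have h3 : Real.cos φ ^ 2 = 1 - Real.sin φ ^ 2 := by
      have := Real.sin_sq_add_cos_sq φ; linarith
    field_simp
    linear_combination (-1:ℝ) * h2 + m * h3
  rw [hcongr]
  have hsub : ∫ φ in (Real.pi/2)..(3 * Real.pi/2),
      (4 * del m φ - 4 * (1-m) * (del m φ)⁻¹)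
      = 4 * (∫ φ in (Real.pi/2)..(3 * Real.pi/2), del m φ)
        - 4 * (1-m) * ∫ φ in (Real.pi/2)..(3 * Real.pi/2), (del m φ)⁻¹ := by
    rw [intervalIntegral.integral_sub (f := fun φ => 4 * del m φ) (g := fun φ => 4 * (1-m) * (del m φ)⁻¹) ((continuous_const.mul continuous_del).intervalIntegrable _ _)
      ((continuous_const.mul (continuous_delInv hm)).intervalIntegrable _ _),
      intervalIntegral.integral_const_mul, intervalIntegral.integral_const_mul]
  rw [hsub, int_del_halfperiod hm, int_delInv_halfperiod hm]
  ring

end OptAux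
namespace OptAux

lemma norm_pair_sq {n : ℕ} {i0 i1 : Fin n} (h : i0 ≠ i1) (a b : ℝ) :
    ‖a • EuclideanSpace.single i0 (1:ℝ) + b • EuclideanSpace.single i1 (1:ℝ)‖^2
      = a^2 + b^2 := by
  rw [norm_add_sq_real]
  have hinner : (inner ℝ (a • EuclideanSpace.single i0 (1:ℝ))
      (b • EuclideanSpace.single i1 (1:ℝ)) : ℝ) = 0 := by
    rw [real_inner_smul_left, real_inner_smul_right, EuclideanSpace.inner_single_left]
    simp [EuclideanSpace.single_apply, h]
  rw [hinner, norm_smul, norm_smul, EuclideanSpace.norm_single, EuclideanSpace.norm_single]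
  simp [sq_abs]

lemma norm_pair {n : ℕ} {i0 i1 : Fin n} (h : i0 ≠ i1) (a b : ℝ) :
    ‖a • EuclideanSpace.single i0 (1:ℝ) + b • EuclideanSpace.single i1 (1:ℝ)‖
      = Real.sqrt (a^2 + b^2) := by
  rw [← norm_pair_sq h a b]
  exact (Real.sqrt_sq (norm_nonneg _)).symm

noncomputable def xf (m s : ℝ) : ℝ := 2 * (∫ t in (0:ℝ)..s, Df m t^2) - s
noncomputable def yf (m s : ℝ) : ℝ := -(2*Real.sqrt m) * Cf m s
noncomputable def d1x (m s : ℝ) : ℝ := 1 - 2*m*Sf m s^2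
noncomputable def d1y (m s : ℝ) : ℝ := 2*Real.sqrt m * Sf m s * Df m s
noncomputable def d2x (m s : ℝ) : ℝ := -(4*m*Sf m s*Cf m s*Df m s)
noncomputable def d2y (m s : ℝ) : ℝ := 2*Real.sqrt m*Cf m s*(1 - 2*m*Sf m s^2)

variable {m : ℝ}

lemma hasDerivAt_xf (hm : m ∈ Set.Ioo (0:ℝ) 1) (s : ℝ) :
    HasDerivAt (xf m) (d1x m s) s := by
  have hE : HasDerivAt (fun s => ∫ t in (0:ℝ)..s, Df m t^2) (Df m s^2) s :=
    (((continuous_Df hm).pow 2).integral_hasStrictDerivAt 0 s).hasDerivAt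
  have h := (hE.const_mul 2).sub (hasDerivAt_id s)
  unfold xf
  refine h.congr_deriv (Eq.symm ?_)
  have hD := Dsq hm s
  rw [d1x]; linarith

lemma hasDerivAt_yf (hm : m ∈ Set.Ioo (0:ℝ) 1) (s : ℝ) :
    HasDerivAt (yf m) (d1y m s) s := by
  have h := (hasDerivAt_Cf hm s).const_mul (-(2*Real.sqrt m))
  unfold yf
  refine h.congr_deriv (Eq.symm ?_)
  rw [d1y]; ring

lemma hasDerivAt_d1x (hm : m ∈ Set.Ioo (0:ℝ) 1) (s : ℝ) :
    HasDerivAt (d1x m) (d2x m s) s := by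
  have h := (((hasDerivAt_Sf hm s).pow 2).const_mul (2*m)).const_sub 1
  unfold d1x
  refine h.congr_deriv (Eq.symm ?_)
  rw [d2x]; push_cast; ring

lemma hasDerivAt_d1y (hm : m ∈ Set.Ioo (0:ℝ) 1) (s : ℝ) :
    HasDerivAt (d1y m) (d2y m s) s := by
  have h := ((hasDerivAt_Sf hm s).const_mul (2*Real.sqrt m)).mul (hasDerivAt_Df hm s)
  unfold d1y
  refine h.congr_deriv (Eq.symm ?_)
  have hD := Dsq hm s
  rw [d2y]
  linear_combination (-(2:ℝ)*Real.sqrt m*Cf m s) * hD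

lemma continuous_d2x (hm : m ∈ Set.Ioo (0:ℝ) 1) : Continuous (d2x m) := by
  unfold d2x
  exact (((continuous_const.mul (continuous_Sf hm)).mul (continuous_Cf hm)).mul
    (continuous_Df hm)).neg

lemma continuous_d2y (hm : m ∈ Set.Ioo (0:ℝ) 1) : Continuous (d2y m) := by
  unfold d2y
  exact (continuous_const.mul (continuous_Cf hm)).mul
    (continuous_const.sub (continuous_const.mul ((continuous_Sf hm).pow 2)))

lemma d1_norm (hm : m ∈ Set.Ioo (0:ℝ) 1) (s : ℝ) : d1x m s^2 + d1y m s^2 = 1 := by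
  have hD := Dsq hm s
  have hm' : Real.sqrt m ^ 2 = m := Real.sq_sqrt hm.1.le
  unfold d1x d1y
  linear_combination (4*Sf m s^2*Df m s^2) * hm' + (4*m*Sf m s^2) * hD

lemma d2_norm (hm : m ∈ Set.Ioo (0:ℝ) 1) (s : ℝ) :
    d2x m s^2 + d2y m s^2 = 4*m*Cf m s^2 := by
  have hD := Dsq hm s
  have hm' : Real.sqrt m ^ 2 = m := Real.sq_sqrt hm.1.le
  unfold d2x d2y
  linear_combination (4*Cf m s^2*(1-2*m*Sf m s^2)^2) * hm'
    + (16*m^2*Sf m s^2*Cf m s^2) * hD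

lemma xf_nat (hm : m ∈ Set.Ioo (0:ℝ) 1) (hKE : ellK m = 2 * ellE m) (j : ℕ) :
    xf m (2 * ellK m * j) = 0 := by
  rw [xf, integral_nat_mul (g := fun t => Df m t ^ 2) ((continuous_Df hm).pow 2) (Dsq_periodic hm) j, int_Dsq hm,
    hKE]
  ring

lemma yf_nat (hm : m ∈ Set.Ioo (0:ℝ) 1) (j : ℕ) : yf m (2 * ellK m * j) = 0 := by
  rw [yf, Cf_nat hm]; ring

end OptAux

namespace OptAux
variable {m : ℝ}
lemma continuous_d1x (hm : m ∈ Set.Ioo (0:ℝ) 1) : Continuous (d1x m) := by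
  unfold d1x
  exact continuous_const.sub (continuous_const.mul ((continuous_Sf hm).pow 2))
lemma continuous_d1y (hm : m ∈ Set.Ioo (0:ℝ) 1) : Continuous (d1y m) := by
  unfold d1y
  exact (continuous_const.mul (continuous_Sf hm)).mul (continuous_Df hm)
end OptAux

/-- Optimality for open curves: existence of a curve with multiplicity `k` attaining
equality `L·B = ϖ*(k-1)²`. -/
theorem optimality_open (n k : ℕ) (hn : 2 ≤ n) (hk : 2 ≤ k)
    (m : ℝ) (hm : m ∈ Set.Ioo (0:ℝ) 1) (hKE : ellK m = 2 * ellE m) :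
    ∃ (L : ℝ), 0 < L ∧ ∃ c : H2Curve n L, c.HasMultPtIcc k ∧
      L * c.bend = (32 * (2 * m - 1) * ellE m ^ 2) * ((k : ℝ) - 1) ^ 2 := by
  open OptAux in
  have hK := K_pos hm
  have hk1 : (1:ℝ) ≤ (k:ℝ) - 1 := by
    have h2 : (2:ℝ) ≤ (k:ℝ) := by exact_mod_cast hk
    linarith
  have hL : 0 < 2 * ellK m * ((k:ℝ) - 1) := by nlinarith
  have h01 : (⟨0, by omega⟩ : Fin n) ≠ (⟨1, by omega⟩ : Fin n) := by
    simp [Fin.ext_iff]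
  refine ⟨2 * ellK m * ((k:ℝ) - 1), hL, ?_⟩
  set u : EuclideanSpace ℝ (Fin n) := EuclideanSpace.single ⟨0, by omega⟩ (1:ℝ) with hu
  set v : EuclideanSpace ℝ (Fin n) := EuclideanSpace.single ⟨1, by omega⟩ (1:ℝ) with hv
  have hcd1 : Continuous (fun s => d1x m s • u + d1y m s • v) :=
    ((continuous_d1x hm).smul continuous_const).add
      ((continuous_d1y hm).smul continuous_const)
  have hcd2 : Continuous (fun s => d2x m s • u + d2y m s • v) :=
    ((continuous_d2x hm).smul continuous_const).add
      ((continuous_d2y hm).smul continuous_const)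
  refine ⟨{ f := fun s => xf m s • u + yf m s • v
            d1 := fun s => d1x m s • u + d1y m s • v
            d2 := fun s => d2x m s • u + d2y m s • v
            posL := hL
            hderiv := fun s _ => (((hasDerivAt_xf hm s).smul_const u).add
              ((hasDerivAt_yf hm s).smul_const v)).hasDerivWithinAt
            hcont := hcd1.continuousOn
            hunit := fun s _ => by
              rw [hu, hv, norm_pair h01, d1_norm hm s, Real.sqrt_one]
            hAC := fun s _ => by
              have hI := intervalIntegral.integral_eq_sub_of_hasDerivAt
                (f := fun t => d1x m t • u + d1y m t • v)
                (f' := fun t => d2x m t • u + d2y m t • v)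
                (a := 0) (b := s)
                (fun t _ => ((hasDerivAt_d1x hm t).smul_const u).add
                  ((hasDerivAt_d1y hm t).smul_const v))
                (hcd2.intervalIntegrable 0 s)
              rw [hI]
              abel
            hint := hcd2.integrableOn_Icc
            hL2 := ((hcd2.norm.pow 2)).integrableOn_Icc },
    ?_, ?_⟩
  · -- multiplicity point
    refine ⟨0, fun i => 2 * ellK m * ((i : ℕ) : ℝ), ?_, ?_, ?_⟩
    · intro a b hab
      have : ((a : ℕ) : ℝ) < ((b : ℕ) : ℝ) := by exact_mod_cast hab
      have h2K : (0:ℝ) < 2 * ellK m := by linarith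
      exact (mul_lt_mul_iff_right₀ h2K).2 this
    · intro i
      constructor
      · positivity
      · have hi : ((i : ℕ) : ℝ) ≤ (k:ℝ) - 1 := by
          have := i.isLt
          have : ((i:ℕ):ℝ) + 1 ≤ (k:ℝ) := by exact_mod_cast this
          linarith
        have h2K : (0:ℝ) ≤ 2 * ellK m := by linarith
        exact mul_le_mul_of_nonneg_left hi h2K
    · intro i
      show xf m (2 * ellK m * ((i:ℕ):ℝ)) • u + yf m (2 * ellK m * ((i:ℕ):ℝ)) • v = 0
      rw [xf_nat hm hKE, yf_nat hm]
      simp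
  · -- the energy identity
    show 2 * ellK m * ((k:ℝ) - 1) *
        (∫ s in (0:ℝ)..(2 * ellK m * ((k:ℝ) - 1)), ‖d2x m s • u + d2y m s • v‖^2)
      = 32 * (2 * m - 1) * ellE m ^ 2 * ((k : ℝ) - 1) ^ 2
    have hcast : (((k-1:ℕ)):ℝ) = (k:ℝ) - 1 := by
      have h1 : 1 ≤ k := by omega
      push_cast [Nat.cast_sub h1]
      ring
    have hcongr : ∫ s in (0:ℝ)..(2 * ellK m * ((k:ℝ) - 1)), ‖d2x m s • u + d2y m s • v‖^2
        = ∫ s in (0:ℝ)..(2 * ellK m * (((k-1:ℕ)):ℝ)), 4 * m * Cf m s ^ 2 := by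
      rw [hcast]
      apply intervalIntegral.integral_congr
      intro s _
      simp only
      rw [hu, hv, norm_pair_sq h01, d2_norm hm s]
    rw [hcongr, integral_nat_mul (g := fun t => 4 * m * Cf m t ^ 2) (continuous_const.mul ((continuous_Cf hm).pow 2))
      (Csq_periodic hm) (k-1), int_Csq hm, hcast, hKE]
    ring
end

section
/- There exists a unique m ∈ (0,1) such that K(m) = 2E(m), where K and E are the complete elliptic integrals of the first and second kind. Moreover the function m ↦ K(m) − 2E(m) is strictly increasing on (0,1). -/
open Real MeasureTheory RealInnerProductSpace

namespace EllAux

/-- Combined integrand for `K - 2E`. -/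
noncomputable def F (m θ : ℝ) : ℝ :=
  (Real.sqrt (1 - m * Real.sin θ ^ 2))⁻¹ - 2 * Real.sqrt (1 - m * Real.sin θ ^ 2)

lemma arg_pos {m θ : ℝ} (hm0 : 0 ≤ m) (hm1 : m < 1) : 0 < 1 - m * Real.sin θ ^ 2 := by
  nlinarith [Real.sin_sq_le_one θ, sq_nonneg (Real.sin θ)]

lemma contK {m : ℝ} (hm0 : 0 ≤ m) (hm1 : m < 1) :
    Continuous fun θ => (Real.sqrt (1 - m * Real.sin θ ^ 2))⁻¹ := by
  apply Continuous.inv₀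
  · exact (continuous_const.sub (continuous_const.mul ((Real.continuous_sin).pow 2))).sqrt
  · intro θ
    exact (Real.sqrt_pos.mpr (arg_pos hm0 hm1)).ne'

lemma contE (m : ℝ) : Continuous fun θ => Real.sqrt (1 - m * Real.sin θ ^ 2) :=
  (continuous_const.sub (continuous_const.mul ((Real.continuous_sin).pow 2))).sqrt

lemma contF {m : ℝ} (hm0 : 0 ≤ m) (hm1 : m < 1) : Continuous (F m) :=
  (contK hm0 hm1).sub (continuous_const.mul (contE m))

lemma intK {m : ℝ} (hm0 : 0 ≤ m) (hm1 : m < 1) :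
    IntervalIntegrable (fun θ => (Real.sqrt (1 - m * Real.sin θ ^ 2))⁻¹) volume 0 (π/2) :=
  (contK hm0 hm1).intervalIntegrable _ _

lemma intE (m : ℝ) :
    IntervalIntegrable (fun θ => Real.sqrt (1 - m * Real.sin θ ^ 2)) volume 0 (π/2) :=
  (contE m).intervalIntegrable _ _

lemma intF {m : ℝ} (hm0 : 0 ≤ m) (hm1 : m < 1) :
    IntervalIntegrable (F m) volume 0 (π/2) :=
  (contF hm0 hm1).intervalIntegrable _ _

lemma keyF (m : ℝ) (hm0 : 0 ≤ m) (hm1 : m < 1) :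
    ellK m - 2 * ellE m = ∫ θ in (0:ℝ)..(π/2), F m θ := by
  unfold ellK ellE F
  rw [intervalIntegral.integral_sub (intK hm0 hm1) ((intE m).const_mul 2),
    intervalIntegral.integral_const_mul]

/-- Pointwise strict monotonicity of the integrand in `m`. -/
lemma F_lt {a b θ : ℝ} (ha : 0 < a) (hb : b < 1) (hab : a < b) (hθ : θ ∈ Set.Ioo 0 (π/2)) :
    F a θ < F b θ := by
  have hs : 0 < Real.sin θ := Real.sin_pos_of_pos_of_lt_pi hθ.1 (by linarith [hθ.2, Real.pi_pos])
  have hs1 : Real.sin θ ^ 2 ≤ 1 := Real.sin_sq_le_one θ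
  set xa := 1 - a * Real.sin θ ^ 2 with hxa
  set xb := 1 - b * Real.sin θ ^ 2 with hxb
  have hxbpos : 0 < xb := by nlinarith
  have hs2 : 0 < Real.sin θ ^ 2 := pow_pos hs 2
  have hlt : xb < xa := by nlinarith
  have h1 : Real.sqrt xb < Real.sqrt xa := Real.sqrt_lt_sqrt hxbpos.le hlt
  have h2 : 0 < Real.sqrt xb := Real.sqrt_pos.mpr hxbpos
  have h3 : (Real.sqrt xa)⁻¹ < (Real.sqrt xb)⁻¹ := inv_strictAnti₀ h2 h1
  unfold F
  nlinarith

/-- `K - 2E` is strictly increasing on `(0,1)`. -/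
lemma strictMono : StrictMonoOn (fun m => ellK m - 2 * ellE m) (Set.Ioo (0:ℝ) 1) := by
  intro a ha b hb hab
  simp only
  rw [keyF a ha.1.le ha.2, keyF b hb.1.le hb.2]
  have hpos : 0 < ∫ θ in (0:ℝ)..(π/2), (F b θ - F a θ) := by
    apply intervalIntegral.intervalIntegral_pos_of_pos_on
      ((intF hb.1.le hb.2).sub (intF ha.1.le ha.2))
    · intro θ hθ
      exact sub_pos.mpr (F_lt ha.1 hb.2 hab hθ)
    · positivity
  rw [intervalIntegral.integral_sub (intF hb.1.le hb.2) (intF ha.1.le ha.2)] at hpos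
  linarith

/-- `sinh π < 5π`. -/
lemma sinh_pi_lt : Real.sinh π < 5 * π := by
  have e1 : Real.exp 1 < 2.7182818286 := Real.exp_one_lt_d9
  have e0 : (0:ℝ) < Real.exp 1 := Real.exp_pos 1
  have h1 : Real.exp (1/4 : ℝ) ≤ 4/3 := by
    have h := Real.add_one_le_exp (-(1/4) : ℝ)
    rw [Real.exp_neg] at h
    have h3 : 0 < Real.exp (1/4 : ℝ) := Real.exp_pos _
    have h4 : (3/4 : ℝ) ≤ (Real.exp (1/4))⁻¹ := by linarith
    calc Real.exp (1/4 : ℝ) = ((Real.exp (1/4))⁻¹)⁻¹ := by rw [inv_inv]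
      _ ≤ (3/4 : ℝ)⁻¹ := inv_anti₀ (by norm_num) h4
      _ = 4/3 := by norm_num
  have hpi : π < 3.25 := by linarith [Real.pi_lt_d2]
  have h2 : Real.exp π < Real.exp (13/4 : ℝ) := Real.exp_lt_exp.mpr (by linarith)
  have h3 : Real.exp (13/4 : ℝ) = Real.exp 1 ^ 3 * Real.exp (1/4) := by
    rw [show (13/4 : ℝ) = 1 + (1 + (1 + 1/4)) by norm_num,
      Real.exp_add, Real.exp_add, Real.exp_add]; ring
  have hc : Real.exp 1 ^ 3 < 2.7182818286 ^ 3 := pow_lt_pow_left₀ e1 e0.le (by norm_num)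
  have h4 : Real.exp π < 2.7182818286^3 * (4/3) := by
    rw [h3] at h2
    nlinarith [Real.exp_pos (1/4 : ℝ), pow_pos e0 3]
  have h5 : Real.sinh π = (Real.exp π - Real.exp (-π))/2 := Real.sinh_eq π
  have h6 : 0 < Real.exp (-π) := Real.exp_pos _
  have hpi2 : (3.141592 : ℝ) < π := Real.pi_gt_d6
  rw [h5]; nlinarith

/-- Comparison function whose integral is `arsinh (5π)`. -/
noncomputable def G (θ : ℝ) : ℝ := (Real.sqrt (1/100 + (π/2 - θ)^2))⁻¹

lemma G_cont : Continuous G := by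
  apply Continuous.inv₀
  · exact (continuous_const.add ((continuous_const.sub continuous_id).pow 2)).sqrt
  · intro θ
    exact (Real.sqrt_pos.mpr (by positivity)).ne'

lemma G_deriv (θ : ℝ) :
    HasDerivAt (fun x => -Real.arsinh (5*π - 10*x)) (G θ) θ := by
  have h1 : HasDerivAt (fun x : ℝ => 5*π - 10*x) (-10) θ := by
    simpa using ((hasDerivAt_id θ).const_mul (10:ℝ)).const_sub (5*π)
  have h2 := (Real.hasDerivAt_arsinh (5*π - 10*θ)).comp θ h1
  have h3 : HasDerivAt (fun x => -Real.arsinh (5*π - 10*x))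
      (-((Real.sqrt (1 + (5*π - 10*θ)^2))⁻¹ * -10)) θ := h2.neg
  convert h3 using 1
  have key : 1 + (5*π - 10*θ)^2 = 100 * (1/100 + (π/2 - θ)^2) := by ring
  rw [G]
  rw [key, Real.sqrt_mul (by norm_num) _, show Real.sqrt 100 = 10 by
    rw [show (100:ℝ) = 10^2 by norm_num, Real.sqrt_sq (by norm_num)]]
  have hpos : 0 < Real.sqrt (1/100 + (π/2 - θ)^2) := Real.sqrt_pos.mpr (by positivity)
  field_simp

lemma G_integral : ∫ θ in (0:ℝ)..(π/2), G θ = Real.arsinh (5*π) := by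
  rw [intervalIntegral.integral_eq_sub_of_hasDerivAt (fun θ _ => G_deriv θ)
    (G_cont.intervalIntegrable _ _)]
  norm_num [Real.arsinh_zero]
  ring_nf

/-- The quadratic comparison for the integrand at `m₁ = 39601/40000`. -/
lemma quad_bound {θ : ℝ} (h0 : 0 ≤ θ) (h1 : θ ≤ π/2) :
    1 - (39601/40000 : ℝ) * Real.sin θ ^ 2 ≤ 1/100 + (π/2 - θ)^2 := by
  set t := π/2 - θ with ht
  have hsin : Real.sin θ = Real.cos t := by rw [ht, Real.cos_pi_div_two_sub]
  have hc : 1 - t^2/2 ≤ Real.cos t := Real.one_sub_sq_div_two_le_cos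
  have hc1 : Real.cos t ≤ 1 := Real.cos_le_one t
  have hc0 : 0 ≤ Real.cos t := by
    rw [← hsin]; exact Real.sin_nonneg_of_nonneg_of_le_pi h0 (by linarith [Real.pi_pos])
  rw [hsin]
  nlinarith [sq_nonneg t, sq_nonneg (Real.cos t)]

lemma m1_mem : (39601/40000 : ℝ) ∈ Set.Ioo (0:ℝ) 1 := by norm_num

/-- Lower bound: `K(m₁) ≥ arsinh (5π)`. -/
lemma K_lower : Real.arsinh (5*π) ≤ ellK (39601/40000) := by
  rw [← G_integral]
  apply intervalIntegral.integral_mono_on (by positivity)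
    (G_cont.intervalIntegrable _ _) (intK (by norm_num) (by norm_num))
  intro θ hθ
  have hpos : 0 < 1 - (39601/40000 : ℝ) * Real.sin θ ^ 2 :=
    arg_pos (by norm_num) (by norm_num)
  have hle := quad_bound hθ.1 hθ.2
  unfold G
  exact inv_anti₀ (Real.sqrt_pos.mpr hpos) (Real.sqrt_le_sqrt hle)

/-- Upper bound: `E(m) ≤ π/2` for `m ∈ [0,1)`. -/
lemma E_upper {m : ℝ} (hm0 : 0 ≤ m) (hm1 : m < 1) : ellE m ≤ π/2 := by
  have h : ∫ θ in (0:ℝ)..(π/2), (1:ℝ) = π/2 := by simp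
  calc ellE m ≤ ∫ θ in (0:ℝ)..(π/2), (1:ℝ) := by
        apply intervalIntegral.integral_mono_on (by positivity) (intE m)
          (intervalIntegrable_const)
        intro θ hθ
        exact Real.sqrt_le_one.mpr (by nlinarith [sq_nonneg (Real.sin θ)])
    _ = π/2 := h

/-- At `m₁`, `K - 2E > 0`. -/
lemma pos_at_m1 : 0 < ellK (39601/40000) - 2 * ellE (39601/40000) := by
  have h1 : π < Real.arsinh (5*π) := by
    have := Real.arsinh_lt_arsinh.mpr sinh_pi_lt
    rwa [Real.arsinh_sinh] at this
  have h2 := K_lower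
  have h3 := E_upper (m := 39601/40000) (by norm_num) (by norm_num)
  linarith

lemma inv_sqrt_lt {y : ℝ} (hy : 3/4 ≤ y) : (Real.sqrt y)⁻¹ < 2 * Real.sqrt y := by
  have hyp : (0:ℝ) < y := by linarith
  have hsp : 0 < Real.sqrt y := Real.sqrt_pos.mpr hyp
  have hsq : Real.sqrt y * Real.sqrt y = y := Real.mul_self_sqrt hyp.le
  rw [inv_eq_one_div, div_lt_iff₀ hsp]
  nlinarith

/-- At `m = 1/4`, `K - 2E < 0`. -/
lemma neg_at_quarter : ellK (1/4) - 2 * ellE (1/4) < 0 := by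
  rw [keyF _ (by norm_num) (by norm_num)]
  have hpos : 0 < ∫ θ in (0:ℝ)..(π/2), -(F (1/4) θ) := by
    apply intervalIntegral.intervalIntegral_pos_of_pos_on
      ((intF (by norm_num) (by norm_num)).neg)
    · intro θ hθ
      have hs1 : Real.sin θ ^ 2 ≤ 1 := Real.sin_sq_le_one θ
      simp only [Pi.neg_apply, F]
      rw [neg_sub, sub_pos]
      exact inv_sqrt_lt (by nlinarith [sq_nonneg (Real.sin θ)])
    · positivity
  rw [intervalIntegral.integral_neg] at hpos
  linarith

/-- Continuity of `m ↦ ∫ F m` on `[1/4, m₁]`. -/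
lemma contOn :
    ContinuousOn (fun m => ∫ θ in (0:ℝ)..(π/2), F m θ)
      (Set.Icc (1/4 : ℝ) (39601/40000)) := by
  intro x₀ hx₀
  have hmem : ∀ᶠ m in nhdsWithin x₀ (Set.Icc (1/4:ℝ) (39601/40000)),
      m ∈ Set.Icc (1/4:ℝ) (39601/40000) := eventually_mem_nhdsWithin
  apply intervalIntegral.continuousWithinAt_of_dominated_interval
    (bound := fun _ => (Real.sqrt (1 - 39601/40000 : ℝ))⁻¹ + 2)
  · filter_upwards [hmem] with m hm
    exact (contF (by linarith [hm.1]) (by linarith [hm.2] : m < 1)).aestronglyMeasurable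
  · filter_upwards [hmem] with m hm
    filter_upwards with θ _
    have hm1 : m < 1 := by linarith [hm.2]
    have hm0 : (0:ℝ) ≤ m := by linarith [hm.1]
    set x := 1 - m * Real.sin θ ^ 2 with hx
    have hxpos : 0 < x := arg_pos hm0 hm1
    have hxlb : (1 - 39601/40000 : ℝ) ≤ x := by
      have := Real.sin_sq_le_one θ
      have := sq_nonneg (Real.sin θ)
      nlinarith [hm.2]
    have hxub : x ≤ 1 := by nlinarith [sq_nonneg (Real.sin θ)]
    have hA : (Real.sqrt x)⁻¹ ≤ (Real.sqrt (1 - 39601/40000 : ℝ))⁻¹ :=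
      inv_anti₀ (Real.sqrt_pos.mpr (by norm_num)) (Real.sqrt_le_sqrt hxlb)
    have hB : Real.sqrt x ≤ 1 := Real.sqrt_le_one.mpr hxub
    have hA0 : 0 ≤ (Real.sqrt x)⁻¹ := by positivity
    have hB0 : 0 ≤ Real.sqrt x := Real.sqrt_nonneg x
    unfold F
    rw [Real.norm_eq_abs, abs_sub_comm]
    calc |2 * Real.sqrt x - (Real.sqrt x)⁻¹| ≤ 2 * Real.sqrt x + (Real.sqrt x)⁻¹ := by
          rw [abs_sub_le_iff]; constructor <;> nlinarith
      _ ≤ (Real.sqrt (1 - 39601/40000 : ℝ))⁻¹ + 2 := by nlinarith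
  · exact intervalIntegrable_const
  · filter_upwards with θ _
    have h0 : (0:ℝ) ≤ x₀ := by linarith [hx₀.1]
    have h1 : x₀ < 1 := by
      have := hx₀.2; norm_num at this ⊢; linarith
    have hg : Continuous fun m : ℝ => Real.sqrt (1 - m * Real.sin θ ^ 2) :=
      (continuous_const.sub (continuous_id.mul continuous_const)).sqrt
    have hne : Real.sqrt (1 - x₀ * Real.sin θ ^ 2) ≠ 0 :=
      (Real.sqrt_pos.mpr (arg_pos h0 h1)).ne'
    exact ((hg.continuousAt.inv₀ hne).sub (hg.continuousAt.const_mul 2)).continuousWithinAt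

end EllAux

/-- There is a unique `m ∈ (0,1)` with `K(m) = 2E(m)`, and `K - 2E` is strictly
increasing on `(0,1)`. -/
theorem exists_unique_mstar :
    (∃! m : ℝ, m ∈ Set.Ioo (0:ℝ) 1 ∧ ellK m = 2 * ellE m) ∧
    StrictMonoOn (fun m => ellK m - 2 * ellE m) (Set.Ioo (0:ℝ) 1) := by
  have hmono := EllAux.strictMono
  constructor
  · -- existence via IVT
    have hle : (1/4 : ℝ) ≤ 39601/40000 := by norm_num
    have hiv := intermediate_value_Icc hle EllAux.contOn
    have hmem : (0:ℝ) ∈ Set.Icc (∫ θ in (0:ℝ)..(π/2), EllAux.F (1/4) θ)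
        (∫ θ in (0:ℝ)..(π/2), EllAux.F (39601/40000) θ) := by
      constructor
      · have := EllAux.neg_at_quarter
        rw [EllAux.keyF _ (by norm_num) (by norm_num)] at this
        linarith
      · have := EllAux.pos_at_m1
        rw [EllAux.keyF _ (by norm_num) (by norm_num)] at this
        linarith
    obtain ⟨c, hc, hc0⟩ := hiv hmem
    have hc0' : (∫ θ in (0:ℝ)..(π/2), EllAux.F c θ) = 0 := hc0
    have hcIoo : c ∈ Set.Ioo (0:ℝ) 1 := by
      constructor
      · linarith [hc.1]
      · have := hc.2; norm_num at this ⊢; linarith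
    refine ⟨c, ⟨hcIoo, ?_⟩, ?_⟩
    · have := EllAux.keyF c hcIoo.1.le hcIoo.2
      rw [hc0'] at this
      linarith
    · rintro y ⟨hyIoo, hy⟩
      have hfy : ellK y - 2 * ellE y = 0 := by linarith
      have hfc : ellK c - 2 * ellE c = 0 := by
        have := EllAux.keyF c hcIoo.1.le hcIoo.2
        rw [hc0'] at this; linarith
      exact hmono.injOn hyIoo hcIoo (by rw [hfy, hfc])
  · exact hmono
end

section
/- If m ∈ (0,1) satisfies K(m) = 2E(m), then 0.75 < m < 0.85. -/
open Real MeasureTheory RealInnerProductSpace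

set_option maxHeartbeats 1600000

noncomputable def vK75 : ℕ → ℝ
  | 0 => (1)
  | 1 => (3/8)
  | 2 => (27/128)
  | 3 => (135/1024)
  | 4 => (2835/32768)
  | 5 => (15309/65536)
  | _ => 0

noncomputable def vE75 : ℕ → ℝ
  | 0 => (1)
  | 1 => (-3/8)
  | 2 => (-9/128)
  | 3 => (-27/1024)
  | 4 => (-405/32768)
  | 5 => (-1701/65536)
  | _ => 0

noncomputable def vK85 : ℕ → ℝ
  | 0 => (1)
  | 1 => (17/40)
  | 2 => (867/3200)
  | 3 => (4913/25600)
  | 4 => (584647/4096000)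
  | 5 => (89450991/819200000)
  | 6 => (5575778439/65536000000)
  | 7 => (176035290717/2621440000000)
  | 8 => (8977799826567/167772160000000)
  | 9 => (288287127764207/6710886400000000)
  | _ => 0

noncomputable def vE85 : ℕ → ℝ
  | 0 => (1)
  | 1 => (-17/40)
  | 2 => (-289/3200)
  | 3 => (-4913/128000)
  | 4 => (-83521/4096000)
  | 5 => (-9938999/819200000)
  | 6 => (-506888949/65536000000)
  | 7 => (-13541176209/2621440000000)
  | 8 => (-2992599942189/838860800000000)
  | 9 => (-16958066339071/6710886400000000)
  | _ => 0

lemma wallis_step (n : ℕ) : (∫ θ in (0:ℝ)..(Real.pi/2), Real.sin θ ^ (n+2))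
    = ((n:ℝ)+1)/((n:ℝ)+2) * ∫ θ in (0:ℝ)..(Real.pi/2), Real.sin θ ^ n := by
  rw [integral_sin_pow, Real.sin_zero, Real.cos_pi_div_two,
    zero_pow (by omega : n + 1 ≠ 0)]
  ring

lemma W0 : (∫ θ in (0:ℝ)..(Real.pi/2), Real.sin θ ^ 0) = Real.pi * (1/2) := by
  simp
  ring

lemma W2 : (∫ θ in (0:ℝ)..(Real.pi/2), Real.sin θ ^ 2) = Real.pi * (1/4) := by
  have h := wallis_step 0
  norm_num [W0] at h ⊢
  all_goals linarith

lemma W4 : (∫ θ in (0:ℝ)..(Real.pi/2), Real.sin θ ^ 4) = Real.pi * (3/16) := by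
  have h := wallis_step 2
  norm_num [W2] at h ⊢
  all_goals linarith

lemma W6 : (∫ θ in (0:ℝ)..(Real.pi/2), Real.sin θ ^ 6) = Real.pi * (5/32) := by
  have h := wallis_step 4
  norm_num [W4] at h ⊢
  all_goals linarith

lemma W8 : (∫ θ in (0:ℝ)..(Real.pi/2), Real.sin θ ^ 8) = Real.pi * (35/256) := by
  have h := wallis_step 6
  norm_num [W6] at h ⊢
  all_goals linarith

lemma W10 : (∫ θ in (0:ℝ)..(Real.pi/2), Real.sin θ ^ 10) = Real.pi * (63/512) := by
  have h := wallis_step 8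
  norm_num [W8] at h ⊢
  all_goals linarith

lemma W12 : (∫ θ in (0:ℝ)..(Real.pi/2), Real.sin θ ^ 12) = Real.pi * (231/2048) := by
  have h := wallis_step 10
  norm_num [W10] at h ⊢
  all_goals linarith

lemma W14 : (∫ θ in (0:ℝ)..(Real.pi/2), Real.sin θ ^ 14) = Real.pi * (429/4096) := by
  have h := wallis_step 12
  norm_num [W12] at h ⊢
  all_goals linarith

lemma W16 : (∫ θ in (0:ℝ)..(Real.pi/2), Real.sin θ ^ 16) = Real.pi * (6435/65536) := by
  have h := wallis_step 14
  norm_num [W14] at h ⊢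
  all_goals linarith

lemma W18 : (∫ θ in (0:ℝ)..(Real.pi/2), Real.sin θ ^ 18) = Real.pi * (12155/131072) := by
  have h := wallis_step 16
  norm_num [W16] at h ⊢
  all_goals linarith

lemma integral_sin_poly_eval (n : ℕ) (v : ℕ → ℝ) :
    (∫ θ in (0:ℝ)..(Real.pi/2), ∑ j ∈ Finset.range n, v j * Real.sin θ ^ (2*j))
      = ∑ j ∈ Finset.range n, v j * ∫ θ in (0:ℝ)..(Real.pi/2), Real.sin θ ^ (2*j) := by
  rw [intervalIntegral.integral_finset_sum (f := fun j θ => v j * Real.sin θ ^ (2*j))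
    (fun j _ => ((continuous_const.mul (Real.continuous_sin.pow (2*j))).intervalIntegrable _ _))]
  exact Finset.sum_congr rfl fun j _ => intervalIntegral.integral_const_mul _ _

lemma poly_integrable (n : ℕ) (v : ℕ → ℝ) :
    IntervalIntegrable (fun θ => ∑ j ∈ Finset.range n, v j * Real.sin θ ^ (2*j)) volume 0 (Real.pi/2) :=
  (continuous_finset_sum _ fun j _ => continuous_const.mul (Real.continuous_sin.pow (2*j))).intervalIntegrable _ _

lemma sqrt_term_pos (m : ℝ) (hm0 : 0 ≤ m) (hm : m < 1) (θ : ℝ) : 0 < 1 - m * Real.sin θ ^ 2 := by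
  nlinarith [Real.sin_sq_le_one θ, sq_nonneg (Real.sin θ), mul_nonneg hm0 (sub_nonneg.2 (Real.sin_sq_le_one θ))]

lemma K_integrable (m : ℝ) (hm0 : 0 ≤ m) (hm : m < 1) :
    IntervalIntegrable (fun θ => (Real.sqrt (1 - m * Real.sin θ ^ 2))⁻¹) volume 0 (Real.pi/2) := by
  apply Continuous.intervalIntegrable
  apply Continuous.inv₀
  · exact (continuous_const.sub (continuous_const.mul (Real.continuous_sin.pow 2))).sqrt
  · exact fun θ => ne_of_gt (Real.sqrt_pos.2 (sqrt_term_pos m hm0 hm θ))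

lemma E_integrable (m : ℝ) :
    IntervalIntegrable (fun θ => Real.sqrt (1 - m * Real.sin θ ^ 2)) volume 0 (Real.pi/2) :=
  ((continuous_const.sub (continuous_const.mul (Real.continuous_sin.pow 2))).sqrt).intervalIntegrable _ _

lemma keyK75 (m s : ℝ) (hs : s ^ 2 ≤ 1) (h0 : 0 ≤ m) (h1 : m ≤ 3/4) :
    (Real.sqrt (1 - m * s ^ 2))⁻¹ ≤ (1) + (3/8) * s ^ 2 + (27/128) * s ^ 4 + (135/1024) * s ^ 6 + (2835/32768) * s ^ 8 + (15309/65536) * s ^ 10 := by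
  have hs0 : (0:ℝ) ≤ s ^ 2 := sq_nonneg s
  have h1s : (0:ℝ) ≤ 1 - s ^ 2 := by linarith
  have hpos : (0:ℝ) < 1 - (3/4) * s ^ 2 := by nlinarith
  have hA : 1 - (3/4) * s ^ 2 ≤ 1 - m * s ^ 2 := by nlinarith
  have hy0 : 0 < Real.sqrt (1 - (3/4) * s ^ 2) := Real.sqrt_pos.2 hpos
  have hy2 : Real.sqrt (1 - (3/4) * s ^ 2) ^ 2 = 1 - (3/4) * s ^ 2 := Real.sq_sqrt hpos.le
  set U : ℝ := (1) + (3/8) * s ^ 2 + (27/128) * s ^ 4 + (135/1024) * s ^ 6 + (2835/32768) * s ^ 8 + (15309/65536) * s ^ 10 with hU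
  have hU0 : 0 < U := by rw [hU]; positivity
  have hkey : 1 ≤ (1 - (3/4) * s ^ 2) * U ^ 2 := by
    rw [hU]; ring_nf; linarith [mul_nonneg h1s (pow_nonneg hs0 3), mul_nonneg h1s (pow_nonneg hs0 4), mul_nonneg h1s (pow_nonneg hs0 5), mul_nonneg h1s (pow_nonneg hs0 6), mul_nonneg h1s (pow_nonneg hs0 7), mul_nonneg h1s (pow_nonneg hs0 8), mul_nonneg h1s (pow_nonneg hs0 9), mul_nonneg h1s (pow_nonneg hs0 10), pow_nonneg hs0 3, pow_nonneg hs0 4, pow_nonneg hs0 5, pow_nonneg hs0 6, pow_nonneg hs0 7, pow_nonneg hs0 8, pow_nonneg hs0 9, pow_nonneg hs0 10]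
  have hkey2 : 1 ≤ Real.sqrt (1 - (3/4) * s ^ 2) ^ 2 * U ^ 2 := by rw [hy2]; exact hkey
  have h1yU : 1 ≤ Real.sqrt (1 - (3/4) * s ^ 2) * U := by nlinarith [mul_pos hy0 hU0]
  have hinv : (Real.sqrt (1 - (3/4) * s ^ 2))⁻¹ ≤ U := by
    rw [inv_eq_one_div, div_le_iff₀ hy0]; linarith
  refine le_trans ?_ hinv
  have hmono := Real.sqrt_le_sqrt hA
  exact inv_anti₀ hy0 hmono

lemma keyE75 (m s : ℝ) (hs : s ^ 2 ≤ 1) (h0 : 0 ≤ m) (h1 : m ≤ 3/4) :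
    ((1) + (-3/8) * s ^ 2 + (-9/128) * s ^ 4 + (-27/1024) * s ^ 6 + (-405/32768) * s ^ 8 + (-1701/65536) * s ^ 10) ≤ Real.sqrt (1 - m * s ^ 2) := by
  have hs0 : (0:ℝ) ≤ s ^ 2 := sq_nonneg s
  have h1s : (0:ℝ) ≤ 1 - s ^ 2 := by linarith
  have hA : 1 - (3/4) * s ^ 2 ≤ 1 - m * s ^ 2 := by nlinarith
  set L : ℝ := (1) + (-3/8) * s ^ 2 + (-9/128) * s ^ 4 + (-27/1024) * s ^ 6 + (-405/32768) * s ^ 8 + (-1701/65536) * s ^ 10 with hL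
  have hL2 : L ^ 2 ≤ 1 - (3/4) * s ^ 2 := by
    rw [hL]; ring_nf; linarith [mul_nonneg h1s (pow_nonneg hs0 3), mul_nonneg h1s (pow_nonneg hs0 4), mul_nonneg h1s (pow_nonneg hs0 5), mul_nonneg h1s (pow_nonneg hs0 6), mul_nonneg h1s (pow_nonneg hs0 7), mul_nonneg h1s (pow_nonneg hs0 8), mul_nonneg h1s (pow_nonneg hs0 9), mul_nonneg h1s (pow_nonneg hs0 10), pow_nonneg hs0 3, pow_nonneg hs0 4, pow_nonneg hs0 5, pow_nonneg hs0 6, pow_nonneg hs0 7, pow_nonneg hs0 8, pow_nonneg hs0 9, pow_nonneg hs0 10]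
  calc L ≤ |L| := le_abs_self L
    _ = Real.sqrt (L ^ 2) := (Real.sqrt_sq_eq_abs L).symm
    _ ≤ Real.sqrt (1 - (3/4) * s ^ 2) := Real.sqrt_le_sqrt hL2
    _ ≤ Real.sqrt (1 - m * s ^ 2) := Real.sqrt_le_sqrt hA

lemma keyK85 (m s : ℝ) (hs : s ^ 2 ≤ 1) (h0 : 17/20 ≤ m) (h1 : m < 1) :
    ((1) + (17/40) * s ^ 2 + (867/3200) * s ^ 4 + (4913/25600) * s ^ 6 + (584647/4096000) * s ^ 8 + (89450991/819200000) * s ^ 10 + (5575778439/65536000000) * s ^ 12 + (176035290717/2621440000000) * s ^ 14 + (8977799826567/167772160000000) * s ^ 16 + (288287127764207/6710886400000000) * s ^ 18) ≤ (Real.sqrt (1 - m * s ^ 2))⁻¹ := by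
  have hs0 : (0:ℝ) ≤ s ^ 2 := sq_nonneg s
  have h1s : (0:ℝ) ≤ 1 - s ^ 2 := by linarith
  have hposm : (0:ℝ) < 1 - m * s ^ 2 := by nlinarith
  have hpos : (0:ℝ) < 1 - (17/20) * s ^ 2 := by nlinarith
  have hA : 1 - m * s ^ 2 ≤ 1 - (17/20) * s ^ 2 := by nlinarith
  have hz0 : 0 < Real.sqrt (1 - m * s ^ 2) := Real.sqrt_pos.2 hposm
  have hy0 : 0 < Real.sqrt (1 - (17/20) * s ^ 2) := Real.sqrt_pos.2 hpos
  have hy2 : Real.sqrt (1 - (17/20) * s ^ 2) ^ 2 = 1 - (17/20) * s ^ 2 := Real.sq_sqrt hpos.le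
  set S : ℝ := (1) + (17/40) * s ^ 2 + (867/3200) * s ^ 4 + (4913/25600) * s ^ 6 + (584647/4096000) * s ^ 8 + (89450991/819200000) * s ^ 10 + (5575778439/65536000000) * s ^ 12 + (176035290717/2621440000000) * s ^ 14 + (8977799826567/167772160000000) * s ^ 16 + (288287127764207/6710886400000000) * s ^ 18 with hS
  have hS0 : 0 < S := by rw [hS]; positivity
  have hkey : (1 - (17/20) * s ^ 2) * S ^ 2 ≤ 1 := by
    rw [hS]; ring_nf; linarith [pow_nonneg hs0 1, pow_nonneg hs0 2, pow_nonneg hs0 3, pow_nonneg hs0 4, pow_nonneg hs0 5, pow_nonneg hs0 6, pow_nonneg hs0 7, pow_nonneg hs0 8, pow_nonneg hs0 9, pow_nonneg hs0 10, pow_nonneg hs0 11, pow_nonneg hs0 12, pow_nonneg hs0 13, pow_nonneg hs0 14, pow_nonneg hs0 15, pow_nonneg hs0 16, pow_nonneg hs0 17, pow_nonneg hs0 18, pow_nonneg hs0 19, pow_nonneg hs0 20]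
  have hkey2 : Real.sqrt (1 - (17/20) * s ^ 2) ^ 2 * S ^ 2 ≤ 1 := by rw [hy2]; exact hkey
  have hyS : Real.sqrt (1 - (17/20) * s ^ 2) * S ≤ 1 := by
    nlinarith [mul_pos hy0 hS0, mul_nonneg hy0.le hS0.le]
  have hzS : S * Real.sqrt (1 - m * s ^ 2) ≤ 1 := by
    have hzy : Real.sqrt (1 - m * s ^ 2) ≤ Real.sqrt (1 - (17/20) * s ^ 2) := Real.sqrt_le_sqrt hA
    calc S * Real.sqrt (1 - m * s ^ 2) ≤ S * Real.sqrt (1 - (17/20) * s ^ 2) :=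
          mul_le_mul_of_nonneg_left hzy hS0.le
      _ = Real.sqrt (1 - (17/20) * s ^ 2) * S := mul_comm _ _
      _ ≤ 1 := hyS
  rw [inv_eq_one_div, le_div_iff₀ hz0]
  exact hzS

lemma keyE85 (m s : ℝ) (hs : s ^ 2 ≤ 1) (h0 : 17/20 ≤ m) :
    Real.sqrt (1 - m * s ^ 2) ≤ (1) + (-17/40) * s ^ 2 + (-289/3200) * s ^ 4 + (-4913/128000) * s ^ 6 + (-83521/4096000) * s ^ 8 + (-9938999/819200000) * s ^ 10 + (-506888949/65536000000) * s ^ 12 + (-13541176209/2621440000000) * s ^ 14 + (-2992599942189/838860800000000) * s ^ 16 + (-16958066339071/6710886400000000) * s ^ 18 := by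
  have hs0 : (0:ℝ) ≤ s ^ 2 := sq_nonneg s
  have h1s : (0:ℝ) ≤ 1 - s ^ 2 := by linarith
  have hA : 1 - m * s ^ 2 ≤ 1 - (17/20) * s ^ 2 := by nlinarith
  set T : ℝ := (1) + (-17/40) * s ^ 2 + (-289/3200) * s ^ 4 + (-4913/128000) * s ^ 6 + (-83521/4096000) * s ^ 8 + (-9938999/819200000) * s ^ 10 + (-506888949/65536000000) * s ^ 12 + (-13541176209/2621440000000) * s ^ 14 + (-2992599942189/838860800000000) * s ^ 16 + (-16958066339071/6710886400000000) * s ^ 18 with hT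
  have hT0 : 0 ≤ T := by rw [hT]; ring_nf; linarith [mul_nonneg h1s (pow_nonneg hs0 0), mul_nonneg h1s (pow_nonneg hs0 1), mul_nonneg h1s (pow_nonneg hs0 2), mul_nonneg h1s (pow_nonneg hs0 3), mul_nonneg h1s (pow_nonneg hs0 4), mul_nonneg h1s (pow_nonneg hs0 5), mul_nonneg h1s (pow_nonneg hs0 6), mul_nonneg h1s (pow_nonneg hs0 7), mul_nonneg h1s (pow_nonneg hs0 8), mul_nonneg h1s (pow_nonneg hs0 9)]
  have hT2 : 1 - (17/20) * s ^ 2 ≤ T ^ 2 := by rw [hT]; ring_nf; linarith [pow_nonneg hs0 1, pow_nonneg hs0 2, pow_nonneg hs0 3, pow_nonneg hs0 4, pow_nonneg hs0 5, pow_nonneg hs0 6, pow_nonneg hs0 7, pow_nonneg hs0 8, pow_nonneg hs0 9, pow_nonneg hs0 10, pow_nonneg hs0 11, pow_nonneg hs0 12, pow_nonneg hs0 13, pow_nonneg hs0 14, pow_nonneg hs0 15, pow_nonneg hs0 16, pow_nonneg hs0 17, pow_nonneg hs0 18, pow_nonneg hs0 19, pow_nonneg hs0 20]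
  calc Real.sqrt (1 - m * s ^ 2) ≤ Real.sqrt (1 - (17/20) * s ^ 2) := Real.sqrt_le_sqrt hA
    _ ≤ Real.sqrt (T ^ 2) := Real.sqrt_le_sqrt hT2
    _ = |T| := Real.sqrt_sq_eq_abs T
    _ = T := abs_of_nonneg hT0

lemma ellK_le75 (m : ℝ) (h0 : 0 ≤ m) (h1 : m ≤ 3/4) :
    ellK m ≤ Real.pi * (23302615/33554432) := by
  have hpoly : (∫ θ in (0:ℝ)..(Real.pi/2), ∑ j ∈ Finset.range 6, vK75 j * Real.sin θ ^ (2*j))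
      = Real.pi * (23302615/33554432) := by
    rw [integral_sin_poly_eval]
    simp [Finset.sum_range_succ, vK75, W0, W2, W4, W6, W8, W10]
    all_goals ring
  have hle : ∀ θ ∈ Set.Icc (0:ℝ) (Real.pi/2),
      (Real.sqrt (1 - m * Real.sin θ ^ 2))⁻¹ ≤ ∑ j ∈ Finset.range 6, vK75 j * Real.sin θ ^ (2*j) := by
    intro θ _
    have hkey := keyK75 m (Real.sin θ) (Real.sin_sq_le_one θ) h0 h1
    have hexp : (∑ j ∈ Finset.range 6, vK75 j * Real.sin θ ^ (2*j))
        = (1) + (3/8) * Real.sin θ ^ 2 + (27/128) * Real.sin θ ^ 4 + (135/1024) * Real.sin θ ^ 6 + (2835/32768) * Real.sin θ ^ 8 + (15309/65536) * Real.sin θ ^ 10 := by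
      simp [Finset.sum_range_succ, vK75]
      all_goals ring
    rw [hexp]
    exact hkey
  have hf : IntervalIntegrable (fun θ => (Real.sqrt (1 - m * Real.sin θ ^ 2))⁻¹) volume 0 (Real.pi/2) := K_integrable m (by linarith) (by linarith)
  have hg := poly_integrable 6 vK75
  have hab : (0:ℝ) ≤ Real.pi/2 := by positivity
  have h2 := intervalIntegral.integral_mono_on hab hf hg hle
  rw [hpoly] at h2
  exact h2

lemma ellE_ge75 (m : ℝ) (h0 : 0 ≤ m) (h1 : m ≤ 3/4) :
    ellE m ≥ Real.pi * (12887017/33554432) := by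
  have hpoly : (∫ θ in (0:ℝ)..(Real.pi/2), ∑ j ∈ Finset.range 6, vE75 j * Real.sin θ ^ (2*j))
      = Real.pi * (12887017/33554432) := by
    rw [integral_sin_poly_eval]
    simp [Finset.sum_range_succ, vE75, W0, W2, W4, W6, W8, W10]
    all_goals ring
  have hle : ∀ θ ∈ Set.Icc (0:ℝ) (Real.pi/2),
      (∑ j ∈ Finset.range 6, vE75 j * Real.sin θ ^ (2*j)) ≤ Real.sqrt (1 - m * Real.sin θ ^ 2) := by
    intro θ _
    have hkey := keyE75 m (Real.sin θ) (Real.sin_sq_le_one θ) h0 h1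
    have hexp : (∑ j ∈ Finset.range 6, vE75 j * Real.sin θ ^ (2*j))
        = (1) + (-3/8) * Real.sin θ ^ 2 + (-9/128) * Real.sin θ ^ 4 + (-27/1024) * Real.sin θ ^ 6 + (-405/32768) * Real.sin θ ^ 8 + (-1701/65536) * Real.sin θ ^ 10 := by
      simp [Finset.sum_range_succ, vE75]
      all_goals ring
    rw [hexp]
    exact hkey
  have hf : IntervalIntegrable (fun θ => Real.sqrt (1 - m * Real.sin θ ^ 2)) volume 0 (Real.pi/2) := E_integrable m
  have hg := poly_integrable 6 vE75
  have hab : (0:ℝ) ≤ Real.pi/2 := by positivity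
  have h2 := intervalIntegral.integral_mono_on hab hg hf hle
  rw [hpoly] at h2
  exact h2

lemma ellK_ge85 (m : ℝ) (h0 : 17/20 ≤ m) (h1 : m < 1) :
    ellK m ≥ Real.pi * (131212314406769096929/175921860444160000000) := by
  have hpoly : (∫ θ in (0:ℝ)..(Real.pi/2), ∑ j ∈ Finset.range 10, vK85 j * Real.sin θ ^ (2*j))
      = Real.pi * (131212314406769096929/175921860444160000000) := by
    rw [integral_sin_poly_eval]
    simp [Finset.sum_range_succ, vK85, W0, W2, W4, W6, W8, W10, W12, W14, W16, W18]
    all_goals ring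
  have hle : ∀ θ ∈ Set.Icc (0:ℝ) (Real.pi/2),
      (∑ j ∈ Finset.range 10, vK85 j * Real.sin θ ^ (2*j)) ≤ (Real.sqrt (1 - m * Real.sin θ ^ 2))⁻¹ := by
    intro θ _
    have hkey := keyK85 m (Real.sin θ) (Real.sin_sq_le_one θ) h0 h1
    have hexp : (∑ j ∈ Finset.range 10, vK85 j * Real.sin θ ^ (2*j))
        = (1) + (17/40) * Real.sin θ ^ 2 + (867/3200) * Real.sin θ ^ 4 + (4913/25600) * Real.sin θ ^ 6 + (584647/4096000) * Real.sin θ ^ 8 + (89450991/819200000) * Real.sin θ ^ 10 + (5575778439/65536000000) * Real.sin θ ^ 12 + (176035290717/2621440000000) * Real.sin θ ^ 14 + (8977799826567/167772160000000) * Real.sin θ ^ 16 + (288287127764207/6710886400000000) * Real.sin θ ^ 18 := by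
      simp [Finset.sum_range_succ, vK85]
      all_goals ring
    rw [hexp]
    exact hkey
  have hf : IntervalIntegrable (fun θ => (Real.sqrt (1 - m * Real.sin θ ^ 2))⁻¹) volume 0 (Real.pi/2) := K_integrable m (by linarith) (by linarith)
  have hg := poly_integrable 10 vK85
  have hab : (0:ℝ) ≤ Real.pi/2 := by positivity
  have h2 := intervalIntegral.integral_mono_on hab hg hf hle
  rw [hpoly] at h2
  exact h2

lemma ellE_le85 (m : ℝ) (h0 : 17/20 ≤ m) :
    ellE m ≤ Real.pi * (64130617811824448207/175921860444160000000) := by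
  have hpoly : (∫ θ in (0:ℝ)..(Real.pi/2), ∑ j ∈ Finset.range 10, vE85 j * Real.sin θ ^ (2*j))
      = Real.pi * (64130617811824448207/175921860444160000000) := by
    rw [integral_sin_poly_eval]
    simp [Finset.sum_range_succ, vE85, W0, W2, W4, W6, W8, W10, W12, W14, W16, W18]
    all_goals ring
  have hle : ∀ θ ∈ Set.Icc (0:ℝ) (Real.pi/2),
      Real.sqrt (1 - m * Real.sin θ ^ 2) ≤ ∑ j ∈ Finset.range 10, vE85 j * Real.sin θ ^ (2*j) := by
    intro θ _
    have hkey := keyE85 m (Real.sin θ) (Real.sin_sq_le_one θ) h0 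
    have hexp : (∑ j ∈ Finset.range 10, vE85 j * Real.sin θ ^ (2*j))
        = (1) + (-17/40) * Real.sin θ ^ 2 + (-289/3200) * Real.sin θ ^ 4 + (-4913/128000) * Real.sin θ ^ 6 + (-83521/4096000) * Real.sin θ ^ 8 + (-9938999/819200000) * Real.sin θ ^ 10 + (-506888949/65536000000) * Real.sin θ ^ 12 + (-13541176209/2621440000000) * Real.sin θ ^ 14 + (-2992599942189/838860800000000) * Real.sin θ ^ 16 + (-16958066339071/6710886400000000) * Real.sin θ ^ 18 := by
      simp [Finset.sum_range_succ, vE85]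
      all_goals ring
    rw [hexp]
    exact hkey
  have hf : IntervalIntegrable (fun θ => Real.sqrt (1 - m * Real.sin θ ^ 2)) volume 0 (Real.pi/2) := E_integrable m
  have hg := poly_integrable 10 vE85
  have hab : (0:ℝ) ≤ Real.pi/2 := by positivity
  have h2 := intervalIntegral.integral_mono_on hab hf hg hle
  rw [hpoly] at h2
  exact h2

/-- Bounds on the figure-eight parameter: `0.75 < m* < 0.85`. -/
theorem mstar_bounds (m : ℝ) (hm : m ∈ Set.Ioo (0:ℝ) 1) (hKE : ellK m = 2 * ellE m) :
    0.75 < m ∧ m < 0.85 := by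
  obtain ⟨hm0, hm1⟩ := hm
  have hpi := Real.pi_pos
  constructor
  · by_contra hc
    push_neg at hc
    have hc' : m ≤ 3/4 := by norm_num at hc ⊢; linarith
    have hK := ellK_le75 m hm0.le hc'
    have hE := ellE_ge75 m hm0.le hc'
    rw [hKE] at hK
    nlinarith
  · by_contra hc
    push_neg at hc
    have hc' : 17/20 ≤ m := by norm_num at hc ⊢; linarith
    have hK := ellK_ge85 m hc' hm1
    have hE := ellE_le85 m hc'
    rw [hKE] at hK
    nlinarith
end

section
/- Let m* ∈ (0,1) satisfy K(m*) = 2E(m*) and let φ* ∈ (0, π/2) be the unique angle with cos φ* = 2m* − 1. Then π/4 < φ* < π/3; equivalently, 1/2 < 2m* − 1 < 1/√2. -/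
open Real MeasureTheory RealInnerProductSpace

/-- The integrand of `K - 2E`. -/
noncomputable def figEll (m : ℝ) (θ : ℝ) : ℝ :=
  (Real.sqrt (1 - m * Real.sin θ ^ 2))⁻¹ - 2 * Real.sqrt (1 - m * Real.sin θ ^ 2)

lemma figEll_pos_arg {m : ℝ} (hm0 : 0 ≤ m) (hm1 : m < 1) (θ : ℝ) :
    0 < 1 - m * Real.sin θ ^ 2 := by
  nlinarith [Real.sin_sq_le_one θ, sq_nonneg (Real.sin θ)]

lemma figEll_cont {m : ℝ} (hm0 : 0 ≤ m) (hm1 : m < 1) : Continuous (figEll m) := by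
  have hc1 : Continuous (fun θ : ℝ => Real.sqrt (1 - m * Real.sin θ ^ 2)) :=
    (continuous_const.sub (continuous_const.mul (Real.continuous_sin.pow 2))).sqrt
  have hc2 : Continuous (fun θ : ℝ => (Real.sqrt (1 - m * Real.sin θ ^ 2))⁻¹) :=
    hc1.inv₀ fun θ => (Real.sqrt_pos.2 (figEll_pos_arg hm0 hm1 θ)).ne'
  exact hc2.sub (continuous_const.mul hc1)

lemma reprF {m : ℝ} (hm0 : 0 ≤ m) (hm1 : m < 1) :
    ellK m - 2 * ellE m = ∫ θ in (0:ℝ)..(π/2), figEll m θ := by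
  have hc1 : Continuous (fun θ : ℝ => Real.sqrt (1 - m * Real.sin θ ^ 2)) :=
    (continuous_const.sub (continuous_const.mul (Real.continuous_sin.pow 2))).sqrt
  have hc2 : Continuous (fun θ : ℝ => (Real.sqrt (1 - m * Real.sin θ ^ 2))⁻¹) :=
    hc1.inv₀ fun θ => (Real.sqrt_pos.2 (figEll_pos_arg hm0 hm1 θ)).ne'
  rw [ellK, ellE, ← intervalIntegral.integral_const_mul,
    ← intervalIntegral.integral_sub (g := fun θ => 2 * Real.sqrt (1 - m * Real.sin θ ^ 2)) (hc2.intervalIntegrable _ _)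
      ((continuous_const.mul hc1).intervalIntegrable _ _)]
  rfl

lemma figEll_mono {m1 m2 : ℝ} (h0 : 0 ≤ m1) (h12 : m1 ≤ m2) (h2 : m2 < 1) (θ : ℝ) :
    figEll m1 θ ≤ figEll m2 θ := by
  have hx : 0 ≤ Real.sin θ ^ 2 := sq_nonneg _
  have hx1 : Real.sin θ ^ 2 ≤ 1 := Real.sin_sq_le_one θ
  have hp2 : 0 < 1 - m2 * Real.sin θ ^ 2 := figEll_pos_arg (h0.trans h12) h2 θ
  have hp1 : 0 < 1 - m1 * Real.sin θ ^ 2 := figEll_pos_arg h0 (lt_of_le_of_lt h12 h2) θ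
  have hle : Real.sqrt (1 - m2 * Real.sin θ ^ 2) ≤ Real.sqrt (1 - m1 * Real.sin θ ^ 2) :=
    Real.sqrt_le_sqrt (by nlinarith)
  have h2p : 0 < Real.sqrt (1 - m2 * Real.sin θ ^ 2) := Real.sqrt_pos.2 hp2
  have hinv : (Real.sqrt (1 - m1 * Real.sin θ ^ 2))⁻¹ ≤ (Real.sqrt (1 - m2 * Real.sin θ ^ 2))⁻¹ :=
    inv_anti₀ h2p hle
  simp only [figEll]
  linarith

lemma Fdiff_mono {m1 m2 : ℝ} (h0 : 0 ≤ m1) (h12 : m1 ≤ m2) (h2 : m2 < 1) :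
    ellK m1 - 2 * ellE m1 ≤ ellK m2 - 2 * ellE m2 := by
  rw [reprF h0 (lt_of_le_of_lt h12 h2), reprF (h0.trans h12) h2]
  apply intervalIntegral.integral_mono_on (by linarith [Real.pi_pos])
    ((figEll_cont h0 (lt_of_le_of_lt h12 h2)).intervalIntegrable _ _)
    ((figEll_cont (h0.trans h12) h2).intervalIntegrable _ _)
  exact fun θ _ => figEll_mono h0 h12 h2 θ

lemma sinsq_mono {a b : ℝ} (h0 : 0 ≤ a) (hab : a ≤ b) (hb : b ≤ π/2) :
    Real.sin a ^ 2 ≤ Real.sin b ^ 2 := by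
  have hpi := Real.pi_pos
  have h1 : 0 ≤ Real.sin a := Real.sin_nonneg_of_nonneg_of_le_pi h0 (by linarith)
  have h2 : Real.sin a ≤ Real.sin b :=
    Real.strictMonoOn_sin.monotoneOn ⟨by linarith, by linarith⟩ ⟨by linarith, hb⟩ hab
  exact pow_le_pow_left₀ h1 h2 2

lemma lin_int (c d a b : ℝ) :
    ∫ θ in a..b, (c + d * Real.sin θ ^ 2)
      = c * (b - a) + d * ((Real.sin a * Real.cos a - Real.sin b * Real.cos b + b - a) / 2) := by
  rw [intervalIntegral.integral_add (g := fun θ => d * Real.sin θ ^ 2) (intervalIntegrable_const)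
      ((continuous_const.mul (Real.continuous_sin.pow 2)).intervalIntegrable _ _),
    intervalIntegral.integral_const, intervalIntegral.integral_const_mul, integral_sin_sq,
    smul_eq_mul]
  ring

lemma segA0 (x : ℝ) (hx1 : (0:ℝ) ≤ x) (hx2 : x ≤ (67/1000:ℝ)) : (Real.sqrt (1 - (3/4)*x))⁻¹ - 2*Real.sqrt (1 - (3/4)*x) ≤ (-9997/10000:ℝ) + (5747/5000)*x := by
  have hpos : (0:ℝ) < 1 - (3/4)*x := by linarith
  set s := Real.sqrt (1 - (3/4)*x) with hsdef
  have hs0 : 0 < s := Real.sqrt_pos.2 hpos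
  have hs : s^2 = 1 - (3/4)*x := Real.sq_sqrt hpos.le
  have key : 1 - 2*s^2 ≤ ((-9997/10000:ℝ) + (5747/5000)*x)*s := by
    have hl : (1949/2000:ℝ) ≤ s := by nlinarith
    have hu : s ≤ (1:ℝ) := by nlinarith
    nlinarith [mul_nonneg (mul_nonneg (sub_nonneg.2 hl) (sub_nonneg.2 hu)) hs0.le, sq_nonneg (s - 3949/4000), mul_nonneg (sub_nonneg.2 hl) (sub_nonneg.2 hu), sq_nonneg (s - 1949/2000), sq_nonneg (1 - s)]
  have hrw : s⁻¹ - 2*s = (1 - 2*s^2)/s := by field_simp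
  rw [hrw, div_le_iff₀ hs0]
  exact key

lemma segA1 (x : ℝ) (hx1 : (33/500:ℝ) ≤ x) (hx2 : x ≤ (1/4:ℝ)) : (Real.sqrt (1 - (3/4)*x))⁻¹ - 2*Real.sqrt (1 - (3/4)*x) ≤ (-5033/5000:ℝ) + (12543/10000)*x := by
  have hpos : (0:ℝ) < 1 - (3/4)*x := by linarith
  set s := Real.sqrt (1 - (3/4)*x) with hsdef
  have hs0 : 0 < s := Real.sqrt_pos.2 hpos
  have hs : s^2 = 1 - (3/4)*x := Real.sq_sqrt hpos.le
  have key : 1 - 2*s^2 ≤ ((-5033/5000:ℝ) + (12543/10000)*x)*s := by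
    have hl : (9013/10000:ℝ) ≤ s := by nlinarith
    have hu : s ≤ (39/40:ℝ) := by nlinarith
    nlinarith [mul_nonneg (mul_nonneg (sub_nonneg.2 hl) (sub_nonneg.2 hu)) hs0.le, sq_nonneg (s - 18763/20000), mul_nonneg (sub_nonneg.2 hl) (sub_nonneg.2 hu), sq_nonneg (s - 9013/10000), sq_nonneg (39/40 - s)]
  have hrw : s⁻¹ - 2*s = (1 - 2*s^2)/s := by field_simp
  rw [hrw, div_le_iff₀ hs0]
  exact key

lemma segA2 (x : ℝ) (hx1 : (1/4:ℝ) ≤ x) (hx2 : x ≤ (1/2:ℝ)) : (Real.sqrt (1 - (3/4)*x))⁻¹ - 2*Real.sqrt (1 - (3/4)*x) ≤ (-5351/5000:ℝ) + (7543/5000)*x := by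
  have hpos : (0:ℝ) < 1 - (3/4)*x := by linarith
  set s := Real.sqrt (1 - (3/4)*x) with hsdef
  have hs0 : 0 < s := Real.sqrt_pos.2 hpos
  have hs : s^2 = 1 - (3/4)*x := Real.sq_sqrt hpos.le
  have key : 1 - 2*s^2 ≤ ((-5351/5000:ℝ) + (7543/5000)*x)*s := by
    have hl : (1581/2000:ℝ) ≤ s := by nlinarith
    have hu : s ≤ (4507/5000:ℝ) := by nlinarith
    nlinarith [mul_nonneg (mul_nonneg (sub_nonneg.2 hl) (sub_nonneg.2 hu)) hs0.le, sq_nonneg (s - 16919/20000), mul_nonneg (sub_nonneg.2 hl) (sub_nonneg.2 hu), sq_nonneg (s - 1581/2000), sq_nonneg (4507/5000 - s)]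
  have hrw : s⁻¹ - 2*s = (1 - 2*s^2)/s := by field_simp
  rw [hrw, div_le_iff₀ hs0]
  exact key

lemma segA3 (x : ℝ) (hx1 : (1/2:ℝ) ≤ x) (hx2 : x ≤ (3/4:ℝ)) : (Real.sqrt (1 - (3/4)*x))⁻¹ - 2*Real.sqrt (1 - (3/4)*x) ≤ (-13263/10000:ℝ) + (1263/625)*x := by
  have hpos : (0:ℝ) < 1 - (3/4)*x := by linarith
  set s := Real.sqrt (1 - (3/4)*x) with hsdef
  have hs0 : 0 < s := Real.sqrt_pos.2 hpos
  have hs : s^2 = 1 - (3/4)*x := Real.sq_sqrt hpos.le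
  have key : 1 - 2*s^2 ≤ ((-13263/10000:ℝ) + (1263/625)*x)*s := by
    have hl : (3307/5000:ℝ) ≤ s := by nlinarith
    have hu : s ≤ (3953/5000:ℝ) := by nlinarith
    nlinarith [mul_nonneg (mul_nonneg (sub_nonneg.2 hl) (sub_nonneg.2 hu)) hs0.le, sq_nonneg (s - 363/500), mul_nonneg (sub_nonneg.2 hl) (sub_nonneg.2 hu), sq_nonneg (s - 3307/5000), sq_nonneg (3953/5000 - s)]
  have hrw : s⁻¹ - 2*s = (1 - 2*s^2)/s := by field_simp
  rw [hrw, div_le_iff₀ hs0]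
  exact key

lemma segA4 (x : ℝ) (hx1 : (3/4:ℝ) ≤ x) (hx2 : x ≤ (46651/50000:ℝ)) : (Real.sqrt (1 - (3/4)*x))⁻¹ - 2*Real.sqrt (1 - (3/4)*x) ≤ (-20243/10000:ℝ) + (14757/5000)*x := by
  have hpos : (0:ℝ) < 1 - (3/4)*x := by linarith
  set s := Real.sqrt (1 - (3/4)*x) with hsdef
  have hs0 : 0 < s := Real.sqrt_pos.2 hpos
  have hs : s^2 = 1 - (3/4)*x := Real.sq_sqrt hpos.le
  have key : 1 - 2*s^2 ≤ ((-20243/10000:ℝ) + (14757/5000)*x)*s := by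
    have hl : (5479/10000:ℝ) ≤ s := by nlinarith
    have hu : s ≤ (1323/2000:ℝ) := by nlinarith
    nlinarith [mul_nonneg (mul_nonneg (sub_nonneg.2 hl) (sub_nonneg.2 hu)) hs0.le, sq_nonneg (s - 6047/10000), mul_nonneg (sub_nonneg.2 hl) (sub_nonneg.2 hu), sq_nonneg (s - 5479/10000), sq_nonneg (1323/2000 - s)]
  have hrw : s⁻¹ - 2*s = (1 - 2*s^2)/s := by field_simp
  rw [hrw, div_le_iff₀ hs0]
  exact key

lemma segA5 (x : ℝ) (hx1 : (93301/100000:ℝ) ≤ x) (hx2 : x ≤ (1:ℝ)) : (Real.sqrt (1 - (3/4)*x))⁻¹ - 2*Real.sqrt (1 - (3/4)*x) ≤ (-30433/10000:ℝ) + (10109/2500)*x := by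
  have hpos : (0:ℝ) < 1 - (3/4)*x := by linarith
  set s := Real.sqrt (1 - (3/4)*x) with hsdef
  have hs0 : 0 < s := Real.sqrt_pos.2 hpos
  have hs : s^2 = 1 - (3/4)*x := Real.sq_sqrt hpos.le
  have key : 1 - 2*s^2 ≤ ((-30433/10000:ℝ) + (10109/2500)*x)*s := by
    have hl : (1/2:ℝ) ≤ s := by nlinarith
    have hu : s ≤ (137/250:ℝ) := by nlinarith
    nlinarith [mul_nonneg (mul_nonneg (sub_nonneg.2 hl) (sub_nonneg.2 hu)) hs0.le, sq_nonneg (s - 131/250), mul_nonneg (sub_nonneg.2 hl) (sub_nonneg.2 hu), sq_nonneg (s - 1/2), sq_nonneg (137/250 - s)]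
  have hrw : s⁻¹ - 2*s = (1 - 2*s^2)/s := by field_simp
  rw [hrw, div_le_iff₀ hs0]
  exact key

lemma segB0 (x : ℝ) (hx1 : (0:ℝ) ≤ x) (hx2 : x ≤ (67/1000:ℝ)) : (-1251/1250:ℝ) + (13117/10000)*x ≤ (Real.sqrt (1 - (1707/2000)*x))⁻¹ - 2*Real.sqrt (1 - (1707/2000)*x) := by
  have hpos : (0:ℝ) < 1 - (1707/2000)*x := by linarith
  set s := Real.sqrt (1 - (1707/2000)*x) with hsdef
  have hs0 : 0 < s := Real.sqrt_pos.2 hpos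
  have hs : s^2 = 1 - (1707/2000)*x := Real.sq_sqrt hpos.le
  have key : ((-1251/1250:ℝ) + (13117/10000)*x)*s ≤ 1 - 2*s^2 := by
    nlinarith [sq_nonneg (s - 616/625), mul_nonneg (sq_nonneg (s - 616/625)) hs0.le]
  have hrw : s⁻¹ - 2*s = (1 - 2*s^2)/s := by field_simp
  rw [hrw, le_div_iff₀ hs0]
  exact key

lemma segB1 (x : ℝ) (hx1 : (33/500:ℝ) ≤ x) (hx2 : x ≤ (1/4:ℝ)) : (-5071/5000:ℝ) + (14479/10000)*x ≤ (Real.sqrt (1 - (1707/2000)*x))⁻¹ - 2*Real.sqrt (1 - (1707/2000)*x) := by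
  have hpos : (0:ℝ) < 1 - (1707/2000)*x := by linarith
  set s := Real.sqrt (1 - (1707/2000)*x) with hsdef
  have hs0 : 0 < s := Real.sqrt_pos.2 hpos
  have hs : s^2 = 1 - (1707/2000)*x := Real.sq_sqrt hpos.le
  have key : ((-5071/5000:ℝ) + (14479/10000)*x)*s ≤ 1 - 2*s^2 := by
    nlinarith [sq_nonneg (s - 9301/10000), mul_nonneg (sq_nonneg (s - 9301/10000)) hs0.le]
  have hrw : s⁻¹ - 2*s = (1 - 2*s^2)/s := by field_simp
  rw [hrw, le_div_iff₀ hs0]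
  exact key

lemma segB2 (x : ℝ) (hx1 : (1/4:ℝ) ≤ x) (hx2 : x ≤ (1/2:ℝ)) : (-11103/10000:ℝ) + (8981/5000)*x ≤ (Real.sqrt (1 - (1707/2000)*x))⁻¹ - 2*Real.sqrt (1 - (1707/2000)*x) := by
  have hpos : (0:ℝ) < 1 - (1707/2000)*x := by linarith
  set s := Real.sqrt (1 - (1707/2000)*x) with hsdef
  have hs0 : 0 < s := Real.sqrt_pos.2 hpos
  have hs : s^2 = 1 - (1707/2000)*x := Real.sq_sqrt hpos.le
  have key : ((-11103/10000:ℝ) + (8981/5000)*x)*s ≤ 1 - 2*s^2 := by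
    nlinarith [sq_nonneg (s - 4123/5000), mul_nonneg (sq_nonneg (s - 4123/5000)) hs0.le]
  have hrw : s⁻¹ - 2*s = (1 - 2*s^2)/s := by field_simp
  rw [hrw, le_div_iff₀ hs0]
  exact key

lemma segB3 (x : ℝ) (hx1 : (1/2:ℝ) ≤ x) (hx2 : x ≤ (3/4:ℝ)) : (-15203/10000:ℝ) + (12943/5000)*x ≤ (Real.sqrt (1 - (1707/2000)*x))⁻¹ - 2*Real.sqrt (1 - (1707/2000)*x) := by
  have hpos : (0:ℝ) < 1 - (1707/2000)*x := by linarith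
  set s := Real.sqrt (1 - (1707/2000)*x) with hsdef
  have hs0 : 0 < s := Real.sqrt_pos.2 hpos
  have hs : s^2 = 1 - (1707/2000)*x := Real.sq_sqrt hpos.le
  have key : ((-15203/10000:ℝ) + (12943/5000)*x)*s ≤ 1 - 2*s^2 := by
    nlinarith [sq_nonneg (s - 683/1000), mul_nonneg (sq_nonneg (s - 683/1000)) hs0.le]
  have hrw : s⁻¹ - 2*s = (1 - 2*s^2)/s := by field_simp
  rw [hrw, le_div_iff₀ hs0]
  exact key

lemma segB4 (x : ℝ) (hx1 : (3/4:ℝ) ≤ x) (hx2 : x ≤ (46651/50000:ℝ)) : (-29321/10000:ℝ) + (44611/10000)*x ≤ (Real.sqrt (1 - (1707/2000)*x))⁻¹ - 2*Real.sqrt (1 - (1707/2000)*x) := by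
  have hpos : (0:ℝ) < 1 - (1707/2000)*x := by linarith
  set s := Real.sqrt (1 - (1707/2000)*x) with hsdef
  have hs0 : 0 < s := Real.sqrt_pos.2 hpos
  have hs : s^2 = 1 - (1707/2000)*x := Real.sq_sqrt hpos.le
  have key : ((-29321/10000:ℝ) + (44611/10000)*x)*s ≤ 1 - 2*s^2 := by
    nlinarith [sq_nonneg (s - 1327/2500), mul_nonneg (sq_nonneg (s - 1327/2500)) hs0.le]
  have hrw : s⁻¹ - 2*s = (1 - 2*s^2)/s := by field_simp
  rw [hrw, le_div_iff₀ hs0]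
  exact key

lemma segB5 (x : ℝ) (hx1 : (93301/100000:ℝ) ≤ x) (hx2 : x ≤ (1:ℝ)) : (-12097/2000:ℝ) + (39323/5000)*x ≤ (Real.sqrt (1 - (1707/2000)*x))⁻¹ - 2*Real.sqrt (1 - (1707/2000)*x) := by
  have hpos : (0:ℝ) < 1 - (1707/2000)*x := by linarith
  set s := Real.sqrt (1 - (1707/2000)*x) with hsdef
  have hs0 : 0 < s := Real.sqrt_pos.2 hpos
  have hs : s^2 = 1 - (1707/2000)*x := Real.sq_sqrt hpos.le
  have key : ((-12097/2000:ℝ) + (39323/5000)*x)*s ≤ 1 - 2*s^2 := by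
    nlinarith [sq_nonneg (s - 523/1250), mul_nonneg (sq_nonneg (s - 523/1250)) hs0.le]
  have hrw : s⁻¹ - 2*s = (1 - 2*s^2)/s := by field_simp
  rw [hrw, le_div_iff₀ hs0]
  exact key

set_option maxHeartbeats 2000000 in
lemma lemA : ellK (3/4) - 2 * ellE (3/4) < 0 := by
  have hpi := Real.pi_pos
  have hs3 : Real.sqrt 3 ^ 2 = 3 := Real.sq_sqrt (by norm_num)
  have hs3n : (0:ℝ) ≤ Real.sqrt 3 := Real.sqrt_nonneg 3
  have h3l : (1.7320508:ℝ) < Real.sqrt 3 := by nlinarith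
  have h3u : Real.sqrt 3 < 1.7320509 := by nlinarith
  have hv0 : Real.sin 0 * Real.cos 0 = 0 := by simp
  have hv6 : Real.sin (π/2) * Real.cos (π/2) = 0 := by simp
  have hv1 : Real.sin (π/12) * Real.cos (π/12) = 1/4 := by
    have h := Real.sin_two_mul (π/12)
    rw [show 2*(π/12) = π/6 by ring, Real.sin_pi_div_six] at h
    linarith
  have hv2 : Real.sin (π/6) * Real.cos (π/6) = Real.sqrt 3 / 4 := by
    rw [Real.sin_pi_div_six, Real.cos_pi_div_six]; ring
  have hv3 : Real.sin (π/4) * Real.cos (π/4) = 1/2 := by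
    rw [Real.sin_pi_div_four, Real.cos_pi_div_four, div_mul_div_comm,
      Real.mul_self_sqrt (by norm_num : (0:ℝ) ≤ 2)]
    norm_num
  have hv4 : Real.sin (π/3) * Real.cos (π/3) = Real.sqrt 3 / 4 := by
    rw [Real.sin_pi_div_three, Real.cos_pi_div_three]; ring
  have hv5 : Real.sin (5*π/12) * Real.cos (5*π/12) = 1/4 := by
    have h := Real.sin_two_mul (5*π/12)
    rw [show 2*(5*π/12) = π - π/6 by ring, Real.sin_pi_sub, Real.sin_pi_div_six] at h
    linarith
  have hq1 : Real.sin (π/12)^2 = 1/2 - Real.sqrt 3 / 4 := by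
    have h := Real.sin_sq_eq_half_sub (π/12)
    rw [show 2*(π/12) = π/6 by ring, Real.cos_pi_div_six] at h
    linarith
  have hq2 : Real.sin (π/6)^2 = 1/4 := by rw [Real.sin_pi_div_six]; norm_num
  have hq3 : Real.sin (π/4)^2 = 1/2 := by
    rw [Real.sin_pi_div_four, div_pow, Real.sq_sqrt (by norm_num : (0:ℝ) ≤ 2)]; norm_num
  have hq4 : Real.sin (π/3)^2 = 3/4 := by
    rw [Real.sin_pi_div_three, div_pow, hs3]; norm_num
  have hq5 : Real.sin (5*π/12)^2 = 1/2 + Real.sqrt 3 / 4 := by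
    have h := Real.sin_sq_eq_half_sub (5*π/12)
    rw [show 2*(5*π/12) = π - π/6 by ring, Real.cos_pi_sub, Real.cos_pi_div_six] at h
    linarith
  have hq6 : Real.sin (π/2)^2 = 1 := by rw [Real.sin_pi_div_two]; norm_num
  have hm0 : (0:ℝ) ≤ (3/4) := by norm_num
  have hm1 : (3/4:ℝ) < 1 := by norm_num
  have hc := figEll_cont hm0 hm1
  have hInt : ∀ a b : ℝ, IntervalIntegrable (figEll (3/4)) volume a b :=
    fun a b => hc.intervalIntegrable a b
  have hIntL : ∀ (c d a b : ℝ), IntervalIntegrable (fun θ => c + d*Real.sin θ^2) volume a b :=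
    fun c d a b => (continuous_const.add (continuous_const.mul (Real.continuous_sin.pow 2))).intervalIntegrable a b
  have hrepr := reprF hm0 hm1
  have E1 : (∫ θ in (0:ℝ)..(π/2), figEll (3/4) θ)
      = (∫ θ in (0:ℝ)..(π/12), figEll (3/4) θ) + ∫ θ in (π/12)..(π/2), figEll (3/4) θ :=
    (intervalIntegral.integral_add_adjacent_intervals (hInt _ _) (hInt _ _)).symm
  have E2 : (∫ θ in (π/12)..(π/2), figEll (3/4) θ)
      = (∫ θ in (π/12)..(π/6), figEll (3/4) θ) + ∫ θ in (π/6)..(π/2), figEll (3/4) θ :=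
    (intervalIntegral.integral_add_adjacent_intervals (hInt _ _) (hInt _ _)).symm
  have E3 : (∫ θ in (π/6)..(π/2), figEll (3/4) θ)
      = (∫ θ in (π/6)..(π/4), figEll (3/4) θ) + ∫ θ in (π/4)..(π/2), figEll (3/4) θ :=
    (intervalIntegral.integral_add_adjacent_intervals (hInt _ _) (hInt _ _)).symm
  have E4 : (∫ θ in (π/4)..(π/2), figEll (3/4) θ)
      = (∫ θ in (π/4)..(π/3), figEll (3/4) θ) + ∫ θ in (π/3)..(π/2), figEll (3/4) θ :=
    (intervalIntegral.integral_add_adjacent_intervals (hInt _ _) (hInt _ _)).symm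
  have E5 : (∫ θ in (π/3)..(π/2), figEll (3/4) θ)
      = (∫ θ in (π/3)..(5*π/12), figEll (3/4) θ) + ∫ θ in (5*π/12)..(π/2), figEll (3/4) θ :=
    (intervalIntegral.integral_add_adjacent_intervals (hInt _ _) (hInt _ _)).symm
  have S0 : (∫ θ in (0:ℝ)..(π/12), figEll (3/4) θ) ≤ ((-9997/10000:ℝ)) * ((π/12) - (0:ℝ)) + ((5747/5000:ℝ)) * ((Real.sin (0:ℝ) * Real.cos (0:ℝ) - Real.sin (π/12) * Real.cos (π/12) + (π/12) - (0:ℝ)) / 2) := by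
    refine le_trans (intervalIntegral.integral_mono_on (by linarith) (hInt _ _) (hIntL _ _ _ _) ?_) (le_of_eq (lin_int (-9997/10000) (5747/5000) (0:ℝ) (π/12)))
    intro θ hθ
    obtain ⟨ht1, ht2⟩ := hθ
    have hx1 : ((0:ℝ)) ≤ Real.sin θ^2 := sq_nonneg _
    have hx2 : Real.sin θ^2 ≤ ((67/1000:ℝ)) := by
      have := sinsq_mono (show (0:ℝ) ≤ θ by linarith) ht2 (show (π/12) ≤ π/2 by linarith)
      linarith [hq1]
    show figEll (3/4) θ ≤ (-9997/10000:ℝ) + (5747/5000)*Real.sin θ^2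
    simp only [figEll]
    exact segA0 (Real.sin θ^2) hx1 hx2
  have S1 : (∫ θ in (π/12)..(π/6), figEll (3/4) θ) ≤ ((-5033/5000:ℝ)) * ((π/6) - (π/12)) + ((12543/10000:ℝ)) * ((Real.sin (π/12) * Real.cos (π/12) - Real.sin (π/6) * Real.cos (π/6) + (π/6) - (π/12)) / 2) := by
    refine le_trans (intervalIntegral.integral_mono_on (by linarith) (hInt _ _) (hIntL _ _ _ _) ?_) (le_of_eq (lin_int (-5033/5000) (12543/10000) (π/12) (π/6)))
    intro θ hθ
    obtain ⟨ht1, ht2⟩ := hθ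
    have hx1 : ((33/500:ℝ)) ≤ Real.sin θ^2 := by
      have := sinsq_mono (show (0:ℝ) ≤ (π/12) by linarith) ht1 (show θ ≤ π/2 by linarith)
      linarith [hq1]
    have hx2 : Real.sin θ^2 ≤ ((1/4:ℝ)) := by
      have := sinsq_mono (show (0:ℝ) ≤ θ by linarith) ht2 (show (π/6) ≤ π/2 by linarith)
      linarith [hq2]
    show figEll (3/4) θ ≤ (-5033/5000:ℝ) + (12543/10000)*Real.sin θ^2
    simp only [figEll]
    exact segA1 (Real.sin θ^2) hx1 hx2
  have S2 : (∫ θ in (π/6)..(π/4), figEll (3/4) θ) ≤ ((-5351/5000:ℝ)) * ((π/4) - (π/6)) + ((7543/5000:ℝ)) * ((Real.sin (π/6) * Real.cos (π/6) - Real.sin (π/4) * Real.cos (π/4) + (π/4) - (π/6)) / 2) := by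
    refine le_trans (intervalIntegral.integral_mono_on (by linarith) (hInt _ _) (hIntL _ _ _ _) ?_) (le_of_eq (lin_int (-5351/5000) (7543/5000) (π/6) (π/4)))
    intro θ hθ
    obtain ⟨ht1, ht2⟩ := hθ
    have hx1 : ((1/4:ℝ)) ≤ Real.sin θ^2 := by
      have := sinsq_mono (show (0:ℝ) ≤ (π/6) by linarith) ht1 (show θ ≤ π/2 by linarith)
      linarith [hq2]
    have hx2 : Real.sin θ^2 ≤ ((1/2:ℝ)) := by
      have := sinsq_mono (show (0:ℝ) ≤ θ by linarith) ht2 (show (π/4) ≤ π/2 by linarith)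
      linarith [hq3]
    show figEll (3/4) θ ≤ (-5351/5000:ℝ) + (7543/5000)*Real.sin θ^2
    simp only [figEll]
    exact segA2 (Real.sin θ^2) hx1 hx2
  have S3 : (∫ θ in (π/4)..(π/3), figEll (3/4) θ) ≤ ((-13263/10000:ℝ)) * ((π/3) - (π/4)) + ((1263/625:ℝ)) * ((Real.sin (π/4) * Real.cos (π/4) - Real.sin (π/3) * Real.cos (π/3) + (π/3) - (π/4)) / 2) := by
    refine le_trans (intervalIntegral.integral_mono_on (by linarith) (hInt _ _) (hIntL _ _ _ _) ?_) (le_of_eq (lin_int (-13263/10000) (1263/625) (π/4) (π/3)))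
    intro θ hθ
    obtain ⟨ht1, ht2⟩ := hθ
    have hx1 : ((1/2:ℝ)) ≤ Real.sin θ^2 := by
      have := sinsq_mono (show (0:ℝ) ≤ (π/4) by linarith) ht1 (show θ ≤ π/2 by linarith)
      linarith [hq3]
    have hx2 : Real.sin θ^2 ≤ ((3/4:ℝ)) := by
      have := sinsq_mono (show (0:ℝ) ≤ θ by linarith) ht2 (show (π/3) ≤ π/2 by linarith)
      linarith [hq4]
    show figEll (3/4) θ ≤ (-13263/10000:ℝ) + (1263/625)*Real.sin θ^2
    simp only [figEll]
    exact segA3 (Real.sin θ^2) hx1 hx2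
  have S4 : (∫ θ in (π/3)..(5*π/12), figEll (3/4) θ) ≤ ((-20243/10000:ℝ)) * ((5*π/12) - (π/3)) + ((14757/5000:ℝ)) * ((Real.sin (π/3) * Real.cos (π/3) - Real.sin (5*π/12) * Real.cos (5*π/12) + (5*π/12) - (π/3)) / 2) := by
    refine le_trans (intervalIntegral.integral_mono_on (by linarith) (hInt _ _) (hIntL _ _ _ _) ?_) (le_of_eq (lin_int (-20243/10000) (14757/5000) (π/3) (5*π/12)))
    intro θ hθ
    obtain ⟨ht1, ht2⟩ := hθ
    have hx1 : ((3/4:ℝ)) ≤ Real.sin θ^2 := by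
      have := sinsq_mono (show (0:ℝ) ≤ (π/3) by linarith) ht1 (show θ ≤ π/2 by linarith)
      linarith [hq4]
    have hx2 : Real.sin θ^2 ≤ ((46651/50000:ℝ)) := by
      have := sinsq_mono (show (0:ℝ) ≤ θ by linarith) ht2 (show (5*π/12) ≤ π/2 by linarith)
      linarith [hq5]
    show figEll (3/4) θ ≤ (-20243/10000:ℝ) + (14757/5000)*Real.sin θ^2
    simp only [figEll]
    exact segA4 (Real.sin θ^2) hx1 hx2
  have S5 : (∫ θ in (5*π/12)..(π/2), figEll (3/4) θ) ≤ ((-30433/10000:ℝ)) * ((π/2) - (5*π/12)) + ((10109/2500:ℝ)) * ((Real.sin (5*π/12) * Real.cos (5*π/12) - Real.sin (π/2) * Real.cos (π/2) + (π/2) - (5*π/12)) / 2) := by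
    refine le_trans (intervalIntegral.integral_mono_on (by linarith) (hInt _ _) (hIntL _ _ _ _) ?_) (le_of_eq (lin_int (-30433/10000) (10109/2500) (5*π/12) (π/2)))
    intro θ hθ
    obtain ⟨ht1, ht2⟩ := hθ
    have hx1 : ((93301/100000:ℝ)) ≤ Real.sin θ^2 := by
      have := sinsq_mono (show (0:ℝ) ≤ (5*π/12) by linarith) ht1 (show θ ≤ π/2 by linarith)
      linarith [hq5]
    have hx2 : Real.sin θ^2 ≤ ((1:ℝ)) := Real.sin_sq_le_one θ
    show figEll (3/4) θ ≤ (-30433/10000:ℝ) + (10109/2500)*Real.sin θ^2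
    simp only [figEll]
    exact segA5 (Real.sin θ^2) hx1 hx2
  have hpigt : (3.1415:ℝ) < π := Real.pi_gt_d4
  have hpilt : π < (3.1416:ℝ) := Real.pi_lt_d4
  rw [hrepr]
  rw [E1, E2, E3, E4, E5]
  linarith [S0, S1, S2, S3, S4, S5, hv0, hv1, hv2, hv3, hv4, hv5, hv6, h3l, h3u, hpigt, hpilt]

set_option maxHeartbeats 2000000 in
lemma lemB : 0 < ellK (1707/2000) - 2 * ellE (1707/2000) := by
  have hpi := Real.pi_pos
  have hs3 : Real.sqrt 3 ^ 2 = 3 := Real.sq_sqrt (by norm_num)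
  have hs3n : (0:ℝ) ≤ Real.sqrt 3 := Real.sqrt_nonneg 3
  have h3l : (1.7320508:ℝ) < Real.sqrt 3 := by nlinarith
  have h3u : Real.sqrt 3 < 1.7320509 := by nlinarith
  have hv0 : Real.sin 0 * Real.cos 0 = 0 := by simp
  have hv6 : Real.sin (π/2) * Real.cos (π/2) = 0 := by simp
  have hv1 : Real.sin (π/12) * Real.cos (π/12) = 1/4 := by
    have h := Real.sin_two_mul (π/12)
    rw [show 2*(π/12) = π/6 by ring, Real.sin_pi_div_six] at h
    linarith
  have hv2 : Real.sin (π/6) * Real.cos (π/6) = Real.sqrt 3 / 4 := by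
    rw [Real.sin_pi_div_six, Real.cos_pi_div_six]; ring
  have hv3 : Real.sin (π/4) * Real.cos (π/4) = 1/2 := by
    rw [Real.sin_pi_div_four, Real.cos_pi_div_four, div_mul_div_comm,
      Real.mul_self_sqrt (by norm_num : (0:ℝ) ≤ 2)]
    norm_num
  have hv4 : Real.sin (π/3) * Real.cos (π/3) = Real.sqrt 3 / 4 := by
    rw [Real.sin_pi_div_three, Real.cos_pi_div_three]; ring
  have hv5 : Real.sin (5*π/12) * Real.cos (5*π/12) = 1/4 := by
    have h := Real.sin_two_mul (5*π/12)
    rw [show 2*(5*π/12) = π - π/6 by ring, Real.sin_pi_sub, Real.sin_pi_div_six] at h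
    linarith
  have hq1 : Real.sin (π/12)^2 = 1/2 - Real.sqrt 3 / 4 := by
    have h := Real.sin_sq_eq_half_sub (π/12)
    rw [show 2*(π/12) = π/6 by ring, Real.cos_pi_div_six] at h
    linarith
  have hq2 : Real.sin (π/6)^2 = 1/4 := by rw [Real.sin_pi_div_six]; norm_num
  have hq3 : Real.sin (π/4)^2 = 1/2 := by
    rw [Real.sin_pi_div_four, div_pow, Real.sq_sqrt (by norm_num : (0:ℝ) ≤ 2)]; norm_num
  have hq4 : Real.sin (π/3)^2 = 3/4 := by
    rw [Real.sin_pi_div_three, div_pow, hs3]; norm_num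
  have hq5 : Real.sin (5*π/12)^2 = 1/2 + Real.sqrt 3 / 4 := by
    have h := Real.sin_sq_eq_half_sub (5*π/12)
    rw [show 2*(5*π/12) = π - π/6 by ring, Real.cos_pi_sub, Real.cos_pi_div_six] at h
    linarith
  have hq6 : Real.sin (π/2)^2 = 1 := by rw [Real.sin_pi_div_two]; norm_num
  have hm0 : (0:ℝ) ≤ (1707/2000) := by norm_num
  have hm1 : (1707/2000:ℝ) < 1 := by norm_num
  have hc := figEll_cont hm0 hm1
  have hInt : ∀ a b : ℝ, IntervalIntegrable (figEll (1707/2000)) volume a b :=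
    fun a b => hc.intervalIntegrable a b
  have hIntL : ∀ (c d a b : ℝ), IntervalIntegrable (fun θ => c + d*Real.sin θ^2) volume a b :=
    fun c d a b => (continuous_const.add (continuous_const.mul (Real.continuous_sin.pow 2))).intervalIntegrable a b
  have hrepr := reprF hm0 hm1
  have E1 : (∫ θ in (0:ℝ)..(π/2), figEll (1707/2000) θ)
      = (∫ θ in (0:ℝ)..(π/12), figEll (1707/2000) θ) + ∫ θ in (π/12)..(π/2), figEll (1707/2000) θ :=
    (intervalIntegral.integral_add_adjacent_intervals (hInt _ _) (hInt _ _)).symm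
  have E2 : (∫ θ in (π/12)..(π/2), figEll (1707/2000) θ)
      = (∫ θ in (π/12)..(π/6), figEll (1707/2000) θ) + ∫ θ in (π/6)..(π/2), figEll (1707/2000) θ :=
    (intervalIntegral.integral_add_adjacent_intervals (hInt _ _) (hInt _ _)).symm
  have E3 : (∫ θ in (π/6)..(π/2), figEll (1707/2000) θ)
      = (∫ θ in (π/6)..(π/4), figEll (1707/2000) θ) + ∫ θ in (π/4)..(π/2), figEll (1707/2000) θ :=
    (intervalIntegral.integral_add_adjacent_intervals (hInt _ _) (hInt _ _)).symm
  have E4 : (∫ θ in (π/4)..(π/2), figEll (1707/2000) θ)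
      = (∫ θ in (π/4)..(π/3), figEll (1707/2000) θ) + ∫ θ in (π/3)..(π/2), figEll (1707/2000) θ :=
    (intervalIntegral.integral_add_adjacent_intervals (hInt _ _) (hInt _ _)).symm
  have E5 : (∫ θ in (π/3)..(π/2), figEll (1707/2000) θ)
      = (∫ θ in (π/3)..(5*π/12), figEll (1707/2000) θ) + ∫ θ in (5*π/12)..(π/2), figEll (1707/2000) θ :=
    (intervalIntegral.integral_add_adjacent_intervals (hInt _ _) (hInt _ _)).symm
  have S0 : ((-1251/1250:ℝ)) * ((π/12) - (0:ℝ)) + ((13117/10000:ℝ)) * ((Real.sin (0:ℝ) * Real.cos (0:ℝ) - Real.sin (π/12) * Real.cos (π/12) + (π/12) - (0:ℝ)) / 2) ≤ (∫ θ in (0:ℝ)..(π/12), figEll (1707/2000) θ) := by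
    refine le_trans (le_of_eq (lin_int (-1251/1250) (13117/10000) (0:ℝ) (π/12)).symm) (intervalIntegral.integral_mono_on (by linarith) (hIntL _ _ _ _) (hInt _ _) ?_)
    intro θ hθ
    obtain ⟨ht1, ht2⟩ := hθ
    have hx1 : ((0:ℝ)) ≤ Real.sin θ^2 := sq_nonneg _
    have hx2 : Real.sin θ^2 ≤ ((67/1000:ℝ)) := by
      have := sinsq_mono (show (0:ℝ) ≤ θ by linarith) ht2 (show (π/12) ≤ π/2 by linarith)
      linarith [hq1]
    show (-1251/1250:ℝ) + (13117/10000)*Real.sin θ^2 ≤ figEll (1707/2000) θ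
    simp only [figEll]
    exact segB0 (Real.sin θ^2) hx1 hx2
  have S1 : ((-5071/5000:ℝ)) * ((π/6) - (π/12)) + ((14479/10000:ℝ)) * ((Real.sin (π/12) * Real.cos (π/12) - Real.sin (π/6) * Real.cos (π/6) + (π/6) - (π/12)) / 2) ≤ (∫ θ in (π/12)..(π/6), figEll (1707/2000) θ) := by
    refine le_trans (le_of_eq (lin_int (-5071/5000) (14479/10000) (π/12) (π/6)).symm) (intervalIntegral.integral_mono_on (by linarith) (hIntL _ _ _ _) (hInt _ _) ?_)
    intro θ hθ
    obtain ⟨ht1, ht2⟩ := hθ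
    have hx1 : ((33/500:ℝ)) ≤ Real.sin θ^2 := by
      have := sinsq_mono (show (0:ℝ) ≤ (π/12) by linarith) ht1 (show θ ≤ π/2 by linarith)
      linarith [hq1]
    have hx2 : Real.sin θ^2 ≤ ((1/4:ℝ)) := by
      have := sinsq_mono (show (0:ℝ) ≤ θ by linarith) ht2 (show (π/6) ≤ π/2 by linarith)
      linarith [hq2]
    show (-5071/5000:ℝ) + (14479/10000)*Real.sin θ^2 ≤ figEll (1707/2000) θ
    simp only [figEll]
    exact segB1 (Real.sin θ^2) hx1 hx2
  have S2 : ((-11103/10000:ℝ)) * ((π/4) - (π/6)) + ((8981/5000:ℝ)) * ((Real.sin (π/6) * Real.cos (π/6) - Real.sin (π/4) * Real.cos (π/4) + (π/4) - (π/6)) / 2) ≤ (∫ θ in (π/6)..(π/4), figEll (1707/2000) θ) := by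
    refine le_trans (le_of_eq (lin_int (-11103/10000) (8981/5000) (π/6) (π/4)).symm) (intervalIntegral.integral_mono_on (by linarith) (hIntL _ _ _ _) (hInt _ _) ?_)
    intro θ hθ
    obtain ⟨ht1, ht2⟩ := hθ
    have hx1 : ((1/4:ℝ)) ≤ Real.sin θ^2 := by
      have := sinsq_mono (show (0:ℝ) ≤ (π/6) by linarith) ht1 (show θ ≤ π/2 by linarith)
      linarith [hq2]
    have hx2 : Real.sin θ^2 ≤ ((1/2:ℝ)) := by
      have := sinsq_mono (show (0:ℝ) ≤ θ by linarith) ht2 (show (π/4) ≤ π/2 by linarith)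
      linarith [hq3]
    show (-11103/10000:ℝ) + (8981/5000)*Real.sin θ^2 ≤ figEll (1707/2000) θ
    simp only [figEll]
    exact segB2 (Real.sin θ^2) hx1 hx2
  have S3 : ((-15203/10000:ℝ)) * ((π/3) - (π/4)) + ((12943/5000:ℝ)) * ((Real.sin (π/4) * Real.cos (π/4) - Real.sin (π/3) * Real.cos (π/3) + (π/3) - (π/4)) / 2) ≤ (∫ θ in (π/4)..(π/3), figEll (1707/2000) θ) := by
    refine le_trans (le_of_eq (lin_int (-15203/10000) (12943/5000) (π/4) (π/3)).symm) (intervalIntegral.integral_mono_on (by linarith) (hIntL _ _ _ _) (hInt _ _) ?_)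
    intro θ hθ
    obtain ⟨ht1, ht2⟩ := hθ
    have hx1 : ((1/2:ℝ)) ≤ Real.sin θ^2 := by
      have := sinsq_mono (show (0:ℝ) ≤ (π/4) by linarith) ht1 (show θ ≤ π/2 by linarith)
      linarith [hq3]
    have hx2 : Real.sin θ^2 ≤ ((3/4:ℝ)) := by
      have := sinsq_mono (show (0:ℝ) ≤ θ by linarith) ht2 (show (π/3) ≤ π/2 by linarith)
      linarith [hq4]
    show (-15203/10000:ℝ) + (12943/5000)*Real.sin θ^2 ≤ figEll (1707/2000) θ
    simp only [figEll]
    exact segB3 (Real.sin θ^2) hx1 hx2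
  have S4 : ((-29321/10000:ℝ)) * ((5*π/12) - (π/3)) + ((44611/10000:ℝ)) * ((Real.sin (π/3) * Real.cos (π/3) - Real.sin (5*π/12) * Real.cos (5*π/12) + (5*π/12) - (π/3)) / 2) ≤ (∫ θ in (π/3)..(5*π/12), figEll (1707/2000) θ) := by
    refine le_trans (le_of_eq (lin_int (-29321/10000) (44611/10000) (π/3) (5*π/12)).symm) (intervalIntegral.integral_mono_on (by linarith) (hIntL _ _ _ _) (hInt _ _) ?_)
    intro θ hθ
    obtain ⟨ht1, ht2⟩ := hθ
    have hx1 : ((3/4:ℝ)) ≤ Real.sin θ^2 := by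
      have := sinsq_mono (show (0:ℝ) ≤ (π/3) by linarith) ht1 (show θ ≤ π/2 by linarith)
      linarith [hq4]
    have hx2 : Real.sin θ^2 ≤ ((46651/50000:ℝ)) := by
      have := sinsq_mono (show (0:ℝ) ≤ θ by linarith) ht2 (show (5*π/12) ≤ π/2 by linarith)
      linarith [hq5]
    show (-29321/10000:ℝ) + (44611/10000)*Real.sin θ^2 ≤ figEll (1707/2000) θ
    simp only [figEll]
    exact segB4 (Real.sin θ^2) hx1 hx2
  have S5 : ((-12097/2000:ℝ)) * ((π/2) - (5*π/12)) + ((39323/5000:ℝ)) * ((Real.sin (5*π/12) * Real.cos (5*π/12) - Real.sin (π/2) * Real.cos (π/2) + (π/2) - (5*π/12)) / 2) ≤ (∫ θ in (5*π/12)..(π/2), figEll (1707/2000) θ) := by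
    refine le_trans (le_of_eq (lin_int (-12097/2000) (39323/5000) (5*π/12) (π/2)).symm) (intervalIntegral.integral_mono_on (by linarith) (hIntL _ _ _ _) (hInt _ _) ?_)
    intro θ hθ
    obtain ⟨ht1, ht2⟩ := hθ
    have hx1 : ((93301/100000:ℝ)) ≤ Real.sin θ^2 := by
      have := sinsq_mono (show (0:ℝ) ≤ (5*π/12) by linarith) ht1 (show θ ≤ π/2 by linarith)
      linarith [hq5]
    have hx2 : Real.sin θ^2 ≤ ((1:ℝ)) := Real.sin_sq_le_one θ
    show (-12097/2000:ℝ) + (39323/5000)*Real.sin θ^2 ≤ figEll (1707/2000) θ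
    simp only [figEll]
    exact segB5 (Real.sin θ^2) hx1 hx2
  have hpigt : (3.1415:ℝ) < π := Real.pi_gt_d4
  have hpilt : π < (3.1416:ℝ) := Real.pi_lt_d4
  rw [hrepr]
  rw [E1, E2, E3, E4, E5]
  linarith [S0, S1, S2, S3, S4, S5, hv0, hv1, hv2, hv3, hv4, hv5, hv6, h3l, h3u, hpigt, hpilt]

/-- Bounds on the figure-eight angle: `π/4 < φ* < π/3`; equivalently
`1/2 < 2m* - 1 < 1/√2`. -/
theorem angle_bounds (m : ℝ) (hm : m ∈ Set.Ioo (0:ℝ) 1) (hKE : ellK m = 2 * ellE m)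
    (φ : ℝ) (hφ : φ ∈ Set.Ioo (0:ℝ) (Real.pi / 2)) (hcos : Real.cos φ = 2 * m - 1) :
    (Real.pi / 4 < φ ∧ φ < Real.pi / 3) ∧
    (1 / 2 < 2 * m - 1 ∧ 2 * m - 1 < 1 / Real.sqrt 2) := by
  have hpi := Real.pi_pos
  obtain ⟨hm0, hm1⟩ := hm
  obtain ⟨hφ0, hφ2⟩ := hφ
  have hF0 : ellK m - 2 * ellE m = 0 := by rw [hKE]; ring
  have hlow : 3/4 < m := by
    by_contra h
    push_neg at h
    have := Fdiff_mono (le_of_lt hm0) h (by norm_num : (3:ℝ)/4 < 1)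
    have hA := lemA
    linarith
  have hup : m < 1707/2000 := by
    by_contra h
    push_neg at h
    have := Fdiff_mono (by norm_num : (0:ℝ) ≤ 1707/2000) h hm1
    have hB := lemB
    linarith
  have hs2 : Real.sqrt 2 ^ 2 = 2 := Real.sq_sqrt (by norm_num)
  have hs2n : (0:ℝ) ≤ Real.sqrt 2 := Real.sqrt_nonneg 2
  have hs2p : (0:ℝ) < Real.sqrt 2 := by nlinarith
  have hc2 : 2 * m - 1 < 1 / Real.sqrt 2 := by
    rw [lt_div_iff₀ hs2p]
    nlinarith
  have hc1 : 1/2 < 2 * m - 1 := by linarith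
  refine ⟨⟨?_, ?_⟩, hc1, hc2⟩
  · -- π/4 < φ
    by_contra h
    push_neg at h
    have hcc : Real.cos φ ≥ Real.cos (π/4) :=
      Real.cos_le_cos_of_nonneg_of_le_pi (le_of_lt hφ0) (by linarith) h
    rw [Real.cos_pi_div_four] at hcc
    have : Real.sqrt 2 / 2 ≤ 2*m - 1 := by linarith [hcos ▸ hcc]
    nlinarith
  · -- φ < π/3
    by_contra h
    push_neg at h
    have hcc : Real.cos (π/3) ≥ Real.cos φ :=
      Real.cos_le_cos_of_nonneg_of_le_pi (by linarith) (by linarith) h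
    rw [Real.cos_pi_div_three] at hcc
    rw [hcos] at hcc
    linarith
end
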